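/- arXiv:1006.0311 — 6 statements merged into one kernel-verified Lean document; each statement's English description precedes it below -/
import Mathlib

section
/- (Generating tree for permutations avoiding 12⋯m(m+1).) Let m ≥ 2, n ≥ 0, and let τ ∈ S_n^{(m)}; write a_1 = 1 and a_j = a_j(τ) for 2 ≤ j ≤ m. For 1 ≤ α ≤ n+1, let ins_α(τ) be the permutation of {1,…,n+1} defined by ins_α(τ)(α) = n+1, ins_α(τ)(i) = τ(i) for i < α, and ins_α(τ)(i) = τ(i−1) for i > α. Then: (i) ins_α(τ) ∈ S_{n+1}^{(m)} if and only if α ≤ a_m; (ii) a_i(ins_1(τ)) = a_i(τ) + 1 for all 2 ≤ i ≤ m; (iii) if 2 ≤ j ≤ m and a_{j−1} < α ≤ a_j, then a_i(ins_α(τ)) = a_i(τ) for 2 ≤ i < j, a_j(ins_α(τ)) = α, and a_i(ins_α(τ)) = a_i(τ) + 1 for j < i ≤ m. -/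
open scoped Classical
noncomputable section

/-- `f` has an ascending subsequence of length `k`. -/
def HasAscSeq {n : ℕ} (f : Fin n → Fin n) (k : ℕ) : Prop :=
  ∃ s : Fin k → Fin n, StrictMono s ∧ StrictMono fun a => f (s a)

/-- The statistic `a_j`: the (1-based) position of the end of the leftmost
ascending subsequence of length `j`, or `n+1` if there is none.
(`a_j = min{ i_j : i_1 < ⋯ < i_j, f(i_1) < ⋯ < f(i_j) }`, positions 1-based.) -/
def aStat {n : ℕ} (f : Fin n → Fin n) (j : ℕ) : ℕ :=
  sInf ({n + 1} ∪ { p : ℕ | ∃ s : Fin j → Fin n,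
    StrictMono s ∧ StrictMono (fun a => f (s a)) ∧ ∀ a, (s a : ℕ) + 1 ≤ p })

/-- Insertion of the new largest value `n+1` at (1-based) position `α` in the
permutation `τ` of `{1,…,n}`: in 0-based terms, position `α−1` gets value `n`,
positions before it keep their values, positions after it get the shifted
values of `τ`.  (For `1 ≤ α ≤ n+1` all the `dite` side conditions hold.) -/
def insFun (n : ℕ) (τ : Equiv.Perm (Fin n)) (α : ℕ) : Fin (n + 1) → Fin (n + 1) :=
  fun i =>
    if (i : ℕ) + 1 = α then Fin.last n
    else if (i : ℕ) + 1 < α then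
      if h : (i : ℕ) < n then Fin.castSucc (τ ⟨(i : ℕ), h⟩) else i
    else
      if h : (i : ℕ) - 1 < n then Fin.castSucc (τ ⟨(i : ℕ) - 1, h⟩) else i

namespace GenTree

def AscEnd {n : ℕ} (f : Fin n → Fin n) (k p : ℕ) : Prop :=
  ∃ s : Fin k → Fin n, StrictMono s ∧ StrictMono (fun a => f (s a)) ∧ ∀ a, (s a : ℕ) + 1 ≤ p

variable {n : ℕ} {f : Fin n → Fin n} {j k p q : ℕ}

lemma aStat_def (f : Fin n → Fin n) (j : ℕ) :
    aStat f j = sInf ({n + 1} ∪ {p | AscEnd f j p}) := rfl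

lemma set_nonempty (f : Fin n → Fin n) (j : ℕ) :
    (({n + 1} ∪ {p | AscEnd f j p}) : Set ℕ).Nonempty :=
  ⟨n + 1, Or.inl rfl⟩

lemma aStat_le_top : aStat f j ≤ n + 1 := Nat.sInf_le (Or.inl rfl)

lemma aStat_le_of_ascEnd (h : AscEnd f j p) : aStat f j ≤ p := Nat.sInf_le (Or.inr h)

lemma ascEnd_self (h : aStat f j ≤ n) : AscEnd f j (aStat f j) := by
  have := Nat.sInf_mem (set_nonempty f j)
  rcases this with h1 | h2
  · simp only [Set.mem_singleton_iff, aStat_def] at h1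
    rw [aStat_def] at h; omega
  · exact h2

lemma le_aStat (hc : q ≤ n + 1) (h : ∀ p, AscEnd f j p → q ≤ p) : q ≤ aStat f j := by
  refine le_csInf (set_nonempty f j) ?_
  rintro b (hb | hb)
  · simp only [Set.mem_singleton_iff] at hb; omega
  · exact h b hb

lemma ascEnd_mono_len (h : AscEnd f k p) (hjk : j ≤ k) : AscEnd f j p := by
  obtain ⟨s, hs, hv, hp⟩ := h
  exact ⟨s ∘ Fin.castLE hjk, hs.comp (Fin.strictMono_castLE hjk),
    hv.comp (Fin.strictMono_castLE hjk), fun a => hp _⟩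

lemma ascEnd_mono_p (h : AscEnd f j p) (hpq : p ≤ q) : AscEnd f j q := by
  obtain ⟨s, hs, hv, hp⟩ := h
  exact ⟨s, hs, hv, fun a => le_trans (hp a) hpq⟩

lemma aStat_mono (hjk : j ≤ k) : aStat f j ≤ aStat f k := by
  rcases le_or_gt (aStat f k) n with h | h
  · exact aStat_le_of_ascEnd (ascEnd_mono_len (ascEnd_self h) hjk)
  · have := @aStat_le_top n f j
    have := @aStat_le_top n f k
    omega

lemma one_le_aStat (hj : 1 ≤ j) : 1 ≤ aStat f j := by
  refine le_aStat (by omega) ?_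
  rintro p ⟨s, hs, hv, hp⟩
  have := hp ⟨0, by omega⟩
  omega

lemma hasAscSeq_iff_ascEnd : HasAscSeq f k ↔ AscEnd f k (n + 1) := by
  constructor
  · rintro ⟨s, hs, hv⟩
    exact ⟨s, hs, hv, fun a => by have := (s a).isLt; omega⟩
  · rintro ⟨s, hs, hv, _⟩; exact ⟨s, hs, hv⟩

lemma hasAscSeq_iff_aStat (hk : 1 ≤ k) : HasAscSeq f k ↔ aStat f k ≤ n := by
  constructor
  · rintro ⟨s, hs, hv⟩
    set l : Fin k := ⟨k - 1, by omega⟩ with hl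
    have hb : ∀ a, (s a : ℕ) + 1 ≤ (s l : ℕ) + 1 := by
      intro a
      have : a ≤ l := by
        rw [Fin.le_def]; have := a.isLt; simp [hl]; omega
      have := hs.monotone this
      omega
    have h1 : aStat f k ≤ (s l : ℕ) + 1 := aStat_le_of_ascEnd ⟨s, hs, hv, hb⟩
    have := (s l).isLt
    omega
  · intro h
    obtain ⟨s, hs, hv, _⟩ := ascEnd_self h
    exact ⟨s, hs, hv⟩


section Ins
variable {n : ℕ} (τ : Equiv.Perm (Fin n)) (α : ℕ)

/-- old 0-based position `q` goes to new position `q` if `q+1 < α`, else `q+1`. -/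
def embIdx (α : ℕ) {n : ℕ} (q : Fin n) : Fin (n + 1) :=
  if (q : ℕ) + 1 < α then q.castSucc else q.succ

lemma embIdx_val_of_lt {q : Fin n} (h : (q : ℕ) + 1 < α) : (embIdx α q : ℕ) = q := by
  simp [embIdx, h]

lemma embIdx_val_of_ge {q : Fin n} (h : ¬ (q : ℕ) + 1 < α) : (embIdx α q : ℕ) = q + 1 := by
  simp [embIdx, h]

lemma embIdx_le (q : Fin n) : (q : ℕ) ≤ embIdx α q ∧ (embIdx α q : ℕ) ≤ q + 1 := by
  unfold embIdx; split <;> simp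

lemma embIdx_strictMono : StrictMono (embIdx α (n := n)) := by
  intro q q' h
  rw [Fin.lt_def] at h ⊢
  unfold embIdx
  split <;> split <;> simp <;> omega

lemma insFun_emb (q : Fin n) : insFun n τ α (embIdx α q) = (τ q).castSucc := by
  unfold insFun embIdx
  by_cases h : (q : ℕ) + 1 < α
  · simp only [h, if_true]
    rw [if_neg (by simp; omega), if_pos (by simp; omega), dif_pos (by simp [q.isLt])]
    simp
  · simp only [h, if_false]
    rw [if_neg (by simp; omega), if_neg (by simp; omega), dif_pos (by simp [q.isLt])]
    simp

lemma insFun_newpos (hα1 : 1 ≤ α) (i : Fin (n + 1)) (h : (i : ℕ) + 1 = α) :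
    insFun n τ α i = Fin.last n := by
  unfold insFun; rw [if_pos h]

lemma exists_emb (hα1 : 1 ≤ α) (hα2 : α ≤ n + 1) (i : Fin (n + 1)) (h : (i : ℕ) + 1 ≠ α) :
    ∃ q : Fin n, i = embIdx α q := by
  have hi := i.isLt
  by_cases h2 : (i : ℕ) + 1 < α
  · refine ⟨⟨(i : ℕ), by omega⟩, ?_⟩
    apply Fin.ext
    rw [embIdx_val_of_lt α (by simpa using h2)]
  · refine ⟨⟨(i : ℕ) - 1, by omega⟩, ?_⟩
    apply Fin.ext
    rw [embIdx_val_of_ge α (by simp; omega)]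
    simp; omega

end Ins


section Transport
variable {n : ℕ} {τ : Equiv.Perm (Fin n)} {α k p : ℕ}

lemma insFun_lt (i : Fin (n + 1)) (h1 : (i : ℕ) + 1 < α) (h2 : (i : ℕ) < n) :
    insFun n τ α i = (τ ⟨(i : ℕ), h2⟩).castSucc := by
  unfold insFun; rw [if_neg (by omega), if_pos h1, dif_pos h2]

lemma insFun_gt (i : Fin (n + 1)) (h1 : α < (i : ℕ) + 1) (h2 : (i : ℕ) - 1 < n) :
    insFun n τ α i = (τ ⟨(i : ℕ) - 1, h2⟩).castSucc := by
  unfold insFun; rw [if_neg (by omega), if_neg (by omega), dif_pos h2]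

lemma ascEnd_insert_of (h : AscEnd (⇑τ) k p) : AscEnd (insFun n τ α) k (p + 1) := by
  obtain ⟨s, hs, hv, hp⟩ := h
  refine ⟨fun a => embIdx α (s a), (embIdx_strictMono α).comp hs, ?_, ?_⟩
  · have he : (fun a => insFun n τ α (embIdx α (s a))) = fun a => ((τ (s a)).castSucc) := by
      funext a; exact insFun_emb τ α (s a)
    simp only [he]
    exact fun a b hab => by
      rw [Fin.castSucc_lt_castSucc_iff]; exact hv hab
  · intro a
    show (embIdx α (s a) : ℕ) + 1 ≤ p + 1
    have h1 := (embIdx_le α (s a)).2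
    have h2 := hp a
    omega

lemma ascEnd_insert_of_lt (hpα : p < α) (h : AscEnd (⇑τ) k p) :
    AscEnd (insFun n τ α) k p := by
  obtain ⟨s, hs, hv, hp⟩ := h
  refine ⟨fun a => embIdx α (s a), (embIdx_strictMono α).comp hs, ?_, ?_⟩
  · have he : (fun a => insFun n τ α (embIdx α (s a))) = fun a => ((τ (s a)).castSucc) := by
      funext a; exact insFun_emb τ α (s a)
    simp only [he]
    exact fun a b hab => by
      rw [Fin.castSucc_lt_castSucc_iff]; exact hv hab
  · intro a
    show (embIdx α (s a) : ℕ) + 1 ≤ p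
    rw [embIdx_val_of_lt α (by have := hp a; omega)]
    exact hp a

lemma ascEnd_insert_snoc (hα1 : 1 ≤ α) (hα2 : α ≤ n + 1)
    (h : AscEnd (⇑τ) k (α - 1)) : AscEnd (insFun n τ α) (k + 1) α := by
  obtain ⟨s, hs, hv, hp⟩ := h
  have hβ : α - 1 < n + 1 := by omega
  refine ⟨fun a => if h : (a : ℕ) < k then embIdx α (s ⟨(a : ℕ), h⟩) else ⟨α - 1, hβ⟩,
    ?_, ?_, ?_⟩
  · intro a b hab
    rw [Fin.lt_def] at hab
    by_cases hb : (b : ℕ) < k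
    · have ha : (a : ℕ) < k := by omega
      simp only [dif_pos ha, dif_pos hb]
      exact embIdx_strictMono α (hs (show (⟨(a : ℕ), ha⟩ : Fin k) < ⟨(b : ℕ), hb⟩ from hab))
    · by_cases ha : (a : ℕ) < k
      · simp only [dif_pos ha, dif_neg hb, Fin.lt_def]
        rw [embIdx_val_of_lt α (by have := hp ⟨(a : ℕ), ha⟩; omega)]
        have := hp ⟨(a : ℕ), ha⟩
        omega
      · have := a.isLt; have := b.isLt; omega
  · intro a b hab
    rw [Fin.lt_def] at hab
    by_cases hb : (b : ℕ) < k
    · have ha : (a : ℕ) < k := by omega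
      simp only [dif_pos ha, dif_pos hb, insFun_emb, Fin.castSucc_lt_castSucc_iff]
      exact hv (show (⟨(a : ℕ), ha⟩ : Fin k) < ⟨(b : ℕ), hb⟩ from hab)
    · by_cases ha : (a : ℕ) < k
      · simp only [dif_pos ha, dif_neg hb, insFun_emb]
        rw [insFun_newpos τ α hα1 _ (by simp; omega)]
        exact Fin.castSucc_lt_last _
      · have := a.isLt; have := b.isLt; omega
  · intro a
    by_cases ha : (a : ℕ) < k
    · simp only [dif_pos ha]
      rw [embIdx_val_of_lt α (by have := hp ⟨(a : ℕ), ha⟩; omega)]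
      have := hp ⟨(a : ℕ), ha⟩
      omega
    · simp only [dif_neg ha]
      show (α - 1) + 1 ≤ α
      omega

lemma ascEnd_of_insert_lt (hα2 : α ≤ n + 1) (hpα : p < α)
    (h : AscEnd (insFun n τ α) k p) : AscEnd (⇑τ) k p := by
  obtain ⟨s, hs, hv, hp⟩ := h
  have hlt : ∀ a, (s a : ℕ) < n := fun a => by have := hp a; omega
  have hval : ∀ a, insFun n τ α (s a) = (τ ⟨(s a : ℕ), hlt a⟩).castSucc := fun a =>
    insFun_lt (s a) (by have := hp a; omega) (hlt a)
  refine ⟨fun a => ⟨(s a : ℕ), hlt a⟩, ?_, ?_, fun a => hp a⟩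
  · intro a b hab
    exact hs hab
  · intro a b hab
    have := hv hab
    simp only [hval] at this
    rwa [Fin.castSucc_lt_castSucc_iff] at this

lemma restrict_aux (hk : 1 ≤ k) (hα1 : 2 ≤ α) (hα2 : α ≤ n + 1)
    (s : Fin k → Fin (n + 1)) (hs : StrictMono s)
    (hv : StrictMono fun a => insFun n τ α (s a))
    (hall : ∀ a : Fin k, (a : ℕ) < k - 1 → (s a : ℕ) < α - 1) :
    AscEnd (⇑τ) (k - 1) (α - 1) := by
  have hidx : ∀ a : Fin (k - 1), ((Fin.castLE (Nat.sub_le k 1) a : Fin k) : ℕ) < k - 1 :=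
    fun a => a.isLt
  have hlt : ∀ a : Fin (k - 1), (s (Fin.castLE (Nat.sub_le k 1) a) : ℕ) < n := by
    intro a
    have := hall _ (hidx a)
    omega
  have hval : ∀ a : Fin (k - 1), insFun n τ α (s (Fin.castLE (Nat.sub_le k 1) a)) =
      (τ ⟨_, hlt a⟩).castSucc := by
    intro a
    exact insFun_lt _ (by have := hall _ (hidx a); omega) (hlt a)
  refine ⟨fun a => ⟨(s (Fin.castLE (Nat.sub_le k 1) a) : ℕ), hlt a⟩, ?_, ?_, ?_⟩
  · intro a b hab
    exact hs (Fin.strictMono_castLE _ hab)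
  · intro a b hab
    have := hv (Fin.strictMono_castLE (Nat.sub_le k 1) hab)
    simp only [hval] at this
    rwa [Fin.castSucc_lt_castSucc_iff] at this
  · intro a
    have := hall _ (hidx a)
    simp only []
    omega

lemma ascEnd_of_insert (hα1 : 1 ≤ α) (hα2 : α ≤ n + 1) (hk : 1 ≤ k)
    (h : AscEnd (insFun n τ α) k p) :
    AscEnd (⇑τ) k (p - 1) ∨ AscEnd (⇑τ) (k - 1) (α - 1) := by
  rcases Nat.lt_or_ge k 2 with hk2 | hk2
  · right
    have hk1 : k - 1 = 0 := by omega
    rw [hk1]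
    exact ⟨Fin.elim0, fun a b h => a.elim0, fun a b h => a.elim0, fun a => a.elim0⟩
  obtain ⟨s, hs, hv, hp⟩ := h
  set l : Fin k := ⟨k - 1, by omega⟩ with hl
  have hle_l : ∀ a : Fin k, a ≤ l := by
    intro a
    rw [Fin.le_def]
    have := a.isLt
    simp [hl]; omega
  by_cases hB : ∃ a₀ : Fin k, (s a₀ : ℕ) = α - 1
  · right
    obtain ⟨a₀, ha₀⟩ := hB
    have hmax : ∀ b, b ≤ a₀ := by
      intro b
      by_contra hb
      push_neg at hb
      have h1 : insFun n τ α (s a₀) = Fin.last n :=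
        insFun_newpos τ α hα1 _ (by omega)
      have h2 : insFun n τ α (s a₀) < insFun n τ α (s b) := hv hb
      rw [h1] at h2
      exact absurd h2 (not_lt.mpr (Fin.le_last _))
    have hα1' : 2 ≤ α := by
      by_contra hc
      have hb0 : (⟨0, by omega⟩ : Fin k) < a₀ := by
        rw [Fin.lt_def]
        have h5 : k - 1 ≤ (a₀ : ℕ) := Fin.le_def.mp (hmax l)
        simp
        omega
      have h6 := hs hb0
      rw [Fin.lt_def, ha₀] at h6
      omega
    refine restrict_aux hk hα1' hα2 s hs hv ?_
    intro a ha
    have haa : a < a₀ := by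
      rcases lt_or_eq_of_le (hmax a) with h' | h'
      · exact h'
      · exfalso
        have h5 : k - 1 ≤ (a₀ : ℕ) := Fin.le_def.mp (hmax l)
        rw [h'] at ha
        omega
    have := hs haa
    rw [Fin.lt_def, ha₀] at this
    omega
  · push_neg at hB
    by_cases hC : ∀ a : Fin k, (s a : ℕ) < α - 1
    · right
      have hα1' : 2 ≤ α := by
        have := hC ⟨0, by omega⟩
        omega
      exact restrict_aux hk hα1' hα2 s hs hv (fun a _ => hC a)
    · left
      push_neg at hC
      obtain ⟨a₁, ha₁⟩ := hC
      have hsl : α - 1 < (s l : ℕ) := by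
        have h1 := hs.monotone (hle_l a₁)
        rw [Fin.le_def] at h1
        have h2 := hB l
        have h3 := hB a₁
        omega
      have hq : ∀ a : Fin k, (if (s a : ℕ) < α - 1 then (s a : ℕ) else (s a : ℕ) - 1) < n := by
        intro a
        have h1 := (s a).isLt
        have h2 := hB a
        split <;> omega
      refine ⟨fun a => ⟨_, hq a⟩, ?_, ?_, ?_⟩
      · intro a b hab
        have h1 := hs hab
        rw [Fin.lt_def] at h1 ⊢
        have h2 := hB a
        have h3 := hB b
        simp only []
        split <;> split <;> omega
      · intro a b hab
        have h1 := hv hab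
        have hval : ∀ c : Fin k, insFun n τ α (s c) = (τ ⟨_, hq c⟩).castSucc := by
          intro c
          by_cases hc : (s c : ℕ) < α - 1
          · rw [insFun_lt (s c) (by omega) (by have := hq c; simp [hc] at this ⊢; omega)]
            congr 1
            apply congrArg
            apply Fin.ext
            simp [hc]
          · have hc' : α < (s c : ℕ) + 1 := by have := hB c; omega
            rw [insFun_gt (s c) hc' (by have := hq c; simp [hc] at this ⊢; omega)]
            congr 1
            apply congrArg
            apply Fin.ext
            simp [hc]
        simp only [hval] at h1
        rwa [Fin.castSucc_lt_castSucc_iff] at h1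
      · intro a
        have h2 := hB a
        have h3 : (s a : ℕ) ≤ (s l : ℕ) := by
          have := hs.monotone (hle_l a)
          rwa [Fin.le_def] at this
        have h4 := hp l
        simp only []
        split <;> omega

end Transport


section Main
variable {n : ℕ} {τ : Equiv.Perm (Fin n)} {α k : ℕ}

lemma L1 (hα2 : α ≤ n + 1) (h : aStat (⇑τ) k < α) :
    aStat (insFun n τ α) k = aStat (⇑τ) k := by
  have hattain : AscEnd (⇑τ) k (aStat (⇑τ) k) := ascEnd_self (by omega)
  apply le_antisymm
  · exact aStat_le_of_ascEnd (ascEnd_insert_of_lt h hattain)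
  · refine le_aStat (by have := @aStat_le_top n (⇑τ) k; omega) ?_
    intro p hp
    rcases le_or_gt α p with hcase | hcase
    · omega
    · exact aStat_le_of_ascEnd (ascEnd_of_insert_lt hα2 hcase hp)

lemma L2 (hα1 : 1 ≤ α) (hα2 : α ≤ n + 1) (hk : 1 ≤ k)
    (h1 : aStat (⇑τ) (k - 1) < α) (h2 : α ≤ aStat (⇑τ) k) :
    aStat (insFun n τ α) k = α := by
  apply le_antisymm
  · have ha : AscEnd (⇑τ) (k - 1) (α - 1) := by
      have hle : aStat (⇑τ) (k - 1) ≤ n := by omega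
      exact ascEnd_mono_p (ascEnd_self hle) (by omega)
    have hsn := ascEnd_insert_snoc hα1 hα2 ha
    rw [Nat.sub_add_cancel hk] at hsn
    exact aStat_le_of_ascEnd hsn
  · refine le_aStat (by omega) ?_
    intro p hp
    by_contra hc
    push_neg at hc
    have := aStat_le_of_ascEnd (ascEnd_of_insert_lt hα2 hc hp)
    omega

lemma L3 (hα1 : 1 ≤ α) (hα2 : α ≤ n + 1) (hk : 1 ≤ k)
    (h1 : α ≤ aStat (⇑τ) (k - 1)) :
    aStat (insFun n τ α) k = aStat (⇑τ) k + 1 := by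
  apply le_antisymm
  · rcases le_or_gt (aStat (⇑τ) k) n with hle | hgt
    · exact aStat_le_of_ascEnd (ascEnd_insert_of (ascEnd_self hle))
    · have h2 : aStat (⇑τ) k = n + 1 := le_antisymm aStat_le_top hgt
      rw [h2]
      exact aStat_le_top
  · refine le_aStat (by have := @aStat_le_top n (⇑τ) k; omega) ?_
    intro p hp
    have hp1 : 1 ≤ p := by
      obtain ⟨t, _, _, hb⟩ := hp
      have := hb ⟨0, by omega⟩
      omega
    rcases ascEnd_of_insert hα1 hα2 hk hp with hA | hB
    · have := aStat_le_of_ascEnd hA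
      omega
    · have h3 := aStat_le_of_ascEnd hB
      omega

lemma insFun_bijective (hα1 : 1 ≤ α) (hα2 : α ≤ n + 1) :
    Function.Bijective (insFun n τ α) := by
  rw [← Finite.injective_iff_bijective]
  intro i i' he
  by_cases h : (i : ℕ) + 1 = α <;> by_cases h' : (i' : ℕ) + 1 = α
  · apply Fin.ext; omega
  · exfalso
    obtain ⟨q, hq⟩ := exists_emb α hα1 hα2 i' h'
    rw [insFun_newpos τ α hα1 i h, hq, insFun_emb] at he
    exact absurd he.symm (Fin.castSucc_lt_last _).ne
  · exfalso
    obtain ⟨q, hq⟩ := exists_emb α hα1 hα2 i h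
    rw [insFun_newpos τ α hα1 i' h', hq, insFun_emb] at he
    exact absurd he (Fin.castSucc_lt_last _).ne
  · obtain ⟨q, hq⟩ := exists_emb α hα1 hα2 i h
    obtain ⟨q', hq'⟩ := exists_emb α hα1 hα2 i' h'
    rw [hq, hq', insFun_emb, insFun_emb] at he
    have : q = q' := τ.injective (Fin.castSucc_injective n he)
    rw [hq, hq', this]

end Main
end GenTree

/-- The generating tree for permutations avoiding `12⋯m(m+1)`:
(i) the insertion is admissible iff `α ≤ a_m(τ)`;
(ii) inserting in first position increases every label by one;
(iii) inserting at position `α` with `a_{j−1}(τ) < α ≤ a_j(τ)` keeps `a_i` for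
`i < j`, sets `a_j = α`, and increases `a_i` by one for `i > j`.
(Note `a_1(τ) = aStat τ 1 = 1` always, handling the convention `a_1 = 1`.) -/
theorem generating_tree_perm (m n : ℕ) (hm : 2 ≤ m) (τ : Equiv.Perm (Fin n))
    (hτ : ¬ HasAscSeq (⇑τ) (m + 1)) (α : ℕ) (hα1 : 1 ≤ α) (hα2 : α ≤ n + 1) :
    Function.Bijective (insFun n τ α) ∧
    ((¬ HasAscSeq (insFun n τ α) (m + 1)) ↔ α ≤ aStat (⇑τ) m) ∧
    (α = 1 → ∀ i, 2 ≤ i → i ≤ m →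
      aStat (insFun n τ 1) i = aStat (⇑τ) i + 1) ∧
    (∀ j, 2 ≤ j → j ≤ m → aStat (⇑τ) (j - 1) < α → α ≤ aStat (⇑τ) j →
      ((∀ i, 2 ≤ i → i < j → aStat (insFun n τ α) i = aStat (⇑τ) i) ∧
        aStat (insFun n τ α) j = α ∧
        (∀ i, j < i → i ≤ m → aStat (insFun n τ α) i = aStat (⇑τ) i + 1))) := by
  have hτa : aStat (⇑τ) (m + 1) = n + 1 := by
    have h1 := @GenTree.aStat_le_top n (⇑τ) (m + 1)
    rcases le_or_gt (aStat (⇑τ) (m + 1)) n with h2 | h2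
    · exact absurd ((GenTree.hasAscSeq_iff_aStat (by omega)).mpr h2) hτ
    · omega
  refine ⟨GenTree.insFun_bijective hα1 hα2, ?_, ?_, ?_⟩
  · rw [GenTree.hasAscSeq_iff_aStat (by omega)]
    constructor
    · intro h
      by_contra hc
      push_neg at hc
      have := GenTree.L2 hα1 hα2 (by omega : 1 ≤ m + 1)
        (by simpa using hc) (by rw [hτa]; omega)
      omega
    · intro h
      have := GenTree.L3 hα1 hα2 (by omega : 1 ≤ m + 1) (by simpa using h)
      omega
  · rintro rfl i h2 hi
    have := GenTree.one_le_aStat (f := ⇑τ) (j := i - 1) (by omega)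
    exact GenTree.L3 le_rfl (by omega) (by omega) this
  · intro j hj2 hjm hja hjb
    refine ⟨?_, ?_, ?_⟩
    · intro i h2 hij
      have hmono : aStat (⇑τ) i ≤ aStat (⇑τ) (j - 1) := GenTree.aStat_mono (by omega)
      exact GenTree.L1 hα2 (by omega)
    · exact GenTree.L2 hα1 hα2 (by omega) hja hjb
    · intro i hji him
      have hmono : aStat (⇑τ) j ≤ aStat (⇑τ) (i - 1) := GenTree.aStat_mono (by omega)
      exact GenTree.L3 hα1 hα2 (by omega) (by omega)
end
end

section
/- (Functional equation for permutations avoiding 12⋯m(m+1).) Let m ≥ 2. For n ≥ 0, define the polynomial F_n(v_1,…,v_m) = ∑_{τ ∈ S_n^{(m)}} v_1^{a_2(τ)−1} · v_2^{a_3(τ)−a_2(τ)} ⋯ v_{m−1}^{a_m(τ)−a_{m−1}(τ)} · v_m^{n+1−a_m(τ)} with integer coefficients. Then F_0 = 1, and for every n ≥ 0 the following identity holds in the field ℚ(v_1,…,v_m) of rational functions: F_{n+1} = v_1·F_n + ∑_{j=2}^{m} v_{j−1} v_j · ( F_n − F_n|_{v_{j−1}←v_j} ) / ( v_{j−1} −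 v_j ), where F_n|_{v_{j−1}←v_j} denotes the polynomial obtained from F_n by substituting v_j for the variable v_{j−1}. -/
open scoped Classical

noncomputable section

namespace AscAux

variable {n : ℕ}

lemma aStat_le_succ (f : Fin n → Fin n) (j : ℕ) : aStat f j ≤ n + 1 :=
  Nat.sInf_le (Or.inl rfl)

lemma aStat_le_of_seq {f : Fin n → Fin n} {j q : ℕ} (s : Fin j → Fin n)
    (h1 : StrictMono s) (h2 : StrictMono (fun a => f (s a)))
    (h3 : ∀ a, (s a : ℕ) + 1 ≤ q) : aStat f j ≤ q :=
  Nat.sInf_le (Or.inr ⟨s, h1, h2, h3⟩)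

lemma aStat_exists {f : Fin n → Fin n} {j : ℕ} (h : aStat f j ≠ n + 1) :
    ∃ s : Fin j → Fin n, StrictMono s ∧ StrictMono (fun a => f (s a)) ∧
      ∀ a, (s a : ℕ) + 1 ≤ aStat f j := by
  have hne : ({n + 1} ∪ { p : ℕ | ∃ s : Fin j → Fin n,
      StrictMono s ∧ StrictMono (fun a => f (s a)) ∧ ∀ a, (s a : ℕ) + 1 ≤ p }).Nonempty :=
    ⟨n + 1, Or.inl rfl⟩
  have := Nat.sInf_mem hne
  rcases this with h1 | h2
  · exact absurd h1 h
  · exact h2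

lemma aStat_lt_of_ne {f : Fin n → Fin n} {j : ℕ} (h : aStat f j ≠ n + 1) :
    aStat f j ≤ n := by
  have := aStat_le_succ f j
  omega

lemma aStat_zero (f : Fin n → Fin n) : aStat f 0 = 0 := by
  have h0 : (0 : ℕ) ∈ ({n + 1} ∪ { p : ℕ | ∃ s : Fin 0 → Fin n,
      StrictMono s ∧ StrictMono (fun a => f (s a)) ∧ ∀ a, (s a : ℕ) + 1 ≤ p }) := by
    refine Or.inr ⟨Fin.elim0, ?_, ?_, fun a => a.elim0⟩
    · intro a; exact a.elim0
    · intro a; exact a.elim0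
  exact Nat.le_zero.mp (Nat.sInf_le h0)

lemma aStat_pos (f : Fin n → Fin n) (j : ℕ) : 1 ≤ aStat f (j + 1) := by
  by_contra h
  push_neg at h
  interval_cases h' : aStat f (j+1)
  · have hne : aStat f (j+1) ≠ n + 1 := by omega
    obtain ⟨s, _, _, hb⟩ := aStat_exists hne
    have := hb 0
    omega

lemma aStat_one (f : Fin n → Fin n) : aStat f 1 = 1 := by
  refine le_antisymm ?_ (aStat_pos f 0)
  rcases Nat.eq_zero_or_pos n with rfl | hn
  · exact aStat_le_succ f 1
  · refine aStat_le_of_seq (fun _ => ⟨0, hn⟩) ?_ ?_ (fun a => le_refl _)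
    · intro a b hab; exact absurd (Subsingleton.elim a b) hab.ne
    · intro a b hab; exact absurd (Subsingleton.elim a b) hab.ne

lemma aStat_mono (f : Fin n → Fin n) (j : ℕ) : aStat f j ≤ aStat f (j + 1) := by
  rcases eq_or_ne (aStat f (j+1)) (n+1) with h | h
  · rw [h]; exact aStat_le_succ f j
  · obtain ⟨s, h1, h2, hb⟩ := aStat_exists h
    exact aStat_le_of_seq (fun a => s (Fin.castSucc a))
      (fun a b hab => h1 (by simpa using hab))
      (fun a b hab => h2 (show Fin.castSucc a < Fin.castSucc b by simpa using hab))
      (fun a => hb _)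

lemma aStat_mono' (f : Fin n → Fin n) {j k : ℕ} (h : j ≤ k) : aStat f j ≤ aStat f k := by
  induction k with
  | zero => simpa [Nat.le_zero.mp h] using le_refl _
  | succ k ih =>
    rcases Nat.lt_succ_iff_lt_or_eq.mp (Nat.lt_succ_of_le h) with h' | rfl
    · exact le_trans (ih (by omega)) (aStat_mono f k)
    · exact le_refl _

lemma hasAscSeq_iff_aStat_le {f : Fin n → Fin n} {k : ℕ} :
    HasAscSeq f k ↔ aStat f k ≤ n := by
  constructor
  · rintro ⟨s, h1, h2⟩
    exact aStat_le_of_seq s h1 h2 (fun a => (s a).isLt)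
  · intro h
    have hne : aStat f k ≠ n + 1 := by omega
    obtain ⟨s, h1, h2, _⟩ := aStat_exists hne
    exact ⟨s, h1, h2⟩

end AscAux

namespace AscAux

lemma succAbove_coe {n : ℕ} (p : Fin (n+1)) (i : Fin n) :
    ((i:ℕ) < (p:ℕ) ∧ ((p.succAbove i : Fin (n+1)) : ℕ) = i) ∨
    ((p:ℕ) ≤ (i:ℕ) ∧ ((p.succAbove i : Fin (n+1)) : ℕ) = i + 1) := by
  rcases lt_or_ge ((i:ℕ)) ((p:ℕ)) with h | h
  · left
    refine ⟨h, ?_⟩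
    rw [Fin.succAbove_of_castSucc_lt p i (by simpa [Fin.lt_def] using h)]
    simp
  · right
    refine ⟨h, ?_⟩
    rw [Fin.succAbove_of_le_castSucc p i (by simpa [Fin.le_def] using h)]
    simp

/-- Insert the maximum value `n` at position `p`. -/
def insFun (σ : Equiv.Perm (Fin n)) (p : Fin (n+1)) : Fin (n+1) → Fin (n+1) :=
  p.insertNth (Fin.last n) (fun i => (σ i).castSucc)

@[simp] lemma insFun_same (σ : Equiv.Perm (Fin n)) (p : Fin (n+1)) :
    insFun σ p p = Fin.last n := Fin.insertNth_apply_same ..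

@[simp] lemma insFun_succAbove (σ : Equiv.Perm (Fin n)) (p : Fin (n+1)) (i : Fin n) :
    insFun σ p (p.succAbove i) = (σ i).castSucc := Fin.insertNth_apply_succAbove ..

lemma insFun_injective (σ : Equiv.Perm (Fin n)) (p : Fin (n+1)) :
    Function.Injective (insFun σ p) := by
  intro a b hab
  by_cases ha : a = p <;> by_cases hb' : b = p
  · rw [ha, hb']
  · obtain ⟨i, hi⟩ := Fin.exists_succAbove_eq hb'
    rw [ha, insFun_same, ← hi, insFun_succAbove] at hab
    exact absurd hab.symm (Fin.castSucc_lt_last _).ne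
  · obtain ⟨i, hi⟩ := Fin.exists_succAbove_eq ha
    rw [hb', insFun_same, ← hi, insFun_succAbove] at hab
    exact absurd hab (Fin.castSucc_lt_last _).ne
  · obtain ⟨i, hi⟩ := Fin.exists_succAbove_eq ha
    obtain ⟨j, hj⟩ := Fin.exists_succAbove_eq hb'
    rw [← hi, ← hj, insFun_succAbove, insFun_succAbove] at hab
    rw [← hi, ← hj, σ.injective (Fin.castSucc_injective _ hab)]

/-- The permutation of `Fin (n+1)` obtained from `σ` by inserting
the maximum value `n` at position `p`. -/
def insPerm (σ : Equiv.Perm (Fin n)) (p : Fin (n+1)) : Equiv.Perm (Fin (n+1)) :=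
  Equiv.ofBijective (insFun σ p)
    (Finite.injective_iff_bijective.mp (insFun_injective σ p))

@[simp] lemma insPerm_apply (σ : Equiv.Perm (Fin n)) (p : Fin (n+1)) (k : Fin (n+1)) :
    insPerm σ p k = insFun σ p k := rfl

lemma aStat_ins_le_add_one (σ : Equiv.Perm (Fin n)) (p : Fin (n+1)) (k : ℕ) :
    aStat (⇑(insPerm σ p)) k ≤ aStat (⇑σ) k + 1 := by
  rcases eq_or_ne (aStat (⇑σ) k) (n+1) with h | h
  · rw [h]; exact aStat_le_succ _ _
  · obtain ⟨s, h1, h2, hb⟩ := aStat_exists h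
    refine aStat_le_of_seq (fun a => p.succAbove (s a))
      (fun a b hab => Fin.strictMono_succAbove p (h1 hab)) ?_ ?_
    · intro a b hab
      simp only [insPerm_apply, insFun_succAbove]
      exact Fin.castSucc_lt_castSucc_iff.mpr (h2 hab)
    · intro a
      rcases succAbove_coe p (s a) with ⟨_, he⟩ | ⟨_, he⟩ <;> (rw [he]; have := hb a; omega)

lemma aStat_ins_le_of_le (σ : Equiv.Perm (Fin n)) (p : Fin (n+1)) (k : ℕ)
    (hp : aStat (⇑σ) k ≤ (p:ℕ)) : aStat (⇑(insPerm σ p)) k ≤ aStat (⇑σ) k := by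
  have h : aStat (⇑σ) k ≠ n + 1 := by have := p.isLt; omega
  obtain ⟨s, h1, h2, hb⟩ := aStat_exists h
  refine aStat_le_of_seq (fun a => p.succAbove (s a))
    (fun a b hab => Fin.strictMono_succAbove p (h1 hab)) ?_ ?_
  · intro a b hab
    simp only [insPerm_apply, insFun_succAbove]
    exact Fin.castSucc_lt_castSucc_iff.mpr (h2 hab)
  · intro a
    rcases succAbove_coe p (s a) with ⟨_, he⟩ | ⟨hge, he⟩
    · rw [he]; exact hb a
    · exfalso; have := hb a; omega

lemma aStat_ins_le_of_prev (σ : Equiv.Perm (Fin n)) (p : Fin (n+1)) (k : ℕ)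
    (hp : aStat (⇑σ) k ≤ (p:ℕ)) : aStat (⇑(insPerm σ p)) (k+1) ≤ (p:ℕ) + 1 := by
  have h : aStat (⇑σ) k ≠ n + 1 := by have := p.isLt; omega
  obtain ⟨s, h1, h2, hb⟩ := aStat_exists h
  have hsp : ∀ a, ((s a : ℕ)) < (p:ℕ) := fun a => by have := hb a; omega
  -- extended sequence: s followed by p
  set s' : Fin (k+1) → Fin (n+1) :=
    fun a => if h : (a:ℕ) < k then (s ⟨a, h⟩).castSucc else p with hs'
  have hs'lt : ∀ (a : Fin (k+1)) (h : (a:ℕ) < k), s' a = (s ⟨a, h⟩).castSucc := by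
    intro a h; simp [hs', h]
  have hs'last : ∀ (a : Fin (k+1)) (h : ¬ (a:ℕ) < k), s' a = p := by
    intro a h; simp [hs', h]
  have hcast : ∀ (a : Fin k), ((s a).castSucc : Fin (n+1)) < p := by
    intro a; simpa [Fin.lt_def] using hsp a
  have hτ : ∀ (a : Fin k), insPerm σ p ((s a).castSucc) = ((σ (s a)).castSucc) := by
    intro a
    have : p.succAbove (s a) = (s a).castSucc := Fin.succAbove_of_castSucc_lt p (s a) (hcast a)
    rw [insPerm_apply, ← this, insFun_succAbove]
  refine aStat_le_of_seq s' ?_ ?_ ?_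
  · intro a b hab
    by_cases h2' : (b:ℕ) < k
    · have h1' : (a:ℕ) < k := lt_trans hab h2'
      rw [hs'lt a h1', hs'lt b h2']
      exact Fin.castSucc_lt_castSucc_iff.mpr (h1 (Fin.mk_lt_mk.mpr hab))
    · have h1' : (a:ℕ) < k := by have := b.isLt; have : (a:ℕ) < (b:ℕ) := hab; omega
      rw [hs'lt a h1', hs'last b h2']
      exact hcast _
  · intro a b hab
    by_cases h2' : (b:ℕ) < k
    · have h1' : (a:ℕ) < k := lt_trans hab h2'
      simp only [hs'lt a h1', hs'lt b h2', hτ]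
      exact Fin.castSucc_lt_castSucc_iff.mpr (h2 (Fin.mk_lt_mk.mpr hab))
    · have h1' : (a:ℕ) < k := by have := b.isLt; have : (a:ℕ) < (b:ℕ) := hab; omega
      simp only [hs'lt a h1', hs'last b h2', hτ, insPerm_apply, insFun_same]
      exact Fin.castSucc_lt_last _
  · intro a
    by_cases h' : (a:ℕ) < k
    · rw [hs'lt a h']; have := hsp ⟨a, h'⟩; simp; omega
    · rw [hs'last a h']

end AscAux

namespace AscAux

lemma pullback {n : ℕ} (σ : Equiv.Perm (Fin n)) (p : Fin (n+1)) {k q : ℕ}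
    (s : Fin (k+1) → Fin (n+1)) (h1 : StrictMono s)
    (h2 : StrictMono fun a => insPerm σ p (s a))
    (hb : ∀ a, ((s a : ℕ)) + 1 ≤ q) :
    (aStat (⇑σ) k ≤ (p:ℕ) ∧ (p:ℕ) + 1 ≤ q) ∨
    (aStat (⇑σ) (k+1) ≤ q ∧ aStat (⇑σ) (k+1) ≤ (p:ℕ)) ∨
    (aStat (⇑σ) (k+1) + 1 ≤ q ∧ (p:ℕ) + 1 < q) := by
  by_cases hp : ∃ a, s a = p
  · left
    obtain ⟨a₀, ha₀⟩ := hp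
    have hlast : a₀ = Fin.last k := by
      by_contra hne
      have hlt : a₀ < Fin.last k := lt_of_le_of_ne (Fin.le_last a₀) hne
      have h := h2 hlt
      simp only at h
      rw [ha₀] at h
      simp only [insPerm_apply, insFun_same] at h
      exact absurd (Fin.le_last _) (not_le.mpr h)
    subst hlast
    have hval : ∀ a : Fin k, ((s a.castSucc : Fin (n+1)) : ℕ) < (p:ℕ) := by
      intro a
      have h := h1 (Fin.castSucc_lt_last a)
      rw [ha₀] at h
      exact Fin.lt_def.mp h
    have hple : (p:ℕ) ≤ n := by have := p.isLt; omega
    set u : Fin k → Fin n := fun a => ⟨((s a.castSucc : Fin (n+1)) : ℕ), lt_of_lt_of_le (hval a) hple⟩ with hu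
    have hcs : ∀ a : Fin k, ((u a).castSucc : Fin (n+1)) = s a.castSucc := by
      intro a; apply Fin.ext; simp [hu]
    have hsa : ∀ a : Fin k, p.succAbove (u a) = s a.castSucc := by
      intro a
      rw [Fin.succAbove_of_castSucc_lt p (u a) (by rw [hcs a]; exact Fin.lt_def.mpr (hval a))]
      exact hcs a
    have hτ : ∀ a : Fin k, insPerm σ p (s a.castSucc) = (σ (u a)).castSucc := by
      intro a; rw [← hsa a, insPerm_apply, insFun_succAbove]
    have hu1 : StrictMono u := by
      intro a b hab
      refine Fin.lt_def.mpr ?_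
      simpa [hu] using Fin.lt_def.mp (h1 (Fin.castSucc_lt_castSucc_iff.mpr hab))
    have hu2 : StrictMono (fun a => σ (u a)) := by
      intro a b hab
      have h := h2 (Fin.castSucc_lt_castSucc_iff.mpr hab)
      simp only at h
      rw [hτ, hτ] at h
      exact Fin.castSucc_lt_castSucc_iff.mp h
    constructor
    · refine aStat_le_of_seq u hu1 hu2 (fun a => ?_)
      have := hval a; simp [hu]; omega
    · have h := hb (Fin.last k)
      rw [ha₀] at h
      exact h
  · push_neg at hp
    have hts : ∀ a, ∃ z, p.succAbove z = s a := fun a => Fin.exists_succAbove_eq (hp a)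
    choose t ht using hts
    have ht1 : StrictMono t := by
      intro a b hab
      exact (Fin.strictMono_succAbove p).lt_iff_lt.mp (by rw [ht, ht]; exact h1 hab)
    have hτ : ∀ a, insPerm σ p (s a) = (σ (t a)).castSucc := by
      intro a; rw [← ht a, insPerm_apply, insFun_succAbove]
    have ht2 : StrictMono (fun a => σ (t a)) := by
      intro a b hab
      have h := h2 hab
      simp only at h
      rw [hτ, hτ] at h
      exact Fin.castSucc_lt_castSucc_iff.mp h
    have hA : aStat (⇑σ) (k+1) ≤ ((t (Fin.last k)) : ℕ) + 1 := by
      refine aStat_le_of_seq t ht1 ht2 (fun a => ?_)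
      exact Nat.succ_le_succ (Fin.le_def.mp (ht1.monotone (Fin.le_last a)))
    have hblast := hb (Fin.last k)
    rcases succAbove_coe p (t (Fin.last k)) with ⟨hlt, he⟩ | ⟨hge, he⟩ <;> rw [ht] at he
    · right; left
      constructor <;> omega
    · right; right
      constructor <;> omega

lemma master_a {n : ℕ} (σ : Equiv.Perm (Fin n)) (p : Fin (n+1)) (k : ℕ)
    (hσ : aStat (⇑σ) (k+1) ≤ (p:ℕ)) :
    aStat (⇑(insPerm σ p)) (k+1) = aStat (⇑σ) (k+1) := by
  refine le_antisymm (aStat_ins_le_of_le σ p (k+1) hσ) ?_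
  set q := aStat (⇑(insPerm σ p)) (k+1) with hq
  have hqle : q ≤ (p:ℕ) := le_trans (aStat_ins_le_of_le σ p (k+1) hσ) hσ
  have hqn : q ≠ (n+1) + 1 := by have := p.isLt; omega
  obtain ⟨s, h1, h2, hb⟩ := aStat_exists hqn
  rcases pullback σ p s h1 h2 hb with ⟨_, h⟩ | ⟨h, _⟩ | ⟨h, _⟩
  · omega
  · exact h
  · omega

lemma master_b {n : ℕ} (σ : Equiv.Perm (Fin n)) (p : Fin (n+1)) (k : ℕ)
    (hσ1 : aStat (⇑σ) k ≤ (p:ℕ)) (hσ2 : (p:ℕ) < aStat (⇑σ) (k+1)) :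
    aStat (⇑(insPerm σ p)) (k+1) = (p:ℕ) + 1 := by
  refine le_antisymm (aStat_ins_le_of_prev σ p k hσ1) ?_
  set q := aStat (⇑(insPerm σ p)) (k+1) with hq
  have hqle : q ≤ (p:ℕ) + 1 := aStat_ins_le_of_prev σ p k hσ1
  have hqn : q ≠ (n+1) + 1 := by have := p.isLt; omega
  obtain ⟨s, h1, h2, hb⟩ := aStat_exists hqn
  rcases pullback σ p s h1 h2 hb with ⟨_, h⟩ | ⟨h, h'⟩ | ⟨h, h'⟩
  · omega
  · omega
  · omega

lemma master_c {n : ℕ} (σ : Equiv.Perm (Fin n)) (p : Fin (n+1)) (k : ℕ)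
    (hσ : (p:ℕ) < aStat (⇑σ) k) :
    aStat (⇑(insPerm σ p)) (k+1) = aStat (⇑σ) (k+1) + 1 := by
  have hmono := aStat_mono (⇑σ) k
  refine le_antisymm (aStat_ins_le_add_one σ p (k+1)) ?_
  set q := aStat (⇑(insPerm σ p)) (k+1) with hq
  rcases eq_or_ne q ((n+1)+1) with hqn | hqn
  · have h1 := aStat_le_succ (⇑σ) (k+1)
    have h2 := aStat_ins_le_add_one σ p (k+1)
    omega
  · obtain ⟨s, h1, h2, hb⟩ := aStat_exists hqn
    rcases pullback σ p s h1 h2 hb with ⟨h, _⟩ | ⟨_, h⟩ | ⟨h, _⟩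
    · omega
    · omega
    · omega

end AscAux

namespace AscAux

lemma ins_avoids_iff {n m : ℕ} (hm : 1 ≤ m) (σ : Equiv.Perm (Fin n)) (p : Fin (n+1)) :
    (¬ HasAscSeq (⇑(insPerm σ p)) (m+1)) ↔
      (¬ HasAscSeq (⇑σ) (m+1) ∧ (p:ℕ) < aStat (⇑σ) m) := by
  obtain ⟨k, rfl⟩ := Nat.exists_eq_add_of_le hm
  set m := 1 + k with hmdef
  by_cases hp : (p:ℕ) < aStat (⇑σ) m
  · have hc : aStat (⇑(insPerm σ p)) (m+1) = aStat (⇑σ) (m+1) + 1 := by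
      have := master_c σ p m hp
      convert this using 2
    rw [hasAscSeq_iff_aStat_le, hasAscSeq_iff_aStat_le, hc]
    have h1 := aStat_le_succ (⇑σ) (m+1)
    constructor
    · intro h; exact ⟨by omega, hp⟩
    · rintro ⟨h, _⟩; omega
  · push_neg at hp
    have h2 : aStat (⇑(insPerm σ p)) (m+1) ≤ (p:ℕ) + 1 := aStat_ins_le_of_prev σ p m hp
    have h3 : HasAscSeq (⇑(insPerm σ p)) (m+1) := by
      rw [hasAscSeq_iff_aStat_le]
      have := p.isLt; omega
    constructor
    · intro h; exact absurd h3 h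
    · rintro ⟨_, h⟩; omega

lemma insPerm_injective2 {n : ℕ} (σ σ' : Equiv.Perm (Fin n)) (p p' : Fin (n+1))
    (h : insPerm σ p = insPerm σ' p') : σ = σ' ∧ p = p' := by
  have happ : ∀ k, insFun σ p k = insFun σ' p' k := by
    intro k
    have := congrArg (fun e => Equiv.toFun e k) h
    simpa [insPerm, Equiv.ofBijective] using this
  have hpp : p = p' := by
    by_contra hne
    obtain ⟨i, hi⟩ := Fin.exists_succAbove_eq (Ne.symm hne)
    have := happ p'
    rw [← hi] at this
    rw [insFun_succAbove] at this
    rw [hi, insFun_same] at this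
    exact absurd this.symm (Fin.castSucc_lt_last _).ne'
  subst hpp
  refine ⟨Equiv.ext fun i => ?_, rfl⟩
  have := happ (p.succAbove i)
  rw [insFun_succAbove, insFun_succAbove] at this
  exact Fin.castSucc_injective _ this

/-- Delete the maximum value from a permutation of `Fin (n+1)`. -/
def delFun {n : ℕ} (τ : Equiv.Perm (Fin (n+1))) : Fin n → Fin n := fun i =>
  (τ ((τ⁻¹ (Fin.last n)).succAbove i)).castPred (by
    intro h
    have : (τ⁻¹ (Fin.last n)).succAbove i = τ⁻¹ (Fin.last n) := by
      have := congrArg (⇑τ⁻¹) h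
      simpa using this
    exact Fin.succAbove_ne _ _ this)

lemma delFun_injective {n : ℕ} (τ : Equiv.Perm (Fin (n+1))) :
    Function.Injective (delFun τ) := by
  intro a b hab
  unfold delFun at hab
  rw [Fin.castPred_inj] at hab
  exact (Fin.strictMono_succAbove _).injective (τ.injective hab)

def delPerm {n : ℕ} (τ : Equiv.Perm (Fin (n+1))) : Equiv.Perm (Fin n) :=
  Equiv.ofBijective (delFun τ) (Finite.injective_iff_bijective.mp (delFun_injective τ))

lemma delPerm_apply {n : ℕ} (τ : Equiv.Perm (Fin (n+1))) (i : Fin n) :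
    (delPerm τ i).castSucc = τ ((τ⁻¹ (Fin.last n)).succAbove i) := by
  show ((delFun τ i).castSucc : Fin (n+1)) = _
  unfold delFun
  rw [Fin.castSucc_castPred]

lemma ins_del {n : ℕ} (τ : Equiv.Perm (Fin (n+1))) :
    insPerm (delPerm τ) (τ⁻¹ (Fin.last n)) = τ := by
  apply Equiv.ext
  intro k
  rw [insPerm_apply]
  by_cases hk : k = τ⁻¹ (Fin.last n)
  · rw [hk, insFun_same]
    simp
  · obtain ⟨i, hi⟩ := Fin.exists_succAbove_eq hk
    rw [← hi, insFun_succAbove]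
    have := delPerm_apply τ i
    rw [this]

end AscAux

/-- The polynomial `F_n(v_1,…,v_m) = ∑_{τ∈S_n^{(m)}} v_1^{a_2−1} v_2^{a_3−a_2} ⋯
v_m^{n+1−a_m}`.  With 0-based variable indices `j : Fin m`, the exponent of
`v_j` is `A(j+2) − A(j+1)` where `A(k) = a_k(τ)` for `k ≤ m` and `A(m+1) = n+1`
(note `a_1(τ) = 1`). -/
def Fpoly (m n : ℕ) : MvPolynomial (Fin m) ℚ :=
  ∑ τ ∈ Finset.univ.filter (fun τ : Equiv.Perm (Fin n) => ¬ HasAscSeq (⇑τ) (m + 1)),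
    ∏ j : Fin m,
      MvPolynomial.X j ^
        ((if (j : ℕ) + 2 ≤ m then aStat (⇑τ) ((j : ℕ) + 2) else n + 1)
          - aStat (⇑τ) ((j : ℕ) + 1))

namespace AscAux

open MvPolynomial Finset

/-- The clipped statistic function. -/
def Bf (m n : ℕ) {N : ℕ} (f : Fin N → Fin N) (k : ℕ) : ℕ :=
  if k ≤ m then aStat f k else n + 1

/-- Weight monomial attached to a statistic function. -/
def wt (m : ℕ) (A : ℕ → ℕ) : MvPolynomial (Fin m) ℚ :=
  ∏ i : Fin m, X i ^ (A ((i:ℕ)+2) - A ((i:ℕ)+1))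

def avoiders (m n : ℕ) : Finset (Equiv.Perm (Fin n)) :=
  Finset.univ.filter (fun τ : Equiv.Perm (Fin n) => ¬ HasAscSeq (⇑τ) (m + 1))

lemma Fpoly_eq (m n : ℕ) : Fpoly m n = ∑ τ ∈ avoiders m n, wt m (Bf m n ⇑τ) := by
  unfold Fpoly wt avoiders Bf
  refine Finset.sum_congr rfl (fun τ _ => Finset.prod_congr rfl (fun i _ => ?_))
  have h1 : (i:ℕ) + 1 ≤ m := i.isLt
  rw [if_pos h1]

/-- modified statistic after insertion in window `w`. -/
def nB (A : ℕ → ℕ) (w p : ℕ) (k : ℕ) : ℕ :=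
  if k ≤ w then A k else if k = w + 1 then p + 1 else A k + 1

lemma Bf_ins {m n : ℕ} (σ : Equiv.Perm (Fin n)) (p : Fin (n+1)) (w : ℕ)
    (hw : w + 1 ≤ m)
    (hp1 : aStat (⇑σ) w ≤ (p:ℕ)) (hp2 : (p:ℕ) < aStat (⇑σ) (w+1)) :
    ∀ k, 1 ≤ k → k ≤ m + 1 →
      Bf m (n+1) (⇑(insPerm σ p)) k = nB (Bf m n ⇑σ) w (p:ℕ) k := by
  intro k hk1 hk2
  obtain ⟨k', rfl⟩ : ∃ k', k = k' + 1 := ⟨k - 1, by omega⟩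
  rcases lt_trichotomy (k' + 1) (w + 1) with hlt | heq | hgt
  · -- k ≤ w
    have hkw : k' + 1 ≤ w := by omega
    have hkm : k' + 1 ≤ m := by omega
    have hle : aStat (⇑σ) (k'+1) ≤ (p:ℕ) := le_trans (aStat_mono' (⇑σ) hkw) hp1
    rw [Bf, if_pos hkm, nB, if_pos hkw, Bf, if_pos hkm]
    exact master_a σ p k' hle
  · -- k = w + 1
    have hkm : k' + 1 ≤ m := by omega
    have hk'w : k' = w := by omega
    subst hk'w
    rw [Bf, if_pos hkm, nB, if_neg (by omega), if_pos rfl]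
    exact master_b σ p k' hp1 hp2
  · -- k ≥ w + 2
    have hlt2 : (p:ℕ) < aStat (⇑σ) k' := lt_of_lt_of_le hp2 (aStat_mono' (⇑σ) (by omega))
    rw [nB, if_neg (by omega), if_neg (by omega)]
    by_cases hkm : k' + 1 ≤ m
    · rw [Bf, if_pos hkm, Bf, if_pos hkm]
      exact master_c σ p k' hlt2
    · rw [Bf, if_neg hkm, Bf, if_neg hkm]

end AscAux

namespace AscAux

open MvPolynomial Finset

lemma sum_ins {m n : ℕ} (hm : 1 ≤ m) {M : Type*} [AddCommMonoid M]
    (g : Equiv.Perm (Fin (n+1)) → M) :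
    ∑ τ ∈ avoiders m (n+1), g τ
      = ∑ σ ∈ avoiders m n,
          ∑ p ∈ Finset.univ.filter (fun p : Fin (n+1) => (p:ℕ) < aStat (⇑σ) m),
            g (insPerm σ p) := by
  rw [Finset.sum_sigma']
  symm
  refine Finset.sum_bij (fun x _ => insPerm x.1 x.2) ?_ ?_ ?_ ?_
  · rintro ⟨σ, p⟩ hx
    rw [Finset.mem_sigma] at hx
    obtain ⟨h1, h2⟩ := hx
    rw [avoiders, Finset.mem_filter] at h1 ⊢
    rw [Finset.mem_filter] at h2
    exact ⟨Finset.mem_univ _, (ins_avoids_iff hm σ p).mpr ⟨h1.2, h2.2⟩⟩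
  · rintro ⟨σ, p⟩ h1 ⟨σ', p'⟩ h2 heq
    obtain ⟨h3, h4⟩ := insPerm_injective2 σ σ' p p' heq
    subst h3; subst h4; rfl
  · intro τ hτ
    rw [avoiders, Finset.mem_filter] at hτ
    have hτ' := hτ.2
    rw [← ins_del τ] at hτ'
    obtain ⟨h1, h2⟩ := (ins_avoids_iff hm (delPerm τ) (τ⁻¹ (Fin.last n))).mp hτ'
    refine ⟨⟨delPerm τ, τ⁻¹ (Fin.last n)⟩, ?_, ins_del τ⟩
    rw [Finset.mem_sigma, avoiders, Finset.mem_filter, Finset.mem_filter]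
    exact ⟨⟨Finset.mem_univ _, h1⟩, Finset.mem_univ _, h2⟩
  · intros; rfl

end AscAux

namespace AscAux

open MvPolynomial Finset

def vI {m : ℕ} (h : 0 < m) (k : ℕ) : Fin m := ⟨k % m, Nat.mod_lt _ h⟩

lemma vI_eq {m : ℕ} (h : 0 < m) {k : ℕ} (hk : k < m) : (vI h k : ℕ) = k := Nat.mod_eq_of_lt hk

def pI (n : ℕ) (q : ℕ) : Fin (n+1) := ⟨q % (n+1), Nat.mod_lt _ (Nat.succ_pos n)⟩

lemma pI_eq {n q : ℕ} (hq : q ≤ n) : ((pI n q : Fin (n+1)) : ℕ) = q :=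
  Nat.mod_eq_of_lt (by omega)

lemma prod_pow_add {m : ℕ} (e d : Fin m → ℕ) :
    (∏ i : Fin m, (X i : MvPolynomial (Fin m) ℚ) ^ (e i + d i))
      = (∏ i : Fin m, (X i : MvPolynomial (Fin m) ℚ) ^ e i)
        * ∏ i : Fin m, (X i : MvPolynomial (Fin m) ℚ) ^ d i := by
  rw [← Finset.prod_mul_distrib]
  exact Finset.prod_congr rfl (fun i _ => pow_add _ _ _)

lemma prod_pow_indicator {m : ℕ} (a : Fin m) (c : ℕ) :
    (∏ i : Fin m, (X i : MvPolynomial (Fin m) ℚ) ^ (if i = a then c else 0)) = X a ^ c := by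
  rw [Finset.prod_eq_single a (fun b _ hb => by rw [if_neg hb, pow_zero]) (fun h => absurd (Finset.mem_univ a) h)]
  rw [if_pos rfl]

/-- substitution of `X b` for `X a` on a monomial. -/
lemma subst_prod_pow {m : ℕ} (a b : Fin m) (hab : a ≠ b) (e : Fin m → ℕ) :
    MvPolynomial.aeval (fun k : Fin m => if k = a then (X b : MvPolynomial (Fin m) ℚ) else X k)
        (∏ i : Fin m, (X i : MvPolynomial (Fin m) ℚ) ^ e i)
      = ∏ i : Fin m, (X i : MvPolynomial (Fin m) ℚ)
          ^ (if i = a then 0 else if i = b then e b + e a else e i) := by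
  rw [map_prod]
  have hb' : b ∈ Finset.univ.erase a := Finset.mem_erase.mpr ⟨Ne.symm hab, Finset.mem_univ b⟩
  rw [← Finset.prod_erase_mul _ _ (Finset.mem_univ a), ← Finset.prod_erase_mul _ _ (Finset.mem_univ a)]
  rw [← Finset.prod_erase_mul _ _ hb', ← Finset.prod_erase_mul _ _ hb']
  have h1 : ∀ i ∈ (Finset.univ.erase a).erase b,
      MvPolynomial.aeval (fun k : Fin m => if k = a then (X b : MvPolynomial (Fin m) ℚ) else X k)
        ((X i : MvPolynomial (Fin m) ℚ) ^ e i)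
      = (X i : MvPolynomial (Fin m) ℚ) ^ (if i = a then 0 else if i = b then e b + e a else e i) := by
    intro i hi
    rw [Finset.mem_erase, Finset.mem_erase] at hi
    rw [map_pow, aeval_X, if_neg hi.2.1, if_neg hi.2.1, if_neg hi.1]
  rw [Finset.prod_congr rfl h1]
  rw [map_pow, aeval_X, map_pow, aeval_X, if_pos rfl, if_pos rfl]
  simp only [if_neg (Ne.symm hab), eq_self_iff_true, if_true, ite_true, pow_zero, mul_one, pow_add]
  ring

lemma sum_Ico_partition {M : Type*} [AddCommMonoid M] (f : ℕ → M) (g : ℕ → ℕ)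
    (hg : Monotone g) (k : ℕ) :
    ∑ w ∈ Finset.range k, ∑ q ∈ Finset.Ico (g w) (g (w+1)), f q
      = ∑ q ∈ Finset.Ico (g 0) (g k), f q := by
  induction k with
  | zero => simp
  | succ k ih =>
    rw [Finset.sum_range_succ, ih, Finset.sum_Ico_consecutive]
    · exact hg (Nat.zero_le k)
    · exact hg (Nat.le_succ k)

end AscAux

namespace AscAux

open MvPolynomial Finset

def Hmon (m : ℕ) (A : ℕ → ℕ) (w p : ℕ) : MvPolynomial (Fin m) ℚ :=
  ∏ i : Fin m, X i ^ (if (i:ℕ)+1 = w then p - A w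
    else if (i:ℕ) = w then A (w+2) - p - 1
    else A ((i:ℕ)+2) - A ((i:ℕ)+1))

lemma Bf_mono (m n : ℕ) {N : ℕ} (f : Fin N → Fin N) (hN : ∀ k, aStat f k ≤ n + 1) :
    Monotone (Bf m n f) := by
  intro k l hkl
  unfold Bf
  by_cases hk : k ≤ m <;> by_cases hl : l ≤ m
  · rw [if_pos hk, if_pos hl]; exact aStat_mono' f hkl
  · rw [if_pos hk, if_neg hl]; exact hN k
  · omega
  · rw [if_neg hk, if_neg hl]

lemma prod_pow_indicator_two {m : ℕ} (a b : Fin m) (hab : a ≠ b) :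
    (∏ i : Fin m, (X i : MvPolynomial (Fin m) ℚ)
        ^ (if i = a then 1 else if i = b then 1 else 0)) = X a * X b := by
  have h : ∀ i : Fin m, (if i = a then 1 else if i = b then 1 else 0)
      = (if i = a then 1 else 0) + (if i = b then 1 else 0) := by
    intro i
    by_cases h1 : i = a
    · subst h1; rw [if_pos rfl, if_pos rfl, if_neg hab]
    · rw [if_neg h1, if_neg h1, zero_add]
  rw [Finset.prod_congr rfl (fun i _ => by rw [h i]), prod_pow_add,
    prod_pow_indicator, prod_pow_indicator, pow_one, pow_one]

/-- The `w = 0` window: inserting the maximum at the very front. -/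
lemma L0 {m : ℕ} (h0 : 0 < m) (A : ℕ → ℕ) (hA : Monotone A) (hA1 : A 1 = 1) :
    wt m (nB A 0 0) = X (vI h0 0) * wt m A := by
  have key : ∀ i : Fin m, nB A 0 0 ((i:ℕ)+2) - nB A 0 0 ((i:ℕ)+1)
      = (A ((i:ℕ)+2) - A ((i:ℕ)+1)) + (if i = vI h0 0 then 1 else 0) := by
    intro i
    by_cases hi : (i:ℕ) = 0
    · rw [if_pos (Fin.ext (by rw [vI_eq h0 h0]; exact hi))]
      rw [hi]
      show nB A 0 0 2 - nB A 0 0 1 = (A 2 - A 1) + 1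
      rw [nB, nB, if_neg (by omega), if_neg (by omega), if_neg (by omega), if_pos rfl]
      have := hA (show 1 ≤ 2 by omega)
      omega
    · rw [if_neg (fun h => hi (by rw [h, vI_eq h0 h0]))]
      rw [nB, nB, if_neg (by omega), if_neg (by omega), if_neg (by omega), if_neg (by omega)]
      omega
  rw [wt, Finset.prod_congr rfl (fun i _ => by rw [key i]), prod_pow_add, prod_pow_indicator,
    pow_one, wt, mul_comm]

/-- The window `1 ≤ w ≤ m-1`: summand splits off `X_{w-1} X_w`. -/
lemma L1 {m : ℕ} (h0 : 0 < m) {w p : ℕ} (hw1 : 1 ≤ w) (hw2 : w + 1 ≤ m)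
    (A : ℕ → ℕ) (hA : Monotone A) (hp1 : A w ≤ p) (hp2 : p < A (w+1)) :
    wt m (nB A w p) = X (vI h0 (w-1)) * X (vI h0 w) * Hmon m A w p := by
  have hab : vI h0 (w-1) ≠ vI h0 w := by
    intro h
    have h1 := congrArg (fun x : Fin m => (x:ℕ)) h
    simp only [vI_eq h0 (show w-1 < m by omega), vI_eq h0 (show w < m by omega)] at h1
    omega
  have k1 : A w ≤ A (w+1) := hA (by omega)
  have k2 : A (w+1) ≤ A (w+2) := hA (by omega)
  have key : ∀ i : Fin m, nB A w p ((i:ℕ)+2) - nB A w p ((i:ℕ)+1)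
      = ((if (i:ℕ)+1 = w then p - A w
          else if (i:ℕ) = w then A (w+2) - p - 1
          else A ((i:ℕ)+2) - A ((i:ℕ)+1))
        + (if i = vI h0 (w-1) then 1 else if i = vI h0 w then 1 else 0)) := by
    intro i
    rcases lt_trichotomy ((i:ℕ)+1) w with hc | hc | hc
    · have h1 : ¬ i = vI h0 (w-1) := by
        intro h; rw [Fin.ext_iff] at h; rw [vI_eq h0 (show w-1 < m by omega)] at h; omega
      have h2 : ¬ i = vI h0 w := by
        intro h; rw [Fin.ext_iff] at h; rw [vI_eq h0 (show w < m by omega)] at h; omega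
      rw [if_neg h1, if_neg h2]
      simp only [nB]
      split_ifs <;> omega
    · have hw' : w = (i:ℕ)+1 := hc.symm
      subst hw'
      have h1 : i = vI h0 ((i:ℕ)+1-1) := by
        rw [Fin.ext_iff, vI_eq h0 (show (i:ℕ)+1-1 < m by omega)]; omega
      rw [if_pos h1]
      simp only [nB]
      split_ifs <;> omega
    · by_cases h2 : (i:ℕ) = w
      · have hw' : w = (i:ℕ) := h2.symm
        subst hw'
        have h1 : ¬ i = vI h0 ((i:ℕ)-1) := by
          intro h; rw [Fin.ext_iff] at h; rw [vI_eq h0 (show (i:ℕ)-1 < m by omega)] at h; omega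
        have h3 : i = vI h0 (i:ℕ) := by
          rw [Fin.ext_iff, vI_eq h0 (show (i:ℕ) < m by omega)]
        rw [if_neg h1, if_pos h3]
        simp only [nB]
        split_ifs <;> omega
      · have h1 : ¬ i = vI h0 (w-1) := by
          intro h; rw [Fin.ext_iff] at h; rw [vI_eq h0 (show w-1 < m by omega)] at h; omega
        have h3 : ¬ i = vI h0 w := by
          intro h; rw [Fin.ext_iff] at h; rw [vI_eq h0 (show w < m by omega)] at h; omega
        rw [if_neg h1, if_neg h3]
        simp only [nB]
        split_ifs <;> omega
  rw [wt, Finset.prod_congr rfl (fun i _ => by rw [key i]), prod_pow_add,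
    prod_pow_indicator_two _ _ hab, Hmon, mul_comm]

end AscAux

namespace AscAux

open MvPolynomial Finset

lemma L2 {m : ℕ} (h0 : 0 < m) {w : ℕ} (hw1 : 1 ≤ w) (hw2 : w + 1 ≤ m)
    (A : ℕ → ℕ) (hA : Monotone A) :
    (X (vI h0 (w-1)) - X (vI h0 w)) *
      (∑ p ∈ Finset.Ico (A w) (A (w+1)), Hmon m A w p)
    = wt m A - MvPolynomial.aeval
        (fun k : Fin m => if k = vI h0 (w-1)
          then (X (vI h0 w) : MvPolynomial (Fin m) ℚ) else X k) (wt m A) := by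
  have hab : vI h0 (w-1) ≠ vI h0 w := by
    intro h
    have h1 := congrArg (fun x : Fin m => (x:ℕ)) h
    simp only [vI_eq h0 (show w-1 < m by omega), vI_eq h0 (show w < m by omega)] at h1
    omega
  have k1 : A w ≤ A (w+1) := hA (by omega)
  have k2 : A (w+1) ≤ A (w+2) := hA (by omega)
  have hiff1 : ∀ i : Fin m, (i = vI h0 (w-1)) ↔ ((i:ℕ) + 1 = w) := by
    intro i; rw [Fin.ext_iff, vI_eq h0 (show w-1 < m by omega)]; omega
  have hiff2 : ∀ i : Fin m, (i = vI h0 w) ↔ ((i:ℕ) = w) := by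
    intro i; rw [Fin.ext_iff, vI_eq h0 (show w < m by omega)]
  set D := A (w+2) - A w with hD
  set F : ℕ → MvPolynomial (Fin m) ℚ := fun r => ∏ i : Fin m,
    X i ^ (if (i:ℕ)+1 = w then r else if (i:ℕ) = w then D - r
      else A ((i:ℕ)+2) - A ((i:ℕ)+1)) with hF
  -- x * Hmon = F (r+1)
  have hx : ∀ r : ℕ, A w + r < A (w+1) →
      F (r+1) = X (vI h0 (w-1)) * Hmon m A w (A w + r) := by
    intro r _
    rw [hF, Hmon]
    have key : ∀ i : Fin m,
        (if (i:ℕ)+1 = w then r+1 else if (i:ℕ) = w then D - (r+1)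
          else A ((i:ℕ)+2) - A ((i:ℕ)+1))
        = ((if (i:ℕ)+1 = w then (A w + r) - A w
            else if (i:ℕ) = w then A (w+2) - (A w + r) - 1
            else A ((i:ℕ)+2) - A ((i:ℕ)+1))
          + (if i = vI h0 (w-1) then 1 else 0)) := by
      intro i
      rw [if_congr (hiff1 i) rfl rfl]
      split_ifs <;> omega
    refine Eq.trans (Finset.prod_congr rfl (fun i _ => by rw [key i])) ?_
    rw [prod_pow_add, prod_pow_indicator, pow_one, mul_comm]
  -- y * Hmon = F r
  have hy : ∀ r : ℕ, A w + r < A (w+1) →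
      F r = X (vI h0 w) * Hmon m A w (A w + r) := by
    intro r hr
    rw [hF, Hmon]
    have key : ∀ i : Fin m,
        (if (i:ℕ)+1 = w then r else if (i:ℕ) = w then D - r
          else A ((i:ℕ)+2) - A ((i:ℕ)+1))
        = ((if (i:ℕ)+1 = w then (A w + r) - A w
            else if (i:ℕ) = w then A (w+2) - (A w + r) - 1
            else A ((i:ℕ)+2) - A ((i:ℕ)+1))
          + (if i = vI h0 w then 1 else 0)) := by
      intro i
      rw [if_congr (hiff2 i) rfl rfl]
      have : ¬ ((i:ℕ) + 1 = w ∧ (i:ℕ) = w) := by omega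
      split_ifs <;> omega
    refine Eq.trans (Finset.prod_congr rfl (fun i _ => by rw [key i])) ?_
    rw [prod_pow_add, prod_pow_indicator, pow_one, mul_comm]
  -- telescoping
  rw [Finset.sum_Ico_eq_sum_range, Finset.mul_sum]
  have step : ∀ r ∈ Finset.range (A (w+1) - A w),
      (X (vI h0 (w-1)) - X (vI h0 w)) * Hmon m A w (A w + r) = F (r+1) - F r := by
    intro r hr
    rw [Finset.mem_range] at hr
    have hr' : A w + r < A (w+1) := by omega
    rw [sub_mul, ← hx r hr', ← hy r hr']
  rw [Finset.sum_congr rfl step, Finset.sum_range_sub]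
  -- identify F (A (w+1) - A w) = wt m A
  have hFd : F (A (w+1) - A w) = wt m A := by
    rw [hF, wt]
    refine Finset.prod_congr rfl (fun i _ => ?_)
    by_cases h1 : (i:ℕ)+1 = w
    · rw [if_pos h1]
      have e1 : (i:ℕ)+2 = w+1 := by omega
      have e2 : (i:ℕ)+1 = w := h1
      rw [e1, e2]
    · rw [if_neg h1]
      by_cases h2 : (i:ℕ) = w
      · rw [if_pos h2]
        have e1 : (i:ℕ)+2 = w+2 := by omega
        have e2 : (i:ℕ)+1 = w+1 := by omega
        rw [e1, e2]
        congr 1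
        omega
      · rw [if_neg h2]
  -- identify F 0 = substituted weight
  have hF0 : F 0 = MvPolynomial.aeval
      (fun k : Fin m => if k = vI h0 (w-1)
        then (X (vI h0 w) : MvPolynomial (Fin m) ℚ) else X k) (wt m A) := by
    rw [wt, subst_prod_pow _ _ hab, hF]
    refine Finset.prod_congr rfl (fun i _ => ?_)
    by_cases h1 : i = vI h0 (w-1)
    · rw [if_pos h1, if_pos ((hiff1 i).mp h1)]
    · rw [if_neg h1, if_neg (fun h => h1 ((hiff1 i).mpr h))]
      by_cases h2 : i = vI h0 w
      · rw [if_pos h2, if_pos ((hiff2 i).mp h2)]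
        have e0 : ((vI h0 w : Fin m) : ℕ) = w := vI_eq h0 (by omega)
        have e0' : ((vI h0 (w-1) : Fin m) : ℕ) = w - 1 := vI_eq h0 (by omega)
        rw [e0, e0']
        have e1 : w - 1 + 2 = w + 1 := by omega
        have e2 : w - 1 + 1 = w := by omega
        rw [e1, e2]
        congr 1
        omega
      · rw [if_neg h2, if_neg (fun h => h2 ((hiff2 i).mpr h))]
  rw [hFd, hF0]

end AscAux

namespace AscAux

open MvPolynomial Finset

lemma Bf_eq {m n N : ℕ} (f : Fin N → Fin N) {k : ℕ} (hk : k ≤ m) :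
    Bf m n f k = aStat f k := if_pos hk

lemma wt_ins {m n : ℕ} (σ : Equiv.Perm (Fin n)) (p : Fin (n+1)) (w : ℕ)
    (hw : w + 1 ≤ m) (hp1 : aStat (⇑σ) w ≤ (p:ℕ)) (hp2 : (p:ℕ) < aStat (⇑σ) (w+1)) :
    wt m (Bf m (n+1) (⇑(insPerm σ p))) = wt m (nB (Bf m n ⇑σ) w (p:ℕ)) := by
  unfold wt
  refine Finset.prod_congr rfl (fun i _ => ?_)
  rw [Bf_ins σ p w hw hp1 hp2 ((i:ℕ)+2) (by omega) (by have := i.isLt; omega),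
    Bf_ins σ p w hw hp1 hp2 ((i:ℕ)+1) (by omega) (by have := i.isLt; omega)]

lemma per_sigma {m n : ℕ} (h0 : 0 < m) (σ : Equiv.Perm (Fin n)) :
    ∑ p ∈ Finset.univ.filter (fun p : Fin (n+1) => (p:ℕ) < aStat (⇑σ) m),
        wt m (Bf m (n+1) (⇑(insPerm σ p)))
      = X (vI h0 0) * wt m (Bf m n ⇑σ)
        + ∑ w ∈ Finset.Ico 1 m, X (vI h0 (w-1)) * X (vI h0 w) *
            ∑ p ∈ Finset.Ico (Bf m n ⇑σ w) (Bf m n ⇑σ (w+1)), Hmon m (Bf m n ⇑σ) w p := by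
  have hmono : Monotone (Bf m n ⇑σ) := Bf_mono m n ⇑σ (fun k => aStat_le_succ ⇑σ k)
  have hB0 : Bf m n ⇑σ 0 = 0 := by rw [Bf_eq _ (by omega : 0 ≤ m)]; exact aStat_zero ⇑σ
  have hB1 : Bf m n ⇑σ 1 = 1 := by rw [Bf_eq _ h0]; exact aStat_one ⇑σ
  -- step 1 : from Fin-indexed positions to ℕ-indexed positions
  have s1 : ∑ p ∈ Finset.univ.filter (fun p : Fin (n+1) => (p:ℕ) < aStat (⇑σ) m),
        wt m (Bf m (n+1) (⇑(insPerm σ p)))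
      = ∑ q ∈ Finset.range (aStat (⇑σ) m), wt m (Bf m (n+1) (⇑(insPerm σ (pI n q)))) := by
    refine Finset.sum_bij (fun p _ => (p:ℕ)) ?_ ?_ ?_ ?_
    · intro p hp
      rw [Finset.mem_filter] at hp
      exact Finset.mem_range.mpr hp.2
    · intro p _ p' _ h
      exact Fin.ext h
    · intro q hq
      rw [Finset.mem_range] at hq
      have hqn : q ≤ n := by have := aStat_le_succ (⇑σ) m; omega
      refine ⟨pI n q, ?_, pI_eq hqn⟩
      rw [Finset.mem_filter]
      exact ⟨Finset.mem_univ _, by rw [pI_eq hqn]; exact hq⟩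
    · intro p hp
      have : pI n ((p:ℕ)) = p := Fin.ext (pI_eq (by omega))
      rw [this]
  rw [s1]
  -- step 2 : partition into windows
  have s2 : ∑ q ∈ Finset.range (aStat (⇑σ) m), wt m (Bf m (n+1) (⇑(insPerm σ (pI n q))))
      = ∑ w ∈ Finset.range m, ∑ q ∈ Finset.Ico (Bf m n ⇑σ w) (Bf m n ⇑σ (w+1)),
          wt m (Bf m (n+1) (⇑(insPerm σ (pI n q)))) := by
    rw [sum_Ico_partition _ (Bf m n ⇑σ) hmono m, hB0, Bf_eq _ (le_refl m), Finset.range_eq_Ico]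
  rw [s2]
  -- step 3 : split off the w = 0 window
  rw [Finset.range_eq_Ico, Finset.sum_eq_sum_Ico_succ_bot h0]
  congr 1
  · -- the w = 0 term
    rw [hB0, hB1]
    have : Finset.Ico 0 1 = {0} := rfl
    rw [this, Finset.sum_singleton]
    have hp1 : aStat (⇑σ) 0 ≤ ((pI n 0 : Fin (n+1)) : ℕ) := by
      rw [aStat_zero]; omega
    have hp2 : ((pI n 0 : Fin (n+1)) : ℕ) < aStat (⇑σ) 1 := by
      rw [pI_eq (by omega), aStat_one]; omega
    rw [wt_ins σ (pI n 0) 0 (by omega) hp1 hp2, pI_eq (by omega : 0 ≤ n)]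
    exact L0 h0 (Bf m n ⇑σ) hmono hB1
  · -- the windows 1 ≤ w < m
    refine Finset.sum_congr rfl (fun w hw => ?_)
    rw [Finset.mem_Ico] at hw
    have hw1 : 1 ≤ w := hw.1
    have hw2 : w + 1 ≤ m := hw.2
    rw [Finset.mul_sum]
    refine Finset.sum_congr rfl (fun q hq => ?_)
    rw [Finset.mem_Ico] at hq
    have hB_w : Bf m n ⇑σ w = aStat (⇑σ) w := Bf_eq _ (by omega)
    have hB_w1 : Bf m n ⇑σ (w+1) = aStat (⇑σ) (w+1) := Bf_eq _ (by omega)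
    have hqn : q ≤ n := by
      have h1 := hq.2
      rw [hB_w1] at h1
      have := aStat_le_succ (⇑σ) (w+1)
      omega
    have hp1 : aStat (⇑σ) w ≤ ((pI n q : Fin (n+1)) : ℕ) := by
      rw [pI_eq hqn]; rw [hB_w] at hq; exact hq.1
    have hp2 : ((pI n q : Fin (n+1)) : ℕ) < aStat (⇑σ) (w+1) := by
      rw [pI_eq hqn]; rw [hB_w1] at hq; exact hq.2
    rw [wt_ins σ (pI n q) w hw2 hp1 hp2, pI_eq hqn]
    exact L1 h0 hw1 hw2 (Bf m n ⇑σ) hmono (by rw [hB_w, ← pI_eq hqn]; exact hp1)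
      (by rw [hB_w1, ← pI_eq hqn]; exact hp2)

end AscAux

namespace AscAux

open MvPolynomial Finset

def Gpoly (m n w : ℕ) : MvPolynomial (Fin m) ℚ :=
  ∑ σ ∈ avoiders m n,
    ∑ p ∈ Finset.Ico (Bf m n ⇑σ w) (Bf m n ⇑σ (w+1)), Hmon m (Bf m n ⇑σ) w p

lemma poly_identity (m n : ℕ) (hm : 2 ≤ m) (h0 : 0 < m) :
    Fpoly m (n+1) = X (vI h0 0) * Fpoly m n
      + ∑ w ∈ Finset.Ico 1 m, X (vI h0 (w-1)) * X (vI h0 w) * Gpoly m n w := by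
  rw [Fpoly_eq m (n+1), sum_ins (show 1 ≤ m by omega) (fun τ => wt m (Bf m (n+1) ⇑τ)),
    Finset.sum_congr rfl (fun σ _ => per_sigma h0 σ), Finset.sum_add_distrib,
    ← Finset.mul_sum, ← Fpoly_eq]
  congr 1
  rw [Finset.sum_comm]
  refine Finset.sum_congr rfl (fun w _ => ?_)
  rw [Gpoly, Finset.mul_sum]

lemma G_prop (m n : ℕ) (h0 : 0 < m) {w : ℕ} (hw1 : 1 ≤ w) (hw2 : w + 1 ≤ m) :
    (X (vI h0 (w-1)) - X (vI h0 w)) * Gpoly m n w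
      = Fpoly m n - MvPolynomial.aeval
          (fun k : Fin m => if k = vI h0 (w-1)
            then (X (vI h0 w) : MvPolynomial (Fin m) ℚ) else X k) (Fpoly m n) := by
  rw [Gpoly, Finset.mul_sum, Fpoly_eq, map_sum, ← Finset.sum_sub_distrib]
  refine Finset.sum_congr rfl (fun σ _ => ?_)
  exact L2 h0 hw1 hw2 (Bf m n ⇑σ) (Bf_mono m n ⇑σ (fun k => aStat_le_succ ⇑σ k))

lemma field_term (m n : ℕ) (h0 : 0 < m) {w : ℕ} (hw1 : 1 ≤ w) (hw2 : w + 1 ≤ m) :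
    (algebraMap (MvPolynomial (Fin m) ℚ) (FractionRing (MvPolynomial (Fin m) ℚ))
        (Fpoly m n)
      - algebraMap (MvPolynomial (Fin m) ℚ) (FractionRing (MvPolynomial (Fin m) ℚ))
          (MvPolynomial.aeval
            (fun k : Fin m => if k = vI h0 (w-1)
              then (X (vI h0 w) : MvPolynomial (Fin m) ℚ) else X k) (Fpoly m n)))
      / (algebraMap (MvPolynomial (Fin m) ℚ) (FractionRing (MvPolynomial (Fin m) ℚ))
          (X (vI h0 (w-1)))
        - algebraMap (MvPolynomial (Fin m) ℚ) (FractionRing (MvPolynomial (Fin m) ℚ))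
            (X (vI h0 w)))
    = algebraMap (MvPolynomial (Fin m) ℚ) (FractionRing (MvPolynomial (Fin m) ℚ))
        (Gpoly m n w) := by
  set φ := algebraMap (MvPolynomial (Fin m) ℚ) (FractionRing (MvPolynomial (Fin m) ℚ)) with hφ
  have hab : vI h0 (w-1) ≠ vI h0 w := by
    intro h
    have h1 := congrArg (fun x : Fin m => (x:ℕ)) h
    simp only [vI_eq h0 (show w-1 < m by omega), vI_eq h0 (show w < m by omega)] at h1
    omega
  have hXne : (X (vI h0 (w-1)) : MvPolynomial (Fin m) ℚ) - X (vI h0 w) ≠ 0 := by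
    rw [sub_ne_zero]
    intro h
    exact hab (MvPolynomial.X_injective h)
  have hinj : Function.Injective φ := IsFractionRing.injective _ _
  have hne : φ (X (vI h0 (w-1))) - φ (X (vI h0 w)) ≠ 0 := by
    rw [← map_sub]
    intro h
    exact hXne (hinj (by rw [h, map_zero]))
  rw [div_eq_iff hne, ← map_sub, ← G_prop m n h0 hw1 hw2, map_mul, map_sub, mul_comm]

lemma aStat_fin0 (f : Fin 0 → Fin 0) (j : ℕ) : aStat f (j+1) = 1 := by
  have h1 := aStat_pos f j
  have h2 := aStat_le_succ f (j+1)
  omega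

lemma Fpoly_zero (m : ℕ) (hm : 2 ≤ m) : Fpoly m 0 = 1 := by
  rw [Fpoly_eq]
  have h1 : avoiders m 0 = Finset.univ := by
    refine Finset.ext (fun τ => ?_)
    simp only [avoiders, Finset.mem_filter, Finset.mem_univ, true_and, iff_true]
    rintro ⟨s, _, _⟩
    exact (s ⟨0, by omega⟩).elim0
  rw [h1]
  have h2 : ∀ τ : Equiv.Perm (Fin 0), wt m (Bf m 0 ⇑τ) = 1 := by
    intro τ
    rw [wt]
    refine Finset.prod_eq_one (fun i _ => ?_)
    have e1 : Bf m 0 ⇑τ ((i:ℕ)+2) = 1 := by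
      rw [Bf]
      split_ifs with h
      · obtain ⟨j, hj⟩ : ∃ j, (i:ℕ)+2 = j+1 := ⟨(i:ℕ)+1, rfl⟩
        rw [hj, aStat_fin0]
      · rfl
    have e2 : Bf m 0 ⇑τ ((i:ℕ)+1) = 1 := by
      rw [Bf]
      split_ifs with h
      · rw [aStat_fin0]
      · rfl
    rw [e1, e2, Nat.sub_self, pow_zero]
  rw [Finset.sum_congr rfl (fun τ _ => h2 τ), Finset.sum_const]
  simp

end AscAux

set_option maxHeartbeats 2000000 in
open AscAux in
/-- The functional equation for permutations avoiding `12⋯m(m+1)`: `F_0 = 1` and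
`F_{n+1} = v_1 F_n + ∑_{j=2}^m v_{j−1}v_j (F_n − F_n|_{v_{j−1}←v_j})/(v_{j−1}−v_j)`
in the field of rational functions `ℚ(v_1,…,v_m)`. -/
theorem functional_equation_perm (m : ℕ) (hm : 2 ≤ m) :
    Fpoly m 0 = 1 ∧
    ∀ n : ℕ,
      algebraMap (MvPolynomial (Fin m) ℚ) (FractionRing (MvPolynomial (Fin m) ℚ))
          (Fpoly m (n + 1))
        = algebraMap (MvPolynomial (Fin m) ℚ) (FractionRing (MvPolynomial (Fin m) ℚ))
            (MvPolynomial.X ⟨0, by omega⟩) *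
          algebraMap (MvPolynomial (Fin m) ℚ) (FractionRing (MvPolynomial (Fin m) ℚ))
            (Fpoly m n)
          + ∑ j ∈ (Finset.Icc 2 m).attach,
              algebraMap (MvPolynomial (Fin m) ℚ) (FractionRing (MvPolynomial (Fin m) ℚ))
                  (MvPolynomial.X
                    (⟨j.1 - 2, by have := Finset.mem_Icc.mp j.2; omega⟩ : Fin m)) *
                algebraMap (MvPolynomial (Fin m) ℚ) (FractionRing (MvPolynomial (Fin m) ℚ))
                  (MvPolynomial.X
                    (⟨j.1 - 1, by have := Finset.mem_Icc.mp j.2; omega⟩ : Fin m)) *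
                ((algebraMap (MvPolynomial (Fin m) ℚ) (FractionRing (MvPolynomial (Fin m) ℚ))
                    (Fpoly m n)
                  - algebraMap (MvPolynomial (Fin m) ℚ) (FractionRing (MvPolynomial (Fin m) ℚ))
                      (MvPolynomial.aeval
                        (fun k : Fin m =>
                          if k = (⟨j.1 - 2, by have := Finset.mem_Icc.mp j.2; omega⟩ : Fin m)
                          then MvPolynomial.X
                            (⟨j.1 - 1, by have := Finset.mem_Icc.mp j.2; omega⟩ : Fin m)
                          else MvPolynomial.X k)
                        (Fpoly m n)))
                  / (algebraMap (MvPolynomial (Fin m) ℚ) (FractionRing (MvPolynomial (Fin m) ℚ))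
                      (MvPolynomial.X
                        (⟨j.1 - 2, by have := Finset.mem_Icc.mp j.2; omega⟩ : Fin m))
                    - algebraMap (MvPolynomial (Fin m) ℚ) (FractionRing (MvPolynomial (Fin m) ℚ))
                        (MvPolynomial.X
                          (⟨j.1 - 1, by have := Finset.mem_Icc.mp j.2; omega⟩ : Fin m)))) := by
  have h0 : 0 < m := by omega
  refine ⟨Fpoly_zero m hm, fun n => ?_⟩
  rw [poly_identity m n hm h0, map_add]
  congr 1
  · rw [map_mul]
    have e : ∀ pf : (0:ℕ) < m, (⟨0, pf⟩ : Fin m) = vI h0 0 := fun _ => Fin.ext (vI_eq h0 h0).symm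
    rw [e]
  · rw [map_sum]
    refine Finset.sum_bij
      (fun (w : ℕ) (hw : w ∈ Finset.Ico 1 m) =>
        (⟨w + 1, by rw [Finset.mem_Ico] at hw; rw [Finset.mem_Icc]; omega⟩ :
          {x // x ∈ Finset.Icc 2 m})) ?_ ?_ ?_ ?_
    · intro w hw
      exact Finset.mem_attach _ _
    · intro w hw w' hw' h
      have := congrArg (fun x : {x // x ∈ Finset.Icc 2 m} => x.1) h
      simpa using this
    · intro j _
      have hj := Finset.mem_Icc.mp j.2
      refine ⟨j.1 - 1, ?_, ?_⟩
      · rw [Finset.mem_Ico]; omega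
      · exact Subtype.ext (by simp; omega)
    · intro w hw
      rw [Finset.mem_Ico] at hw
      have hw1 : 1 ≤ w := hw.1
      have hw2 : w + 1 ≤ m := hw.2
      have ea : ∀ pf : w + 1 - 2 < m, (⟨w + 1 - 2, pf⟩ : Fin m) = vI h0 (w - 1) :=
        fun _ => Fin.ext (by
          rw [vI_eq h0 (show w - 1 < m by omega)]
          exact (by omega : w + 1 - 2 = w - 1))
      have eb : ∀ pf : w + 1 - 1 < m, (⟨w + 1 - 1, pf⟩ : Fin m) = vI h0 w :=
        fun _ => Fin.ext (by
          rw [vI_eq h0 (show w < m by omega)]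
          exact (by omega : w + 1 - 1 = w))
      rw [map_mul, map_mul]
      rw [ea, eb, field_term m n h0 hw1 hw2]
end
end

section
/- Let m ≥ 1 and let λ = (λ_1, …, λ_m) with λ_1 ≥ ⋯ ≥ λ_m ≥ 0 be an integer partition of weight n = λ_1 + ⋯ + λ_m. Then the number f^λ of standard Young tableaux of shape λ satisfies f^λ = n! · det(C)_{1≤i,j≤m}, where C is the m×m matrix over ℚ with C_{i,j} = 1/(λ_i − i + j)! if λ_i − i + j ≥ 0 and C_{i,j} = 0 otherwise. -/
open scoped Classical

noncomputable section

/-- The number `f^λ` of standard Young tableaux of shape `λ = (lam 0 ≥ ⋯ ≥ lam (m-1))`: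
fillings `T` of the cells `{(i,j) : j < lam i}` that biject onto `{1,…,n}`
(`n = ∑ lam i`), strictly increase along rows and columns, and (for
normalization) vanish outside the cells. -/
def sytCount (m : ℕ) (lam : Fin m → ℕ) : ℕ :=
  Nat.card {T : Fin m → ℕ → ℕ //
    Set.BijOn (fun p : Fin m × ℕ => T p.1 p.2)
      {p : Fin m × ℕ | p.2 < lam p.1} (Set.Icc 1 (∑ i, lam i)) ∧
    (∀ i : Fin m, ∀ j₁ j₂ : ℕ, j₁ < j₂ → j₂ < lam i → T i j₁ < T i j₂) ∧
    (∀ i₁ i₂ : Fin m, ∀ j : ℕ, i₁ < i₂ → j < lam i₂ → T i₁ j < T i₂ j) ∧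
    (∀ i : Fin m, ∀ j : ℕ, lam i ≤ j → T i j = 0)}




/-- `g k = 1/k!` for `k ≥ 0`, else `0`. -/
def gfact (k : ℤ) : ℚ := if 0 ≤ k then 1 / (Nat.factorial k.toNat : ℚ) else 0

lemma gfact_step (k : ℤ) : (k : ℚ) * gfact k = gfact (k - 1) := by
  unfold gfact
  rcases lt_trichotomy k 0 with h | h | h
  · rw [if_neg (by omega), if_neg (by omega), mul_zero]
  · subst h; norm_num
  · rw [if_pos (by omega), if_pos (by omega)]
    obtain ⟨n, rfl⟩ : ∃ n : ℕ, k = (n : ℤ) + 1 := ⟨(k - 1).toNat, by omega⟩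
    have : ((n:ℤ) + 1 - 1).toNat = n := by omega
    rw [this]
    have : ((n:ℤ) + 1).toNat = n + 1 := by omega
    rw [this, Nat.factorial_succ]
    have h1 : (Nat.factorial n : ℚ) ≠ 0 := Nat.cast_ne_zero.mpr (Nat.factorial_ne_zero n)
    push_cast
    field_simp

/-- Derivation identity: summing over rows `r` the determinant where row `r`'s
entries are multiplied by the column index. -/
lemma sum_det_updateRow_colmul (m : ℕ) (M : Matrix (Fin m) (Fin m) ℚ) :
    ∑ r : Fin m, (M.updateRow r (fun j => ((j : ℕ) : ℚ) * M r j)).det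
      = (∑ j : Fin m, ((j : ℕ) : ℚ)) * M.det := by
  have key : ∀ (r : Fin m) (σ : Equiv.Perm (Fin m)),
      (∏ i : Fin m, (M.updateRow r (fun j => ((j : ℕ) : ℚ) * M r j)) (σ i) i)
      = ((σ⁻¹ r : ℕ) : ℚ) * ∏ i : Fin m, M (σ i) i := by
    intro r σ
    set t := σ⁻¹ r with ht
    have hσt : σ t = r := by simp [ht]
    have hprod : ∀ i : Fin m, (M.updateRow r (fun j => ((j : ℕ) : ℚ) * M r j)) (σ i) i
        = if i = t then ((t : ℕ) : ℚ) * M (σ t) t else M (σ i) i := by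
      intro i
      by_cases hi : i = t
      · subst hi; rw [if_pos rfl, hσt, Matrix.updateRow_self]
      · rw [if_neg hi, Matrix.updateRow_ne]
        intro h; exact hi (by rw [← Equiv.Perm.inv_eq_iff_eq.mpr h.symm, ht])
    calc ∏ i : Fin m, (M.updateRow r (fun j => ((j : ℕ) : ℚ) * M r j)) (σ i) i
        = ∏ i : Fin m, Function.update (fun i : Fin m => M (σ i) i) t
            (((t : ℕ) : ℚ) * M (σ t) t) i :=
          Finset.prod_congr rfl (fun i _ => by rw [hprod i, Function.update_apply])
      _ = ((t : ℕ) : ℚ) * M (σ t) t * ∏ i ∈ Finset.univ.erase t, M (σ i) i := by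
          rw [Finset.prod_update_of_mem (Finset.mem_univ t), Finset.sdiff_singleton_eq_erase]
      _ = ((t : ℕ) : ℚ) * ∏ i : Fin m, M (σ i) i := by
          rw [mul_assoc, Finset.mul_prod_erase Finset.univ (fun i => M (σ i) i)
            (Finset.mem_univ t)]
  calc ∑ r : Fin m, (M.updateRow r (fun j => ((j : ℕ) : ℚ) * M r j)).det
      = ∑ r : Fin m, ∑ σ : Equiv.Perm (Fin m),
          (Equiv.Perm.sign σ : ℚ) * (((σ⁻¹ r : Fin m) : ℕ) : ℚ) * ∏ i, M (σ i) i := by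
        refine Finset.sum_congr rfl fun r _ => ?_
        rw [Matrix.det_apply']
        exact Finset.sum_congr rfl fun σ _ => by rw [key r σ]; ring
    _ = ∑ σ : Equiv.Perm (Fin m), (Equiv.Perm.sign σ : ℚ) *
          (∑ r : Fin m, (((σ⁻¹ r : Fin m) : ℕ) : ℚ)) * ∏ i, M (σ i) i := by
        rw [Finset.sum_comm]
        refine Finset.sum_congr rfl fun σ _ => ?_
        rw [← Finset.sum_mul, Finset.mul_sum]
    _ = (∑ j : Fin m, ((j : ℕ) : ℚ)) * M.det := by
        rw [Matrix.det_apply', Finset.mul_sum]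
        refine Finset.sum_congr rfl fun σ _ => ?_
        rw [Equiv.sum_comp (σ⁻¹ : Equiv.Perm (Fin m)) (fun j : Fin m => ((j : ℕ) : ℚ))]
        ring
def detF (m : ℕ) (a : Fin m → ℤ) : ℚ :=
  Matrix.det (Matrix.of fun i j : Fin m => gfact (a i + (j : ℕ)))

lemma detF_rec (m : ℕ) (a : Fin m → ℤ) :
    ∑ r : Fin m, detF m (Function.update a r (a r - 1))
      = ((∑ i : Fin m, (a i : ℚ)) + ∑ j : Fin m, ((j : ℕ) : ℚ)) * detF m a := by
  set M : Matrix (Fin m) (Fin m) ℚ := Matrix.of fun i j : Fin m => gfact (a i + (j : ℕ)) with hM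
  have hrow : ∀ r : Fin m, detF m (Function.update a r (a r - 1))
      = (M.updateRow r (((a r : ℚ) • M r) + fun j : Fin m => ((j : ℕ) : ℚ) * M r j)).det := by
    intro r
    unfold detF
    congr 1
    ext i j
    by_cases hi : i = r
    · subst hi
      rw [Matrix.updateRow_self]
      simp only [Function.update_self, Pi.add_apply, Pi.smul_apply, smul_eq_mul, hM,
        Matrix.of_apply]
      rw [← add_mul]
      have : ((a i : ℚ) + ((j : ℕ) : ℚ)) = ((a i + (j : ℕ) : ℤ) : ℚ) := by push_cast; ring
      rw [this, gfact_step]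
      congr 1
      ring
    · simp only [Matrix.of_apply, Matrix.updateRow_ne hi, Function.update_of_ne hi, hM]
  calc ∑ r : Fin m, detF m (Function.update a r (a r - 1))
      = ∑ r : Fin m, ((a r : ℚ) * M.det
          + (M.updateRow r (fun j => ((j : ℕ) : ℚ) * M r j)).det) := by
        refine Finset.sum_congr rfl fun r _ => ?_
        rw [hrow r, Matrix.det_updateRow_add, Matrix.det_updateRow_smul,
          Matrix.updateRow_eq_self]
    _ = ((∑ i : Fin m, (a i : ℚ)) + ∑ j : Fin m, ((j : ℕ) : ℚ)) * M.det := by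
        rw [Finset.sum_add_distrib, sum_det_updateRow_colmul, ← Finset.sum_mul, add_mul]

def IsSYT (m : ℕ) (lam : Fin m → ℕ) (T : Fin m → ℕ → ℕ) : Prop :=
  Set.BijOn (fun p : Fin m × ℕ => T p.1 p.2)
      {p : Fin m × ℕ | p.2 < lam p.1} (Set.Icc 1 (∑ i, lam i)) ∧
    (∀ i : Fin m, ∀ j₁ j₂ : ℕ, j₁ < j₂ → j₂ < lam i → T i j₁ < T i j₂) ∧
    (∀ i₁ i₂ : Fin m, ∀ j : ℕ, i₁ < i₂ → j < lam i₂ → T i₁ j < T i₂ j) ∧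
    (∀ i : Fin m, ∀ j : ℕ, lam i ≤ j → T i j = 0)

def SytCorner (m : ℕ) (lam : Fin m → ℕ) (c : Fin m) : Prop :=
  0 < lam c ∧ ∀ k : Fin m, c < k → lam k < lam c

/-- the shape with one box removed at the end of row `c` -/
def decRow (m : ℕ) (lam : Fin m → ℕ) (c : Fin m) : Fin m → ℕ :=
  Function.update lam c (lam c - 1)

lemma decRow_apply (m : ℕ) (lam : Fin m → ℕ) (c k : Fin m) :
    decRow m lam c k = if k = c then lam c - 1 else lam k := Function.update_apply lam c _ k

lemma decRow_le (m : ℕ) (lam : Fin m → ℕ) (c k : Fin m) : decRow m lam c k ≤ lam k := by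
  rw [decRow_apply]; rcases eq_or_ne k c with rfl | h
  · simp
  · simp [h]

lemma sum_decRow (m : ℕ) (lam : Fin m → ℕ) (c : Fin m) (hc : 0 < lam c) :
    ∑ i, decRow m lam c i = (∑ i, lam i) - 1 := by
  unfold decRow
  rw [Finset.sum_update_of_mem (Finset.mem_univ c)]
  rw [← Finset.sum_erase_add Finset.univ lam (Finset.mem_univ c), Finset.sdiff_singleton_eq_erase]
  omega

lemma decRow_antitone (m : ℕ) (lam : Fin m → ℕ)
    (hlam : ∀ i j : Fin m, i ≤ j → lam j ≤ lam i) (c : Fin m) (hc : SytCorner m lam c) :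
    ∀ i j : Fin m, i ≤ j → decRow m lam c j ≤ decRow m lam c i := by
  intro i j hij
  rw [decRow_apply, decRow_apply]
  by_cases hi : i = c <;> by_cases hj : j = c
  · simp [hi, hj]
  · rw [if_neg hj, if_pos hi]
    have h1 : c ≤ j := hi ▸ hij
    have h2 := hc.2 j (lt_of_le_of_ne h1 (Ne.symm hj))
    omega
  · rw [if_pos hj, if_neg hi]
    have h1 : i ≤ c := hj ▸ hij
    have h2 := hlam i c h1
    omega
  · rw [if_neg hj, if_neg hi]
    exact hlam i j hij

lemma cells_decRow (m : ℕ) (lam : Fin m → ℕ) (c : Fin m) (hc : 0 < lam c) :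
    {p : Fin m × ℕ | p.2 < decRow m lam c p.1}
      = {p : Fin m × ℕ | p.2 < lam p.1} \ {(c, lam c - 1)} := by
  ext ⟨i, j⟩
  simp only [Set.mem_setOf_eq, Set.mem_diff, Set.mem_singleton_iff, Prod.mk.injEq, decRow_apply]
  constructor
  · intro h
    split at h
    · next hi => subst hi; exact ⟨by omega, by intro ⟨_, h2⟩; omega⟩
    · next hi => exact ⟨h, by intro ⟨h1, _⟩; exact hi h1⟩
  · rintro ⟨h1, h2⟩
    split
    · next hi => subst hi; have : j ≠ lam i - 1 := fun hj => h2 ⟨rfl, hj⟩; omega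
    · exact h1

/-- Existence of the corner holding the top value `n`. -/
lemma exists_top (m : ℕ) (lam : Fin m → ℕ)
    (hlam : ∀ i j : Fin m, i ≤ j → lam j ≤ lam i) (T : Fin m → ℕ → ℕ)
    (h : IsSYT m lam T) (hn : 0 < ∑ i, lam i) :
    ∃ c : Fin m, SytCorner m lam c ∧ T c (lam c - 1) = ∑ i, lam i := by
  set n := ∑ i, lam i with hn'
  obtain ⟨⟨i, j⟩, hp, hTp⟩ := h.1.2.2 (Set.mem_Icc.mpr ⟨hn, le_rfl⟩)
  simp only [Set.mem_setOf_eq] at hp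
  simp only at hTp
  have hji : j = lam i - 1 := by
    by_contra hne
    have hj1 : j + 1 < lam i := by omega
    have h1 : T i j < T i (j + 1) := h.2.1 i j (j + 1) (by omega) hj1
    have h2 : T i (j + 1) ∈ Set.Icc 1 n :=
      h.1.1 (show ((i, j+1) : Fin m × ℕ) ∈ {p : Fin m × ℕ | p.2 < lam p.1} from hj1)
    rw [hTp] at h1
    exact absurd (Set.mem_Icc.mp h2).2 (by omega)
  refine ⟨i, ⟨by omega, fun k hk => ?_⟩, by rw [← hji]; exact hTp⟩
  by_contra hcon
  push_neg at hcon
  have hjk : j < lam k := by omega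
  have h1 : T i j < T k j := h.2.2.1 i k j hk hjk
  have h2 : T k j ∈ Set.Icc 1 n :=
    h.1.1 (show ((k, j) : Fin m × ℕ) ∈ {p : Fin m × ℕ | p.2 < lam p.1} from hjk)
  rw [hTp] at h1
  exact absurd (Set.mem_Icc.mp h2).2 (by omega)

lemma syt_top_unique (m : ℕ) (lam : Fin m → ℕ) (T : Fin m → ℕ → ℕ) (h : IsSYT m lam T)
    (c₁ c₂ : Fin m) (h₁ : 0 < lam c₁) (h₂ : 0 < lam c₂)
    (e₁ : T c₁ (lam c₁ - 1) = ∑ i, lam i) (e₂ : T c₂ (lam c₂ - 1) = ∑ i, lam i) :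
    c₁ = c₂ := by
  have := h.1.2.1 (show ((c₁, lam c₁ - 1) : Fin m × ℕ) ∈ _ from by
      simp only [Set.mem_setOf_eq]; omega)
    (show ((c₂, lam c₂ - 1) : Fin m × ℕ) ∈ _ from by
      simp only [Set.mem_setOf_eq]; omega)
    (by simpa using e₁.trans e₂.symm)
  exact congrArg Prod.fst this

lemma bijOn_diff {α β : Type*} {f : α → β} {s : Set α} {t : Set β} (h : Set.BijOn f s t)
    {q : α} (hq : q ∈ s) : Set.BijOn f (s \ {q}) (t \ {f q}) := by
  refine ⟨fun p hp => ⟨h.1 hp.1, fun he => hp.2 (h.2.1 hp.1 hq he)⟩,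
    h.2.1.mono Set.diff_subset, ?_⟩
  intro y hy
  obtain ⟨p, hp, rfl⟩ := h.2.2 hy.1
  exact ⟨p, ⟨hp, fun he => hy.2 (congrArg f he)⟩, rfl⟩

lemma icc_pred (n : ℕ) (hn : 0 < n) :
    Set.Icc (1:ℕ) (n - 1) = Set.Icc 1 n \ {n} := by
  ext x; simp only [Set.mem_Icc, Set.mem_diff, Set.mem_singleton_iff]; omega

lemma isSYT_remove (m : ℕ) (lam : Fin m → ℕ)
    (c : Fin m) (hc : SytCorner m lam c) (T : Fin m → ℕ → ℕ) (h : IsSYT m lam T)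
    (htop : T c (lam c - 1) = ∑ i, lam i) :
    IsSYT m (decRow m lam c) (fun i j => if i = c ∧ j = lam c - 1 then 0 else T i j) := by
  have hn : 0 < ∑ i, lam i := lt_of_lt_of_le hc.1
    (Finset.single_le_sum (f := lam) (fun _ _ => Nat.zero_le _) (Finset.mem_univ c))
  have hsum : ∑ i, decRow m lam c i = (∑ i, lam i) - 1 := sum_decRow m lam c hc.1
  have hcells := cells_decRow m lam c hc.1
  have hEq : ∀ p : Fin m × ℕ, p.2 < decRow m lam c p.1 → ¬(p.1 = c ∧ p.2 = lam c - 1) := by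
    intro p hij hand
    rw [hand.1, decRow_apply, if_pos rfl] at hij
    have := hand.2
    omega
  refine ⟨?_, ?_, ?_, ?_⟩
  · rw [hsum, icc_pred _ hn, hcells]
    have hqmem : ((c, lam c - 1) : Fin m × ℕ) ∈ {p : Fin m × ℕ | p.2 < lam p.1} := by
      have h7 : lam c - 1 < lam c := by have := hc.1; omega
      exact h7
    have hb := bijOn_diff h.1 hqmem
    rw [show T ((c, lam c - 1) : Fin m × ℕ).1 ((c, lam c - 1) : Fin m × ℕ).2 = ∑ i, lam i
      from htop] at hb
    refine hb.congr fun p hp => ?_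
    have hpd : p ∈ {p : Fin m × ℕ | p.2 < decRow m lam c p.1} := by rw [hcells]; exact hp
    show T p.1 p.2 = if p.1 = c ∧ p.2 = lam c - 1 then 0 else T p.1 p.2
    exact (if_neg (hEq p hpd)).symm
  · intro i j₁ j₂ hj hj2
    have h1 : ¬(i = c ∧ j₁ = lam c - 1) := hEq (i, j₁) (lt_trans hj hj2)
    have h2 : ¬(i = c ∧ j₂ = lam c - 1) := hEq (i, j₂) hj2
    simp only [if_neg h1, if_neg h2]
    exact h.2.1 i j₁ j₂ hj (lt_of_lt_of_le hj2 (decRow_le m lam c i))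
  · intro i₁ i₂ j hi hj
    have h2 : ¬(i₂ = c ∧ j = lam c - 1) := hEq (i₂, j) hj
    have h1 : ¬(i₁ = c ∧ j = lam c - 1) := by
      intro hand
      have hi2c : i₂ ≠ c := fun he => (ne_of_lt hi) (hand.1.trans he.symm)
      have hd : decRow m lam c i₂ = lam i₂ := by rw [decRow_apply, if_neg hi2c]
      have hcc : c < i₂ := by rw [← hand.1]; exact hi
      have hlt := hc.2 i₂ hcc
      have hj2 := hand.2
      rw [hd] at hj
      omega
    simp only [if_neg h1, if_neg h2]
    exact h.2.2.1 i₁ i₂ j hi (lt_of_lt_of_le hj (decRow_le m lam c i₂))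
  · intro i j hij
    by_cases hq : i = c ∧ j = lam c - 1
    · simp [hq]
    · simp only [if_neg hq]
      apply h.2.2.2
      rcases eq_or_ne i c with rfl | hic
      · rw [decRow_apply, if_pos rfl] at hij
        have : j ≠ lam i - 1 := fun hj => hq ⟨rfl, hj⟩
        omega
      · rwa [decRow_apply, if_neg hic] at hij

lemma isSYT_add (m : ℕ) (lam : Fin m → ℕ)
    (hlam : ∀ i j : Fin m, i ≤ j → lam j ≤ lam i)
    (c : Fin m) (hc : SytCorner m lam c) (T' : Fin m → ℕ → ℕ)
    (h : IsSYT m (decRow m lam c) T') :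
    IsSYT m lam (fun i j => if i = c ∧ j = lam c - 1 then ∑ i, lam i else T' i j) := by
  have hn : 0 < ∑ i, lam i := lt_of_lt_of_le hc.1
    (Finset.single_le_sum (f := lam) (fun _ _ => Nat.zero_le _) (Finset.mem_univ c))
  have hsum : ∑ i, decRow m lam c i = (∑ i, lam i) - 1 := sum_decRow m lam c hc.1
  have hEq : ∀ p : Fin m × ℕ, p.2 < decRow m lam c p.1 → ¬(p.1 = c ∧ p.2 = lam c - 1) := by
    intro p hij hand
    rw [hand.1, decRow_apply, if_pos rfl] at hij
    have := hand.2
    omega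
  have hmem' : ∀ i : Fin m, ∀ j : ℕ, j < decRow m lam c i →
      1 ≤ T' i j ∧ T' i j ≤ (∑ i, lam i) - 1 := by
    intro i j hp
    have := h.1.1 (show ((i, j) : Fin m × ℕ) ∈
      {q : Fin m × ℕ | q.2 < decRow m lam c q.1} from hp)
    rw [hsum] at this
    exact Set.mem_Icc.mp this
  have hcell' : ∀ i : Fin m, ∀ j : ℕ, j < lam i → ¬(i = c ∧ j = lam c - 1) →
      j < decRow m lam c i := by
    intro i j hj hq
    rcases eq_or_ne i c with rfl | hic
    · rw [decRow_apply, if_pos rfl]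
      have : j ≠ lam i - 1 := fun he => hq ⟨rfl, he⟩
      omega
    · rw [decRow_apply, if_neg hic]; exact hj
  refine ⟨⟨?_, ?_, ?_⟩, ?_, ?_, ?_⟩
  · -- MapsTo
    rintro ⟨i, j⟩ hp
    have hp' : j < lam i := hp
    show (if i = c ∧ j = lam c - 1 then ∑ i, lam i else T' i j) ∈ Set.Icc 1 (∑ i, lam i)
    by_cases hq : i = c ∧ j = lam c - 1
    · rw [if_pos hq]; exact Set.mem_Icc.mpr ⟨hn, le_rfl⟩
    · rw [if_neg hq]
      have := hmem' i j (hcell' i j hp' hq)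
      exact Set.mem_Icc.mpr ⟨this.1, by omega⟩
  · -- InjOn
    rintro ⟨i₁, j₁⟩ hp₁ ⟨i₂, j₂⟩ hp₂ he
    have hp₁' : j₁ < lam i₁ := hp₁
    have hp₂' : j₂ < lam i₂ := hp₂
    have he' : (if i₁ = c ∧ j₁ = lam c - 1 then ∑ i, lam i else T' i₁ j₁)
        = (if i₂ = c ∧ j₂ = lam c - 1 then ∑ i, lam i else T' i₂ j₂) := he
    by_cases hq₁ : i₁ = c ∧ j₁ = lam c - 1 <;> by_cases hq₂ : i₂ = c ∧ j₂ = lam c - 1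
    · exact Prod.ext_iff.mpr ⟨hq₁.1.trans hq₂.1.symm, hq₁.2.trans hq₂.2.symm⟩
    · exfalso
      have hb := (hmem' i₂ j₂ (hcell' i₂ j₂ hp₂' hq₂)).2
      rw [if_pos hq₁, if_neg hq₂] at he'
      omega
    · exfalso
      have hb := (hmem' i₁ j₁ (hcell' i₁ j₁ hp₁' hq₁)).2
      rw [if_neg hq₁, if_pos hq₂] at he'
      omega
    · rw [if_neg hq₁, if_neg hq₂] at he'
      exact h.1.2.1
        (show ((i₁, j₁) : Fin m × ℕ) ∈ {q : Fin m × ℕ | q.2 < decRow m lam c q.1} from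
          hcell' i₁ j₁ hp₁' hq₁)
        (show ((i₂, j₂) : Fin m × ℕ) ∈ {q : Fin m × ℕ | q.2 < decRow m lam c q.1} from
          hcell' i₂ j₂ hp₂' hq₂) he'
  · -- SurjOn
    intro y hy
    rcases eq_or_ne y (∑ i, lam i) with rfl | hyn
    · refine ⟨(c, lam c - 1), ?_, ?_⟩
      · have h7 : lam c - 1 < lam c := by have := hc.1; omega
        exact h7
      · simp
    · have hy' : y ∈ Set.Icc 1 ((∑ i, lam i) - 1) := by
        rw [Set.mem_Icc] at hy ⊢
        omega
      rw [← hsum] at hy'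
      obtain ⟨p, hp, hfp⟩ := h.1.2.2 hy'
      have hpd : p.2 < decRow m lam c p.1 := hp
      refine ⟨p, lt_of_lt_of_le hpd (decRow_le m lam c p.1), ?_⟩
      show (if p.1 = c ∧ p.2 = lam c - 1 then ∑ i, lam i else T' p.1 p.2) = y
      rw [if_neg (hEq p hpd)]
      exact hfp
  · -- rows
    intro i j₁ j₂ hj hj2
    by_cases hq₂ : i = c ∧ j₂ = lam c - 1
    · have h1 : ¬(i = c ∧ j₁ = lam c - 1) := by
        intro hand
        have := hand.2
        have := hq₂.2
        omega
      have hpd : j₁ < decRow m lam c i := by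
        rw [decRow_apply, if_pos hq₂.1]
        have := hq₂.2
        omega
      have := (hmem' i j₁ hpd).2
      simp only [if_neg h1, if_pos hq₂]
      omega
    · have h1 : ¬(i = c ∧ j₁ = lam c - 1) := by
        intro hand
        have h3 : j₂ ≠ lam c - 1 := fun he => hq₂ ⟨hand.1, he⟩
        have h4 := hand.2
        have h5 : j₂ < lam c := by rw [← hand.1]; exact hj2
        omega
      have hpd₂ : j₂ < decRow m lam c i := hcell' i j₂ hj2 hq₂
      simp only [if_neg h1, if_neg hq₂]
      exact h.2.1 i j₁ j₂ hj hpd₂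
  · -- cols
    intro i₁ i₂ j hi hj
    by_cases hq₂ : i₂ = c ∧ j = lam c - 1
    · have h1 : ¬(i₁ = c ∧ j = lam c - 1) := by
        intro hand
        exact (ne_of_lt hi) (hand.1.trans hq₂.1.symm)
      have hpd : j < decRow m lam c i₁ := by
        have hic : i₁ ≠ c := fun he => h1 ⟨he, hq₂.2⟩
        rw [decRow_apply, if_neg hic]
        have h6 := hlam i₁ i₂ (le_of_lt hi)
        omega
      have := (hmem' i₁ j hpd).2
      simp only [if_neg h1, if_pos hq₂]
      omega
    · have h1 : ¬(i₁ = c ∧ j = lam c - 1) := by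
        intro hand
        have hcc : c < i₂ := by rw [← hand.1]; exact hi
        have := hc.2 i₂ hcc
        have := hand.2
        omega
      have hpd₂ : j < decRow m lam c i₂ := hcell' i₂ j hj hq₂
      simp only [if_neg h1, if_neg hq₂]
      exact h.2.2.1 i₁ i₂ j hi hpd₂
  · -- vanishing
    intro i j hij
    have hq : ¬(i = c ∧ j = lam c - 1) := by
      intro hand
      have : lam c ≤ j := by rw [← hand.1]; exact hij
      have := hand.2
      have := hc.1
      omega
    simp only [if_neg hq]
    exact h.2.2.2 i j (le_trans (decRow_le m lam c i) hij)

lemma syt_finite (m : ℕ) (lam : Fin m → ℕ) : Finite {T : Fin m → ℕ → ℕ // IsSYT m lam T} := by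
  apply Finite.of_injective (f := fun T : {T : Fin m → ℕ → ℕ // IsSYT m lam T} =>
    (fun i (j : Fin (lam i)) => (⟨T.1 i (j : ℕ), Nat.lt_succ_of_le
        ((Set.mem_Icc.mp (T.2.1.1 (show ((i, (j : ℕ)) : Fin m × ℕ) ∈
          {p : Fin m × ℕ | p.2 < lam p.1} from j.2))).2)⟩ : Fin ((∑ i, lam i) + 1))
      : ∀ i : Fin m, Fin (lam i) → Fin ((∑ i, lam i) + 1)))
  rintro ⟨T₁, h₁⟩ ⟨T₂, h₂⟩ he
  simp only at he
  refine Subtype.ext (funext fun i => funext fun j => ?_)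
  show T₁ i j = T₂ i j
  by_cases hj : j < lam i
  · exact congrArg Fin.val (congrFun (congrFun he i) ⟨j, hj⟩)
  · rw [h₁.2.2.2 i j (by omega), h₂.2.2.2 i j (by omega)]

lemma nat_card_sigma {ι : Type*} [Fintype ι] (f : ι → Type*) [hf : ∀ i, Finite (f i)] :
    Nat.card (Σ i, f i) = ∑ i, Nat.card (f i) := by
  letI : ∀ i, Fintype (f i) := fun i => Fintype.ofFinite (f i)
  simp only [Nat.card_eq_fintype_card]
  exact Fintype.card_sigma

/-- The backward map: add the top entry at corner `c`. -/
def sytBack (m : ℕ) (lam : Fin m → ℕ)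
    (hlam : ∀ i j : Fin m, i ≤ j → lam j ≤ lam i) :
    (Σ c : {c : Fin m // SytCorner m lam c},
      {T' : Fin m → ℕ → ℕ // IsSYT m (decRow m lam c.1) T'}) →
    {T : Fin m → ℕ → ℕ // IsSYT m lam T} :=
  fun x => ⟨fun i j => if i = x.1.1 ∧ j = lam x.1.1 - 1 then ∑ i, lam i else x.2.1 i j,
    isSYT_add m lam hlam x.1.1 x.1.2 x.2.1 x.2.2⟩

lemma sytBack_bijective (m : ℕ) (lam : Fin m → ℕ)
    (hlam : ∀ i j : Fin m, i ≤ j → lam j ≤ lam i) (hn : 0 < ∑ i, lam i) :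
    Function.Bijective (sytBack m lam hlam) := by
  constructor
  · rintro ⟨⟨c₁, hc₁⟩, ⟨T₁, hT₁⟩⟩ ⟨⟨c₂, hc₂⟩, ⟨T₂, hT₂⟩⟩ he
    have he' : (fun i j => if i = c₁ ∧ j = lam c₁ - 1 then ∑ i, lam i else T₁ i j)
        = (fun i j => if i = c₂ ∧ j = lam c₂ - 1 then ∑ i, lam i else T₂ i j) :=
      congrArg Subtype.val he
    have htop₁ : (fun i j => if i = c₁ ∧ j = lam c₁ - 1 then ∑ i, lam i else T₁ i j)
        c₁ (lam c₁ - 1) = ∑ i, lam i := by simp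
    have htop₂ : (fun i j => if i = c₁ ∧ j = lam c₁ - 1 then ∑ i, lam i else T₁ i j)
        c₂ (lam c₂ - 1) = ∑ i, lam i := by rw [he']; simp
    have hcc : c₁ = c₂ := syt_top_unique m lam _
      (isSYT_add m lam hlam c₁ hc₁ T₁ hT₁) c₁ c₂ hc₁.1 hc₂.1 htop₁ htop₂
    subst hcc
    have hTT : T₁ = T₂ := by
      funext i j
      by_cases hq : i = c₁ ∧ j = lam c₁ - 1
      · -- both are zero there, by the vanishing property for the decreased shape
        have hd : decRow m lam c₁ c₁ ≤ lam c₁ - 1 := by rw [decRow_apply, if_pos rfl]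
        rw [hq.1, hq.2]
        rw [hT₁.2.2.2 c₁ (lam c₁ - 1) hd, hT₂.2.2.2 c₁ (lam c₁ - 1) hd]
      · have := congrFun (congrFun he' i) j
        rwa [if_neg hq, if_neg hq] at this
    subst hTT
    rfl
  · rintro ⟨T, hT⟩
    obtain ⟨c, hc, htop⟩ := exists_top m lam hlam T hT hn
    refine ⟨⟨⟨c, hc⟩, ⟨fun i j => if i = c ∧ j = lam c - 1 then 0 else T i j,
      isSYT_remove m lam c hc T hT htop⟩⟩, ?_⟩
    apply Subtype.ext
    show (fun i j => if i = c ∧ j = lam c - 1 then ∑ i, lam i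
      else if i = c ∧ j = lam c - 1 then 0 else T i j) = T
    funext i j
    by_cases hq : i = c ∧ j = lam c - 1
    · rw [if_pos hq, hq.1, hq.2, htop]
    · rw [if_neg hq, if_neg hq]

lemma sytCard_rec (m : ℕ) (lam : Fin m → ℕ)
    (hlam : ∀ i j : Fin m, i ≤ j → lam j ≤ lam i) (hn : 0 < ∑ i, lam i) :
    Nat.card {T : Fin m → ℕ → ℕ // IsSYT m lam T}
      = ∑ c ∈ Finset.univ.filter (fun c : Fin m => SytCorner m lam c),
          Nat.card {T' : Fin m → ℕ → ℕ // IsSYT m (decRow m lam c) T'} := by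
  haveI : ∀ c : {c : Fin m // SytCorner m lam c},
      Finite {T' : Fin m → ℕ → ℕ // IsSYT m (decRow m lam c.1) T'} :=
    fun c => syt_finite m (decRow m lam c.1)
  rw [← Nat.card_eq_of_bijective _ (sytBack_bijective m lam hlam hn)]
  rw [nat_card_sigma]
  exact (Finset.sum_subtype _ (by simp) fun c : Fin m =>
    Nat.card {T' : Fin m → ℕ → ℕ // IsSYT m (decRow m lam c) T'}).symm

lemma sytCount_zero (m : ℕ) (lam : Fin m → ℕ) (h0 : ∀ i, lam i = 0) :
    Nat.card {T : Fin m → ℕ → ℕ // IsSYT m lam T} = 1 := by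
  have hsum : ∑ i, lam i = 0 := by simp [h0]
  have hT0 : IsSYT m lam (fun _ _ => 0) := by
    refine ⟨?_, ?_, ?_, ?_⟩
    · have hdom : {p : Fin m × ℕ | p.2 < lam p.1} = ∅ := by
        ext p; simp [h0]
      have hcod : Set.Icc 1 (∑ i, lam i) = (∅ : Set ℕ) := by
        rw [hsum]; ext x; simp only [Set.mem_Icc, Set.mem_empty_iff_false, iff_false]; omega
      rw [hdom, hcod]
      exact ⟨fun p hp => hp.elim, fun p hp => hp.elim, fun y hy => hy.elim⟩
    · intro i j₁ j₂ _ h2; rw [h0 i] at h2; omega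
    · intro i₁ i₂ j _ h2; rw [h0 i₂] at h2; omega
    · intro _ _ _; rfl
  haveI : Unique {T : Fin m → ℕ → ℕ // IsSYT m lam T} := by
    refine ⟨⟨⟨fun _ _ => 0, hT0⟩⟩, ?_⟩
    rintro ⟨T, hT⟩
    refine Subtype.ext (funext fun i => funext fun j => ?_)
    exact hT.2.2.2 i j (by rw [h0 i]; omega)
  exact Nat.card_unique

lemma gfact_neg (k : ℤ) (h : k < 0) : gfact k = 0 := if_neg (not_le.mpr h)

lemma detF_base (m : ℕ) : detF m (fun i : Fin m => -((i : ℕ) : ℤ)) = 1 := by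
  unfold detF
  rw [Matrix.det_of_upperTriangular (M := Matrix.of
    fun i j : Fin m => gfact (-((i : ℕ) : ℤ) + (j : ℕ)))]
  · refine Finset.prod_eq_one fun i _ => ?_
    simp only [Matrix.of_apply, neg_add_cancel]
    unfold gfact
    norm_num
  · intro i j hij
    simp only [id_eq] at hij
    simp only [Matrix.of_apply]
    apply gfact_neg
    have : (j : ℕ) < (i : ℕ) := hij
    omega

/-- the main induction -/
lemma syt_main : ∀ (N m : ℕ) (lam : Fin m → ℕ),
    (∀ i j : Fin m, i ≤ j → lam j ≤ lam i) → (∑ i, lam i) = N →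
    (Nat.card {T : Fin m → ℕ → ℕ // IsSYT m lam T} : ℚ)
      = (Nat.factorial N : ℚ) * detF m (fun i => (lam i : ℤ) - ((i : ℕ) : ℤ)) := by
  intro N
  induction N using Nat.strong_induction_on with
  | _ N IH =>
    intro m lam hlam hsum
    rcases Nat.eq_zero_or_pos N with rfl | hN
    · have h0 : ∀ i, lam i = 0 := fun i =>
        Finset.sum_eq_zero_iff.mp hsum i (Finset.mem_univ i)
      rw [sytCount_zero m lam h0]
      have he : (fun i : Fin m => (lam i : ℤ) - ((i : ℕ) : ℤ))
          = fun i : Fin m => -((i : ℕ) : ℤ) := funext fun i => by rw [h0 i]; simp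
      rw [he, detF_base, Nat.factorial_zero]
      norm_num
    · obtain ⟨N', rfl⟩ : ∃ N', N = N' + 1 := ⟨N - 1, by omega⟩
      set a : Fin m → ℤ := fun i => (lam i : ℤ) - ((i : ℕ) : ℤ) with ha
      have hsum' : 0 < ∑ i, lam i := by omega
      -- coefficient computation
      have hco : ((∑ i : Fin m, (a i : ℚ)) + ∑ j : Fin m, ((j : ℕ) : ℚ))
          = ((N' + 1 : ℕ) : ℚ) := by
        rw [← hsum]
        push_cast [ha]
        rw [Finset.sum_sub_distrib]
        ring
      -- update = decRow for corners
      have hupdate : ∀ c : Fin m, SytCorner m lam c →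
          Function.update a c (a c - 1)
            = fun i => ((decRow m lam c i : ℤ) - ((i : ℕ) : ℤ)) := by
        intro c hc
        funext i
        rcases eq_or_ne i c with rfl | hic
        · rw [Function.update_self, decRow_apply, if_pos rfl, ha]
          have := hc.1
          push_cast [Nat.cast_sub (by omega : 1 ≤ lam i)]
          ring
        · rw [Function.update_of_ne hic, decRow_apply, if_neg hic]
      -- vanishing for non-corners
      have hzero : ∀ c : Fin m, ¬SytCorner m lam c →
          detF m (Function.update a c (a c - 1)) = 0 := by
        intro c hnc
        unfold SytCorner at hnc
        push_neg at hnc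
        have hrows : ∀ c' : Fin m, c ≠ c' →
            Function.update a c (a c - 1) c = Function.update a c (a c - 1) c' →
            detF m (Function.update a c (a c - 1)) = 0 := by
          intro c' hne hvals
          apply Matrix.det_zero_of_row_eq hne
          funext j
          simp only [Matrix.of_apply]
          rw [hvals]
        by_cases h0 : 0 < lam c
        · obtain ⟨k, hk, hge⟩ := hnc h0
          have hkk : (c : ℕ) + 1 ≤ (k : ℕ) := hk
          have hc' : (c : ℕ) + 1 < m := lt_of_le_of_lt hkk k.2
          set c' : Fin m := ⟨(c : ℕ) + 1, hc'⟩ with hc'def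
          have hle1 : lam c' ≤ lam c := hlam c c' (by
            show (c : ℕ) ≤ (c' : ℕ); simp [hc'def])
          have hle2 : lam c ≤ lam c' := le_trans hge (hlam c' k (by
            show (c' : ℕ) ≤ (k : ℕ); simp [hc'def]; omega))
          have hlamc : lam c' = lam c := le_antisymm hle1 hle2
          refine hrows c' (Fin.ne_of_val_ne (show (c : ℕ) ≠ (c : ℕ) + 1 from by omega)) ?_
          rw [Function.update_self,
            Function.update_of_ne (Fin.ne_of_val_ne (show (c : ℕ) + 1 ≠ (c : ℕ) from by omega))]
          show (lam c : ℤ) - ((c : ℕ) : ℤ) - 1 = (lam c' : ℤ) - (((c : ℕ) + 1 : ℕ) : ℤ)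
          rw [hlamc]
          push_cast
          ring
        · have h0' : lam c = 0 := by omega
          by_cases hlast : (c : ℕ) + 1 < m
          · set c' : Fin m := ⟨(c : ℕ) + 1, hlast⟩ with hc'def
            have hle1 : lam c' ≤ lam c := hlam c c' (by
              show (c : ℕ) ≤ (c' : ℕ); simp [hc'def])
            have hlamc : lam c' = 0 := by omega
            refine hrows c' (Fin.ne_of_val_ne (show (c : ℕ) ≠ (c : ℕ) + 1 from by omega)) ?_
            rw [Function.update_self,
              Function.update_of_ne (Fin.ne_of_val_ne (show (c : ℕ) + 1 ≠ (c : ℕ) from by omega))]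
            show (lam c : ℤ) - ((c : ℕ) : ℤ) - 1 = (lam c' : ℤ) - (((c : ℕ) + 1 : ℕ) : ℤ)
            rw [hlamc, h0']
            push_cast
            ring
          · apply Matrix.det_eq_zero_of_row_eq_zero c
            intro j
            simp only [Matrix.of_apply]
            apply gfact_neg
            rw [Function.update_self, ha]
            have hj : (j : ℕ) < m := j.2
            have hcm : (c : ℕ) + 1 = m := by have := c.2; omega
            simp only [h0']
            push_cast
            omega
      -- the recursion
      have hrec := detF_rec m a
      rw [hco] at hrec
      have hfac : ((N' + 1).factorial : ℚ)
          = ((N' + 1 : ℕ) : ℚ) * (N'.factorial : ℚ) := by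
        rw [Nat.factorial_succ]; push_cast; ring
      have hsplit : ∑ r : Fin m, detF m (Function.update a r (a r - 1))
          = ∑ r ∈ Finset.univ.filter (fun c : Fin m => SytCorner m lam c),
              detF m (Function.update a r (a r - 1)) := by
        rw [← Finset.sum_filter_add_sum_filter_not Finset.univ
          (fun c : Fin m => SytCorner m lam c)]
        rw [Finset.sum_eq_zero (fun r hr =>
          hzero r (Finset.mem_filter.mp hr).2), add_zero]
      calc (Nat.card {T : Fin m → ℕ → ℕ // IsSYT m lam T} : ℚ)
          = ((∑ c ∈ Finset.univ.filter (fun c : Fin m => SytCorner m lam c),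
              Nat.card {T' : Fin m → ℕ → ℕ // IsSYT m (decRow m lam c) T'} : ℕ) : ℚ) := by
            rw [sytCard_rec m lam hlam hsum']
        _ = ∑ c ∈ Finset.univ.filter (fun c : Fin m => SytCorner m lam c),
              (Nat.card {T' : Fin m → ℕ → ℕ // IsSYT m (decRow m lam c) T'} : ℚ) := by
            push_cast
            rfl
        _ = ∑ c ∈ Finset.univ.filter (fun c : Fin m => SytCorner m lam c),
              (N'.factorial : ℚ) * detF m (fun i => ((decRow m lam c i : ℤ)
                - ((i : ℕ) : ℤ))) := by
            refine Finset.sum_congr rfl fun c hc => ?_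
            have hcorner := (Finset.mem_filter.mp hc).2
            exact IH N' (by omega) m (decRow m lam c)
              (decRow_antitone m lam hlam c hcorner)
              (by rw [sum_decRow m lam c hcorner.1, hsum]; omega)
        _ = ∑ c ∈ Finset.univ.filter (fun c : Fin m => SytCorner m lam c),
              (N'.factorial : ℚ) * detF m (Function.update a c (a c - 1)) := by
            refine Finset.sum_congr rfl fun c hc => ?_
            rw [hupdate c (Finset.mem_filter.mp hc).2]
        _ = (N'.factorial : ℚ) * ∑ r : Fin m, detF m (Function.update a r (a r - 1)) := by
            rw [hsplit, Finset.mul_sum]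
        _ = ((N' + 1).factorial : ℚ) * detF m a := by
            rw [hrec, hfac]; ring

theorem syt_det_formula' (m : ℕ) (hm : 1 ≤ m) (lam : Fin m → ℕ)
    (hlam : ∀ i j : Fin m, i ≤ j → lam j ≤ lam i) :
    ((Nat.card {T : Fin m → ℕ → ℕ // IsSYT m lam T} : ℕ) : ℚ)
      = (Nat.factorial (∑ i, lam i) : ℚ) *
        Matrix.det (Matrix.of fun i j : Fin m =>
          if 0 ≤ (lam i : ℤ) - ((i : ℕ) : ℤ) + ((j : ℕ) : ℤ) then
            (1 : ℚ) / (Nat.factorial ((lam i : ℤ) - ((i : ℕ) : ℤ) + ((j : ℕ) : ℤ)).toNat : ℚ)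
          else 0) := by
  rw [syt_main (∑ i, lam i) m lam hlam rfl]
  rfl

/-- `f^λ = n! · det(C)` where `C_{i,j} = 1/(λ_i−i+j)!` if `λ_i−i+j ≥ 0` and `0`
otherwise.  With 0-based indices `i,j : Fin m`, the (1-based) quantity
`λ_i−i+j` becomes `λ_i−i+j` again (the shifts cancel). -/
theorem syt_det_formula (m : ℕ) (hm : 1 ≤ m) (lam : Fin m → ℕ)
    (hlam : ∀ i j : Fin m, i ≤ j → lam j ≤ lam i) :
    (sytCount m lam : ℚ)
      = (Nat.factorial (∑ i, lam i) : ℚ) *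
        Matrix.det (Matrix.of fun i j : Fin m =>
          if 0 ≤ (lam i : ℤ) - ((i : ℕ) : ℤ) + ((j : ℕ) : ℤ) then
            (1 : ℚ) / (Nat.factorial ((lam i : ℤ) - ((i : ℕ) : ℤ) + ((j : ℕ) : ℤ)).toNat : ℚ)
          else 0) := by
  exact syt_det_formula' m hm lam hlam
end
end

section
/- Let k ≥ 1 and let K be the field of rational functions ℚ(x_1, …, x_k, u_1, …, u_k) (the fraction field of the polynomial ring in the 2k indeterminates x_1,…,x_k,u_1,…,u_k over ℚ). Then ∑_{τ ∈ S_k} sgn(τ) · ∏_{i=1}^{k−1} [ ( ∏_{h=i}^{k} (x_{τ(i)} + u_h) ) / ( ∑_{p=i}^{k} (x_{τ(p)} + u_p) ) ] = ∏_{1≤i<j≤k} (x_i − x_j), where the sum is over all permutations τ of {1,…,k} and sgn(τ) is the sign of τ. -/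
noncomputable section

/-- The field `ℚ(x_1,…,x_k,u_1,…,u_k)`: variables `Sum.inl i` are the `x_i` and
variables `Sum.inr i` are the `u_i`. -/
abbrev RatFun (k : ℕ) : Type := FractionRing (MvPolynomial (Fin k ⊕ Fin k) ℚ)

/-- The image of `x_i` in `ℚ(x_1,…,x_k,u_1,…,u_k)`. -/
def xv {k : ℕ} (i : Fin k) : RatFun k :=
  algebraMap (MvPolynomial (Fin k ⊕ Fin k) ℚ) (RatFun k) (MvPolynomial.X (Sum.inl i))

/-- The image of `u_i` in `ℚ(x_1,…,x_k,u_1,…,u_k)`. -/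
def uv {k : ℕ} (i : Fin k) : RatFun k :=
  algebraMap (MvPolynomial (Fin k ⊕ Fin k) ℚ) (RatFun k) (MvPolynomial.X (Sum.inr i))

section Aux
open Finset Polynomial Matrix Equiv


lemma prod_pairs_lt {M : Type*} [CommMonoid M] {k : ℕ} (f : Fin k → Fin k → M) :
    ∏ q ∈ Finset.univ.filter (fun q : Fin k × Fin k => q.1 < q.2), f q.1 q.2
      = ∏ i : Fin k, ∏ j ∈ Finset.Ioi i, f i j := by
  rw [Finset.prod_sigma']
  refine (Finset.prod_nbij' (fun s => (s.1, s.2)) (fun q => ⟨q.1, q.2⟩) ?_ ?_ ?_ ?_ ?_).symm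
  · intro a ha
    simp only [Finset.mem_sigma, Finset.mem_Ioi] at ha
    simp [ha.2]
  · intro a ha
    simp only [Finset.mem_filter] at ha
    simp [Finset.mem_Ioi, ha.2]
  · intro a _; rfl
  · intro a _; rfl
  · intro a _; rfl

lemma prod_pairs_rev {M : Type*} [CommMonoid M] {k : ℕ} (f : Fin k → Fin k → M) :
    ∏ q ∈ Finset.univ.filter (fun q : Fin k × Fin k => q.1 < q.2), f q.1 q.2
      = ∏ q ∈ Finset.univ.filter (fun q : Fin k × Fin k => q.1 < q.2), f q.2.rev q.1.rev := by
  refine Finset.prod_nbij' (fun q => (q.2.rev, q.1.rev)) (fun q => (q.2.rev, q.1.rev)) ?_ ?_ ?_ ?_ ?_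
  · intro a ha; simp only [Finset.mem_filter, Finset.mem_univ, true_and] at ha ⊢
    exact Fin.rev_lt_rev.mpr ha
  · intro a ha; simp only [Finset.mem_filter, Finset.mem_univ, true_and] at ha ⊢
    exact Fin.rev_lt_rev.mpr ha
  · intro a _; simp
  · intro a _; simp
  · intro a _; simp

lemma sum_filter_succ {M : Type*} [AddCommMonoid M] {n : ℕ} (m : Fin n) (g : Fin (n+1) → M) :
    ∑ p ∈ Finset.univ.filter (fun p : Fin (n+1) => m.succ ≤ p), g p
      = ∑ p ∈ Finset.univ.filter (fun p : Fin n => m ≤ p), g p.succ := by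
  rw [Finset.sum_filter, Finset.sum_filter, Fin.sum_univ_succ]
  have h0 : ¬ (m.succ ≤ (0 : Fin (n+1))) := by
    simp [Fin.le_def]
  rw [if_neg h0, zero_add]
  exact Finset.sum_congr rfl fun p _ => by simp [Fin.succ_le_succ_iff]

lemma prod_filter_succ {M : Type*} [CommMonoid M] {n : ℕ} (m : Fin n) (g : Fin (n+1) → M) :
    ∏ p ∈ Finset.univ.filter (fun p : Fin (n+1) => m.succ ≤ p), g p
      = ∏ p ∈ Finset.univ.filter (fun p : Fin n => m ≤ p), g p.succ := by
  rw [Finset.prod_filter, Finset.prod_filter, Fin.prod_univ_succ]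
  have h0 : ¬ (m.succ ≤ (0 : Fin (n+1))) := by
    simp [Fin.le_def]
  rw [if_neg h0, one_mul]
  exact Finset.prod_congr rfl fun p _ => by simp [Fin.succ_le_succ_iff]


def permCons {n : ℕ} (j : Fin (n+1)) (e : Equiv.Perm (Fin n)) : Equiv.Perm (Fin (n+1)) :=
  (Fin.cycleRange j)⁻¹ * Equiv.Perm.decomposeFin.symm (0, e)

lemma permCons_zero {n : ℕ} (j : Fin (n+1)) (e : Equiv.Perm (Fin n)) :
    permCons j e 0 = j := by
  simp [permCons, Equiv.Perm.mul_apply, Equiv.Perm.decomposeFin_symm_apply_zero,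
    Equiv.Perm.inv_def, Fin.cycleRange_symm_zero]

lemma permCons_succ {n : ℕ} (j : Fin (n+1)) (e : Equiv.Perm (Fin n)) (m : Fin n) :
    permCons j e m.succ = j.succAbove (e m) := by
  simp [permCons, Equiv.Perm.mul_apply, Equiv.Perm.decomposeFin_symm_apply_succ,
    Equiv.Perm.inv_def, Fin.cycleRange_symm_succ]

lemma sign_permCons {n : ℕ} (j : Fin (n+1)) (e : Equiv.Perm (Fin n)) :
    Equiv.Perm.sign (permCons j e) = (-1)^(j:ℕ) * Equiv.Perm.sign e := by
  rw [permCons, _root_.map_mul, _root_.map_inv, Fin.sign_cycleRange,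
    Equiv.Perm.decomposeFin.symm_sign, if_pos rfl, one_mul, ← inv_pow]
  norm_num

lemma permCons_bijective {n : ℕ} :
    Function.Bijective (fun je : Fin (n+1) × Equiv.Perm (Fin n) => permCons je.1 je.2) := by
  rw [Fintype.bijective_iff_injective_and_card]
  constructor
  · rintro ⟨j, e⟩ ⟨j', e'⟩ h
    simp only at h
    have hj : j = j' := by
      rw [← permCons_zero j e, ← permCons_zero j' e', h]
    subst hj
    have he : e = e' := by
      apply Equiv.ext
      intro m
      have h2 : permCons j e m.succ = permCons j e' m.succ := by rw [h]
      rw [permCons_succ, permCons_succ] at h2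
      exact Fin.succAbove_right_injective h2
    rw [he]
  · simp [Fintype.card_perm, Nat.factorial_succ]

variable {K : Type*} [Field K]


private def Bmat {n : ℕ} (w : Fin (n+1) → K) (m : ℕ) : Matrix (Fin (n+1)) (Fin (n+1)) K :=
  Matrix.of fun i j : Fin (n+1) => if (i:ℕ) = n then w j ^ m else w j ^ (i:ℕ)

lemma det_Bmat {n : ℕ} (w : Fin (n+1) → K) (m : ℕ) :
    (Bmat w m).det
      = (-1)^n * ∑ j : Fin (n+1), (-1)^(j:ℕ) * w j ^ m
          * (Matrix.vandermonde (w ∘ j.succAbove)).det := by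
  rw [Matrix.det_succ_row _ (Fin.last n), Finset.mul_sum]
  refine Finset.sum_congr rfl fun j _ => ?_
  have h1 : ((Bmat w m).submatrix (Fin.last n).succAbove j.succAbove)
      = (Matrix.vandermonde (w ∘ j.succAbove))ᵀ := by
    ext a b
    have ha : (a : ℕ) ≠ n := a.isLt.ne
    simp [Bmat, Matrix.submatrix_apply, Fin.succAbove_last, Matrix.vandermonde_apply, ha]
  rw [h1, Matrix.det_transpose]
  have h2 : (Bmat w m) (Fin.last n) j = w j ^ m := by simp [Bmat]
  rw [h2, Fin.val_last, pow_add]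
  ring

lemma S_top {n : ℕ} (w : Fin (n+1) → K) :
    ∑ j : Fin (n+1), (-1)^(j:ℕ) * w j ^ n * (Matrix.vandermonde (w ∘ j.succAbove)).det
      = (-1)^n * (Matrix.vandermonde w).det := by
  have hB : Bmat w n = (Matrix.vandermonde w)ᵀ := by
    ext i j
    by_cases h : (i:ℕ) = n <;>
      simp [Bmat, Matrix.vandermonde_apply, h]
  have := det_Bmat w n
  rw [hB, Matrix.det_transpose] at this
  have hs : ((-1:K)^n) * ((-1:K)^n) = 1 := by
    rw [← pow_add]; exact Even.neg_one_pow ⟨n, rfl⟩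
  calc ∑ j : Fin (n+1), (-1)^(j:ℕ) * w j ^ n * (Matrix.vandermonde (w ∘ j.succAbove)).det
      = ((-1:K)^n * (-1:K)^n) * ∑ j : Fin (n+1), (-1)^(j:ℕ) * w j ^ n * (Matrix.vandermonde (w ∘ j.succAbove)).det := by
        rw [hs, one_mul]
    _ = (-1)^n * (Matrix.vandermonde w).det := by rw [mul_assoc, ← this]

lemma S_low {n : ℕ} (w : Fin (n+1) → K) {m : ℕ} (hm : m < n) :
    ∑ j : Fin (n+1), (-1)^(j:ℕ) * w j ^ m * (Matrix.vandermonde (w ∘ j.succAbove)).det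
      = 0 := by
  have hB : (Bmat w m).det = 0 := by
    refine Matrix.det_zero_of_row_eq (M := Bmat w m) (i := ⟨m, by omega⟩) (j := Fin.last n)
      ?_ ?_
    · intro h
      have := congrArg Fin.val h
      simp [Fin.val_last] at this
      omega
    · funext j
      simp [Bmat, Fin.val_last, hm.ne]
  have := det_Bmat w m
  rw [hB] at this
  have h1 : ((-1:K)^n) ≠ 0 := by
    simp
  exact (mul_eq_zero.mp this.symm).resolve_left h1


lemma acore {n : ℕ} (w u : Fin (n+1) → K) :
    ∑ j : Fin (n+1), (-1)^(j:ℕ) * (∏ h, (w j + u h)) * (Matrix.vandermonde (w ∘ j.succAbove)).det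
      = (-1)^n * ((∑ m, w m + ∑ p, u p) * (Matrix.vandermonde w).det) := by
  have S_top := S_top (K := K) w
  have S_low : ∀ {m : ℕ}, m < n →
      ∑ j : Fin (n+1), (-1)^(j:ℕ) * w j ^ m * (Matrix.vandermonde (w ∘ j.succAbove)).det = 0 :=
    fun {m} hm => S_low w hm
  set V : Fin (n+1) → K := fun j => (Matrix.vandermonde (w ∘ j.succAbove)).det with hV
  set D : K := ∑ m, w m + ∑ p, u p with hD
  set P1 : K[X] := ∏ h : Fin (n+1), (X + C (u h)) with hP1
  set P2 : K[X] := ∏ a : Fin (n+1), (X - C (w a)) with hP2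
  set q : K[X] := P1 - C D * X^n - P2 with hq
  have hm1 : P1.Monic := monic_prod_of_monic _ _ fun h _ => monic_X_add_C _
  have hm2 : P2.Monic := monic_prod_of_monic _ _ fun a _ => monic_X_sub_C _
  have hd1 : P1.natDegree = n+1 := by
    rw [hP1, natDegree_prod_of_monic _ _ fun h _ => monic_X_add_C _]
    simp [natDegree_X_add_C]
  have hd2 : P2.natDegree = n+1 := by
    rw [hP2, natDegree_prod_of_monic _ _ fun a _ => monic_X_sub_C _]
    simp [natDegree_X_sub_C]
  have hc1 : P1.coeff n = ∑ h, u h := by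
    have h1 : P1.nextCoeff = ∑ h, u h := by
      rw [hP1, Monic.nextCoeff_prod _ _ fun h _ => monic_X_add_C _]
      simp [nextCoeff_X_add_C]
    rwa [nextCoeff_of_natDegree_pos (by omega), hd1, Nat.add_sub_cancel] at h1
  have hc2 : P2.coeff n = -∑ a, w a := by
    have h1 : P2.nextCoeff = ∑ a, -(w a) := by
      rw [hP2, Monic.nextCoeff_prod _ _ fun a _ => monic_X_sub_C _]
      simp [nextCoeff_X_sub_C]
    rw [nextCoeff_of_natDegree_pos (by omega), hd2, Nat.add_sub_cancel] at h1
    rw [h1, Finset.sum_neg_distrib]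
  have hcoeff : ∀ m, n ≤ m → q.coeff m = 0 := by
    intro m hm
    rw [hq, coeff_sub, coeff_sub, coeff_C_mul, coeff_X_pow]
    rcases eq_or_lt_of_le hm with h | h
    · subst h
      rw [hc1, hc2, if_pos rfl, hD]
      ring
    · rcases eq_or_lt_of_le (Nat.succ_le_of_lt h) with h2 | h2
      · have hm1' : m = P1.natDegree := by rw [hd1]; omega
        have hm2' : m = P2.natDegree := by rw [hd2]; omega
        rw [hm1', hm1.coeff_natDegree, ← hm1', hm2', hm2.coeff_natDegree, ← hm2',
          if_neg (by omega)]
        ring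
      · rw [coeff_eq_zero_of_natDegree_lt (by omega : P1.natDegree < m),
          coeff_eq_zero_of_natDegree_lt (by omega : P2.natDegree < m),
          if_neg (by omega)]
        ring
  have hqdeg : q.natDegree < n + 2 := by
    have h1 : q.natDegree ≤ n+1 := by
      refine le_trans (natDegree_sub_le _ _) (max_le (le_trans (natDegree_sub_le _ _) (max_le hd1.le ?_)) hd2.le)
      exact le_trans (natDegree_C_mul_le _ _) (by rw [natDegree_X_pow]; omega)
    omega
  have heval : ∀ j, (∏ h, (w j + u h)) = D * w j ^ n + q.eval (w j) := by
    intro j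
    have h2 : P2.eval (w j) = 0 := by
      rw [hP2, eval_prod]
      exact Finset.prod_eq_zero (Finset.mem_univ j) (by simp)
    have h1 : P1.eval (w j) = ∏ h, (w j + u h) := by
      rw [hP1, eval_prod]; simp
    rw [hq, eval_sub, eval_sub, eval_mul, eval_pow, eval_C, eval_X, h1, h2]
    ring
  have key1 : ∀ j : Fin (n+1), (-1:K)^(j:ℕ) * (∏ h, (w j + u h)) * V j
      = D * ((-1:K)^(j:ℕ) * w j ^ n * V j)
        + ∑ m ∈ Finset.range (n+2), q.coeff m * ((-1:K)^(j:ℕ) * w j ^ m * V j) := by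
    intro j
    rw [heval j, eval_eq_sum_range' hqdeg]
    rw [mul_add, add_mul]
    congr 1
    · ring
    · rw [Finset.mul_sum, Finset.sum_mul]
      exact Finset.sum_congr rfl fun m _ => by ring
  calc ∑ j : Fin (n+1), (-1:K)^(j:ℕ) * (∏ h, (w j + u h)) * V j
      = ∑ j : Fin (n+1), (D * ((-1:K)^(j:ℕ) * w j ^ n * V j)
          + ∑ m ∈ Finset.range (n+2), q.coeff m * ((-1:K)^(j:ℕ) * w j ^ m * V j)) :=
        Finset.sum_congr rfl fun j _ => key1 j
    _ = D * ∑ j : Fin (n+1), ((-1:K)^(j:ℕ) * w j ^ n * V j)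
          + ∑ m ∈ Finset.range (n+2), q.coeff m
              * ∑ j : Fin (n+1), ((-1:K)^(j:ℕ) * w j ^ m * V j) := by
        rw [Finset.sum_add_distrib, ← Finset.mul_sum, Finset.sum_comm]
        congr 1
        exact Finset.sum_congr rfl fun m _ => (Finset.mul_sum _ _ _).symm
    _ = D * ((-1)^n * (Matrix.vandermonde w).det) + 0 := by
        congr 1
        · rw [S_top]
        · refine Finset.sum_eq_zero fun m _ => ?_
          rcases lt_or_ge m n with h | h
          · rw [S_low h, mul_zero]
          · rw [hcoeff m h, zero_mul]
    _ = (-1)^n * (D * (Matrix.vandermonde w).det) := by ring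

lemma lemA {n : ℕ} (x u : Fin (n+1) → K) :
    ∑ j : Fin (n+1), (-1)^(j:ℕ) * (∏ h, (x j + u h)) *
        (∏ q ∈ Finset.univ.filter (fun q : Fin n × Fin n => q.1 < q.2),
          (x (j.succAbove q.1) - x (j.succAbove q.2)))
      = (∑ m, x m + ∑ p, u p)
        * ∏ q ∈ Finset.univ.filter (fun q : Fin (n+1) × Fin (n+1) => q.1 < q.2),
            (x q.1 - x q.2) := by
  set w : Fin (n+1) → K := x ∘ Fin.rev with hw
  have hxw : ∀ a : Fin (n+1), x a = w a.rev := fun a => by simp [hw]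
  have hout : ∏ q ∈ Finset.univ.filter (fun q : Fin (n+1) × Fin (n+1) => q.1 < q.2),
      (x q.1 - x q.2) = (Matrix.vandermonde w).det := by
    rw [prod_pairs_rev (fun a b => x a - x b), Matrix.det_vandermonde, ← prod_pairs_lt]
    exact Finset.prod_congr rfl fun q _ => by simp [hw]
  have hin : ∀ j : Fin (n+1),
      (∏ q ∈ Finset.univ.filter (fun q : Fin n × Fin n => q.1 < q.2),
        (x (j.succAbove q.1) - x (j.succAbove q.2)))
      = (Matrix.vandermonde (w ∘ (j.rev).succAbove)).det := by
    intro j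
    rw [prod_pairs_rev (fun a b => x (j.succAbove a) - x (j.succAbove b)),
      Matrix.det_vandermonde, ← prod_pairs_lt]
    refine Finset.prod_congr rfl fun q _ => ?_
    have h : ∀ b : Fin n, x (j.succAbove b.rev) = w (j.rev.succAbove b) := by
      intro b
      rw [hxw, Fin.rev_succAbove, Fin.rev_rev]
    rw [h, h]
    rfl
  have hsign : ∀ j : Fin (n+1), ((-1:K))^((j.rev : ℕ)) = (-1)^n * (-1)^(j:ℕ) := by
    intro j
    have h1 : (j.rev : ℕ) + (j:ℕ) = n := by
      rw [Fin.val_rev]; omega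
    have h2 : ((-1:K))^((j:ℕ)) * ((-1:K))^((j:ℕ)) = 1 := by
      rw [← pow_add]; exact Even.neg_one_pow ⟨(j:ℕ), rfl⟩
    calc ((-1:K))^((j.rev : ℕ)) = ((-1:K))^((j.rev : ℕ)) * (((-1:K))^((j:ℕ)) * ((-1:K))^((j:ℕ))) := by
          rw [h2, mul_one]
      _ = (((-1:K))^((j.rev : ℕ) + (j:ℕ))) * (-1)^(j:ℕ) := by rw [pow_add]; ring
      _ = (-1)^n * (-1)^(j:ℕ) := by rw [h1]
  have hsum : ∑ m : Fin (n+1), x m = ∑ m : Fin (n+1), w m := by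
    rw [hw]
    exact (Fintype.sum_bijective Fin.rev Fin.rev_bijective _ _ fun a => rfl).symm
  calc ∑ j : Fin (n+1), (-1:K)^(j:ℕ) * (∏ h, (x j + u h)) *
        (∏ q ∈ Finset.univ.filter (fun q : Fin n × Fin n => q.1 < q.2),
          (x (j.succAbove q.1) - x (j.succAbove q.2)))
      = ∑ j : Fin (n+1), (-1:K)^(j:ℕ) * (∏ h, (x j + u h))
          * (Matrix.vandermonde (w ∘ (j.rev).succAbove)).det :=
        Finset.sum_congr rfl fun j _ => by rw [hin j]
    _ = ∑ j : Fin (n+1), (-1:K)^((j.rev:ℕ)) * (∏ h, (x j.rev + u h))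
          * (Matrix.vandermonde (w ∘ j.succAbove)).det := by
        refine Fintype.sum_bijective Fin.rev Fin.rev_bijective _ _ fun j => ?_
        rw [Fin.rev_rev]
    _ = (-1:K)^n * ∑ j : Fin (n+1), (-1:K)^(j:ℕ) * (∏ h, (w j + u h))
          * (Matrix.vandermonde (w ∘ j.succAbove)).det := by
        rw [Finset.mul_sum]
        refine Finset.sum_congr rfl fun j _ => ?_
        rw [hsign j, hxw j.rev, Fin.rev_rev]
        ring
    _ = (-1:K)^n * ((-1)^n * ((∑ m, w m + ∑ p, u p) * (Matrix.vandermonde w).det)) := by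
        rw [acore]
    _ = (∑ m, x m + ∑ p, u p)
        * ∏ q ∈ Finset.univ.filter (fun q : Fin (n+1) × Fin (n+1) => q.1 < q.2),
            (x q.1 - x q.2) := by
        rw [hout, hsum, ← mul_assoc, ← pow_add]
        rw [Even.neg_one_pow ⟨n, rfl⟩, one_mul]

lemma key : ∀ (k : ℕ) (x u : Fin k → K)
    (_ : ∀ (i : Fin k) (T : Finset (Fin k)), T.card = k - (i:ℕ) →
      (∑ m ∈ T, x m) + (∑ p ∈ Finset.univ.filter (fun p : Fin k => i ≤ p), u p) ≠ 0),
    (∑ τ : Equiv.Perm (Fin k),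
        ((Equiv.Perm.sign τ : ℤ) : K) *
          ∏ i ∈ Finset.univ.filter (fun i : Fin k => (i : ℕ) + 1 < k),
            ((∏ h ∈ Finset.univ.filter (fun h : Fin k => i ≤ h), (x (τ i) + u h))
              / (∑ p ∈ Finset.univ.filter (fun p : Fin k => i ≤ p), (x (τ p) + u p))))
      = ∏ q ∈ Finset.univ.filter (fun q : Fin k × Fin k => q.1 < q.2), (x q.1 - x q.2) := by
  intro k
  induction k with
  | zero =>
    intro x u _
    have h1 : ∀ τ : Equiv.Perm (Fin 0), τ = 1 := fun τ => Equiv.ext fun a => a.elim0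
    rw [Fintype.sum_eq_single 1 (fun τ h => absurd (h1 τ) h)]
    have h2 : (Finset.univ.filter (fun i : Fin 0 => (i : ℕ) + 1 < 0)) = ∅ := by
      apply Finset.filter_eq_empty_iff.mpr; intro i _; exact i.elim0
    have h3 : (Finset.univ.filter (fun q : Fin 0 × Fin 0 => q.1 < q.2)) = ∅ := by
      apply Finset.filter_eq_empty_iff.mpr; intro q _; exact q.1.elim0
    rw [h2, h3]
    simp
  | succ n ih =>
    intro x u hden
    rcases Nat.eq_zero_or_pos n with hn | hn
    · subst hn
      have h1 : ∀ τ : Equiv.Perm (Fin 1), τ = 1 := fun τ =>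
        Equiv.ext fun a => Subsingleton.elim _ _
      rw [Fintype.sum_eq_single 1 (fun τ h => absurd (h1 τ) h)]
      have h2 : (Finset.univ.filter (fun i : Fin 1 => (i : ℕ) + 1 < 1)) = ∅ := by
        apply Finset.filter_eq_empty_iff.mpr; intro i _; omega
      have h3 : (Finset.univ.filter (fun q : Fin 1 × Fin 1 => q.1 < q.2)) = ∅ := by
        apply Finset.filter_eq_empty_iff.mpr
        intro q _
        have : q.1 = q.2 := Subsingleton.elim _ _
        simp [this]
      rw [h2, h3]
      simp
    · -- main inductive step, n ≥ 1
      set D : K := ∑ m, x m + ∑ p, u p with hDdef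
      have hfilt0 : (Finset.univ.filter (fun p : Fin (n+1) => (0 : Fin (n+1)) ≤ p))
          = Finset.univ := Finset.filter_true_of_mem fun _ _ => Fin.zero_le _
      have hD : D ≠ 0 := by
        have h := hden 0 Finset.univ (by simp)
        rwa [hfilt0] at h
      -- per (j,e) product split
      have hstep : ∀ (j : Fin (n+1)) (e : Equiv.Perm (Fin n)),
          (∏ i ∈ Finset.univ.filter (fun i : Fin (n+1) => (i : ℕ) + 1 < n+1),
            ((∏ h ∈ Finset.univ.filter (fun h : Fin (n+1) => i ≤ h), (x (permCons j e i) + u h))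
              / (∑ p ∈ Finset.univ.filter (fun p : Fin (n+1) => i ≤ p), (x (permCons j e p) + u p))))
          = ((∏ h, (x j + u h)) / D) *
            ∏ m ∈ Finset.univ.filter (fun m : Fin n => (m : ℕ) + 1 < n),
              ((∏ h ∈ Finset.univ.filter (fun h : Fin n => m ≤ h), ((x ∘ j.succAbove) (e m) + (u ∘ Fin.succ) h))
                / (∑ p ∈ Finset.univ.filter (fun p : Fin n => m ≤ p), ((x ∘ j.succAbove) (e p) + (u ∘ Fin.succ) p))) := by
        intro j e
        rw [Finset.prod_filter, Fin.prod_univ_succ]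
        congr 1
        · rw [if_pos (by simpa using hn)]
          rw [hfilt0, permCons_zero]
          congr 1
          rw [Finset.sum_add_distrib, hDdef]
          congr 1
          exact Equiv.sum_comp (permCons j e) x
        · rw [Finset.prod_filter]
          refine Finset.prod_congr rfl fun m _ => ?_
          have hcond : (((m.succ : Fin (n+1)) : ℕ) + 1 < n+1) ↔ ((m : ℕ) + 1 < n) := by
            rw [Fin.val_succ]; omega
          by_cases hc : (m : ℕ) + 1 < n
          · rw [if_pos (hcond.mpr hc), if_pos hc]
            congr 1
            · rw [prod_filter_succ m (fun h => x (permCons j e m.succ) + u h)]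
              exact Finset.prod_congr rfl fun h _ => by rw [permCons_succ]; rfl
            · rw [sum_filter_succ m (fun p => x (permCons j e p) + u p)]
              exact Finset.sum_congr rfl fun p _ => by rw [permCons_succ]; rfl
          · rw [if_neg (fun hh => hc (hcond.mp hh)), if_neg hc]
      -- sign cast
      have hsigncast : ∀ (j : Fin (n+1)) (e : Equiv.Perm (Fin n)),
          (((Equiv.Perm.sign (permCons j e)) : ℤ) : K)
            = (-1)^(j:ℕ) * ((Equiv.Perm.sign e : ℤ) : K) := by
        intro j e
        rw [sign_permCons]
        push_cast
        ring
      -- hypothesis for ih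
      have hden' : ∀ (j : Fin (n+1)) (i : Fin n) (T : Finset (Fin n)), T.card = n - (i:ℕ) →
          (∑ m ∈ T, (x ∘ j.succAbove) m)
            + (∑ p ∈ Finset.univ.filter (fun p : Fin n => i ≤ p), (u ∘ Fin.succ) p) ≠ 0 := by
        intro j i T hT
        have hinj : Function.Injective (j.succAbove) := Fin.succAbove_right_injective
        have h1 := hden i.succ (T.image j.succAbove)
          (by rw [Finset.card_image_of_injective _ hinj, hT, Fin.val_succ]; omega)
        rw [Finset.sum_image (fun a _ b _ h => hinj h),
          sum_filter_succ i u] at h1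
        exact h1
      -- main calc
      calc (∑ τ : Equiv.Perm (Fin (n+1)),
          ((Equiv.Perm.sign τ : ℤ) : K) *
            ∏ i ∈ Finset.univ.filter (fun i : Fin (n+1) => (i : ℕ) + 1 < n+1),
              ((∏ h ∈ Finset.univ.filter (fun h : Fin (n+1) => i ≤ h), (x (τ i) + u h))
                / (∑ p ∈ Finset.univ.filter (fun p : Fin (n+1) => i ≤ p), (x (τ p) + u p))))
          = ∑ je : Fin (n+1) × Equiv.Perm (Fin n),
              ((Equiv.Perm.sign (permCons je.1 je.2) : ℤ) : K) *
                ∏ i ∈ Finset.univ.filter (fun i : Fin (n+1) => (i : ℕ) + 1 < n+1),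
                  ((∏ h ∈ Finset.univ.filter (fun h : Fin (n+1) => i ≤ h), (x (permCons je.1 je.2 i) + u h))
                    / (∑ p ∈ Finset.univ.filter (fun p : Fin (n+1) => i ≤ p), (x (permCons je.1 je.2 p) + u p))) :=
            (Function.Bijective.sum_comp permCons_bijective _).symm
        _ = ∑ j : Fin (n+1), ∑ e : Equiv.Perm (Fin n),
              ((Equiv.Perm.sign (permCons j e) : ℤ) : K) *
                ∏ i ∈ Finset.univ.filter (fun i : Fin (n+1) => (i : ℕ) + 1 < n+1),
                  ((∏ h ∈ Finset.univ.filter (fun h : Fin (n+1) => i ≤ h), (x (permCons j e i) + u h))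
                    / (∑ p ∈ Finset.univ.filter (fun p : Fin (n+1) => i ≤ p), (x (permCons j e p) + u p))) :=
            Fintype.sum_prod_type _
        _ = ∑ j : Fin (n+1), (-1:K)^(j:ℕ) * ((∏ h, (x j + u h)) / D) *
              ∑ e : Equiv.Perm (Fin n),
                ((Equiv.Perm.sign e : ℤ) : K) *
                  ∏ m ∈ Finset.univ.filter (fun m : Fin n => (m : ℕ) + 1 < n),
                    ((∏ h ∈ Finset.univ.filter (fun h : Fin n => m ≤ h), ((x ∘ j.succAbove) (e m) + (u ∘ Fin.succ) h))
                      / (∑ p ∈ Finset.univ.filter (fun p : Fin n => m ≤ p), ((x ∘ j.succAbove) (e p) + (u ∘ Fin.succ) p))) := by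
            refine Finset.sum_congr rfl fun j _ => ?_
            rw [Finset.mul_sum]
            refine Finset.sum_congr rfl fun e _ => ?_
            rw [hstep j e, hsigncast j e]
            ring
        _ = ∑ j : Fin (n+1), (-1:K)^(j:ℕ) * ((∏ h, (x j + u h)) / D) *
              ∏ q ∈ Finset.univ.filter (fun q : Fin n × Fin n => q.1 < q.2),
                ((x ∘ j.succAbove) q.1 - (x ∘ j.succAbove) q.2) := by
            refine Finset.sum_congr rfl fun j _ => ?_
            rw [ih (x ∘ j.succAbove) (u ∘ Fin.succ) (hden' j)]
        _ = (∑ j : Fin (n+1), (-1:K)^(j:ℕ) * (∏ h, (x j + u h)) *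
              ∏ q ∈ Finset.univ.filter (fun q : Fin n × Fin n => q.1 < q.2),
                (x (j.succAbove q.1) - x (j.succAbove q.2))) / D := by
            rw [Finset.sum_div]
            refine Finset.sum_congr rfl fun j _ => ?_
            simp only [Function.comp]
            ring
        _ = (D * ∏ q ∈ Finset.univ.filter (fun q : Fin (n+1) × Fin (n+1) => q.1 < q.2),
              (x q.1 - x q.2)) / D := by
            rw [lemA x u, hDdef]
        _ = ∏ q ∈ Finset.univ.filter (fun q : Fin (n+1) × Fin (n+1) => q.1 < q.2),
              (x q.1 - x q.2) := mul_div_cancel_left₀ _ hD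

end Aux

open Finset in
/-- The partial-fraction identity:
`∑_{τ∈S_k} sgn(τ) ∏_{i=1}^{k−1} (∏_{h=i}^k (x_{τ(i)}+u_h)) / (∑_{p=i}^k (x_{τ(p)}+u_p))
 = ∏_{i<j} (x_i−x_j)`.
With 0-based indices, the outer product runs over `i : Fin k` with `i+1 < k`,
and the inner product/sum over the indices `≥ i`. -/
theorem partial_fraction_identity (k : ℕ) (hk : 1 ≤ k) :
    (∑ τ : Equiv.Perm (Fin k),
        ((Equiv.Perm.sign τ : ℤ) : RatFun k) *
          ∏ i ∈ Finset.univ.filter (fun i : Fin k => (i : ℕ) + 1 < k),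
            ((∏ h ∈ Finset.univ.filter (fun h : Fin k => i ≤ h), (xv (τ i) + uv h))
              / (∑ p ∈ Finset.univ.filter (fun p : Fin k => i ≤ p), (xv (τ p) + uv p))))
      = ∏ q ∈ Finset.univ.filter (fun q : Fin k × Fin k => q.1 < q.2),
          (xv q.1 - xv q.2) := by
  apply key k xv uv
  intro i T hT h
  have hsum : (∑ m ∈ T, xv m) + ∑ p ∈ Finset.univ.filter (fun p : Fin k => i ≤ p), uv p
      = algebraMap (MvPolynomial (Fin k ⊕ Fin k) ℚ) (RatFun k)
          ((∑ m ∈ T, MvPolynomial.X (Sum.inl m))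
            + ∑ p ∈ Finset.univ.filter (fun p : Fin k => i ≤ p), MvPolynomial.X (Sum.inr p)) := by
    rw [map_add, map_sum, map_sum]
    rfl
  rw [hsum, IsFractionRing.to_map_eq_zero_iff] at h
  have h2 := congrArg (MvPolynomial.eval (fun _ => (1:ℚ))) h
  simp only [map_add, map_sum, MvPolynomial.eval_X, map_zero] at h2
  rw [Finset.sum_const, Finset.sum_const] at h2
  rw [hT] at h2
  simp only [nsmul_eq_mul, mul_one] at h2
  have h3 : ((k - (i:ℕ) : ℕ) : ℚ) ≥ 1 := by
    exact_mod_cast (show 1 ≤ k - (i:ℕ) by have := i.isLt; omega)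
  have h4 : (0:ℚ) ≤ (((Finset.univ.filter (fun p : Fin k => i ≤ p)).card : ℕ) : ℚ) :=
    Nat.cast_nonneg _
  linarith
end
end

section
/- For every n ≥ 0, the number of permutations of {1,…,n} with no ascending subsequence of length 3 equals the n-th Catalan number, that is, #S_n^{(2)} = (1/(n+1))·C(2n, n). -/
noncomputable section

/-- The number of permutations of `{1,…,n}` with no ascending subsequence of
length `m+1`, i.e. the cardinality of `S_n^{(m)}`. -/
def permCount (m n : ℕ) : ℕ :=
  Nat.card {τ : Equiv.Perm (Fin n) // ¬ HasAscSeq (⇑τ) (m + 1)}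

/-!
A permutation avoids `123` exactly when its entries that are not left-to-right minima decrease.
It is therefore determined by the set `P` of positions and the set `V` of values of its
left-to-right minima: it is the unique permutation mapping `P` onto `V` that decreases both on `P`
and on the complement of `P`. For that permutation, position `q` is a left-to-right minimum iff
`σ q ≤ n - 1 - q`, and comparing ranks in `P` and in `V` turns this into a ballot condition on
`(P, V)`. Interleaving the indicator of `P`, read left to right, with that of `V`, read top to
bottom, makes the ballot condition the Dyck condition, so `123`-avoiders of length `n` correspond
to Dyck words of semilength `n`, which are counted by the Catalan numbers.
-/

open Finset DyckStep

namespace List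

variable {ι α : Type*} (f g : ι → α)

theorem take_two_mul_add_one_flatMap_pair (l : List ι) {t : ℕ} (ht : t < l.length) :
    (l.flatMap fun k => [f k, g k]).take (2 * t + 1) =
      (l.take t).flatMap (fun k => [f k, g k]) ++ [f l[t]] := by
  induction l generalizing t with
  | nil => simp at ht
  | cons a l ih =>
    cases t with
    | zero => simp
    | succ t =>
      rw [show 2 * (t + 1) + 1 = 2 * t + 1 + 1 + 1 by ring]
      simp [ih (Nat.lt_of_succ_lt_succ ht)]

theorem getElem?_two_mul_flatMap_pair (l : List ι) (t : ℕ) :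
    (l.flatMap fun k => [f k, g k])[2 * t]? = l[t]?.map f := by
  induction l generalizing t with
  | nil => simp
  | cons a l ih => cases t <;> simp [Nat.mul_succ, ih]

theorem getElem?_two_mul_add_one_flatMap_pair (l : List ι) (t : ℕ) :
    (l.flatMap fun k => [f k, g k])[2 * t + 1]? = l[t]?.map g := by
  induction l generalizing t with
  | nil => simp
  | cons a l ih => cases t <;> simp [Nat.mul_succ, ih]

theorem getElem?_finRange_val {n : ℕ} (k : Fin n) : (finRange n)[(k : ℕ)]? = some k := by
  simp

theorem count_flatMap_take_finRange [BEq α] {n : ℕ} (F : Fin n → List α) (c : α) (t : ℕ) :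
    (((finRange n).take t).flatMap F).count c = ∑ j : Fin n with j.val < t, (F j).count c := by
  rw [count_flatMap, map_take, ← ofFn_id, map_ofFn, sum_take_ofFn]
  rfl

end List

theorem Equiv.subtypeCongr_apply_of_pos {α : Type*} {p q : α → Prop} [DecidablePred p]
    [DecidablePred q] (e : {x // p x} ≃ {x // q x}) (f : {x // ¬p x} ≃ {x // ¬q x}) {x : α}
    (hx : p x) : e.subtypeCongr f x = e ⟨x, hx⟩ := by
  simp [Equiv.subtypeCongr, Equiv.sumCompl_symm_apply_of_pos hx]

theorem Equiv.subtypeCongr_apply_of_neg {α : Type*} {p q : α → Prop} [DecidablePred p]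
    [DecidablePred q] (e : {x // p x} ≃ {x // q x}) (f : {x // ¬p x} ≃ {x // ¬q x}) {x : α}
    (hx : ¬p x) : e.subtypeCongr f x = f ⟨x, hx⟩ := by
  simp [Equiv.subtypeCongr, Equiv.sumCompl_symm_apply_of_neg hx]

def orderIsoDualOfCardEq (β γ : Type*) [LinearOrder β] [Fintype β] [LinearOrder γ] [Fintype γ]
    (h : Fintype.card β = Fintype.card γ) : β ≃o γᵒᵈ :=
  (Fintype.orderIsoFinOfCardEq β h).symm.trans (Fintype.orderIsoFinOfCardEq γᵒᵈ rfl)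

theorem card_Ioi_inter_lt_card_Ioi_inter_iff {α : Type*} [LinearOrder α]
    [LocallyFiniteOrderTop α] {T : Finset α} {v r : α} (hv : v ∈ T) : #(Ioi v ∩ T) < #(Ioi r ∩ T) ↔ r < v := by
  constructor
  · intro hlt
    by_contra hle
    exact hlt.not_ge (card_le_card (inter_subset_inter_right (Ioi_subset_Ioi (not_lt.1 hle))))
  · intro hrv
    refine card_lt_card ((ssubset_iff_of_subset ?_).2 ⟨v, by simp [hv, hrv], by simp⟩)
    exact inter_subset_inter_right (Ioi_subset_Ioi hrv.le)

theorem count_D_add_count_U (l : List DyckStep) : l.count D + l.count U = l.length := by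
  induction l with
  | nil => rfl
  | cons s l ih => cases s <;> simp <;> omega

theorem count_D_le_count_U_take_of_odd {l : List DyckStep}
    (h : ∀ j, (l.take (2 * j + 1)).count D ≤ (l.take (2 * j + 1)).count U) (i : ℕ) :
    (l.take i).count D ≤ (l.take i).count U := by
  obtain ⟨j, rfl | rfl⟩ := Nat.even_or_odd' i
  · cases j with
    | zero => simp
    | succ j =>
      rw [show 2 * (j + 1) = 2 * j + 1 + 1 by ring, List.take_add_one, List.count_append,
        List.count_append]
      rcases hl : l[2 * j + 1]? with _ | s
      · simpa using h j
      · have hlen : 2 * j + 1 < l.length := (List.getElem?_eq_some_iff.1 hl).1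
        have hsum := count_D_add_count_U (l.take (2 * j + 1))
        rw [List.length_take_of_le hlen.le] at hsum
        have := h j
        cases s <;> simp <;> omega
  · exact h j

section DyckPair

variable {n : ℕ}

def pairWord (P V : Finset (Fin n)) : List DyckStep :=
  (List.finRange n).flatMap fun k => [if k ∈ P then U else D, if k.rev ∈ V then D else U]

/-- The inequality at `q` says that the first `2q + 1` letters of `pairWord P V` contain at most
`q` letters `D`. -/
def IsDyckPair (P V : Finset (Fin n)) : Prop :=
  #P = #V ∧ ∀ q : Fin n, #(Iic q \ P) + #(Ioi q.rev ∩ V) ≤ q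

def pairOfWord (n : ℕ) (l : List DyckStep) : Finset (Fin n) × Finset (Fin n) :=
  (({k | l[2 * (k : ℕ)]? = some U} : Finset (Fin n)),
    ({v | l[2 * (v.rev : ℕ) + 1]? = some D} : Finset (Fin n)))

theorem length_pairWord (P V : Finset (Fin n)) : (pairWord P V).length = 2 * n := by
  simp [pairWord, List.length_flatMap, mul_comm]

theorem count_D_pairLetters (P V : Finset (Fin n)) (k : Fin n) :
    [if k ∈ P then U else D, if k.rev ∈ V then D else U].count D =
      (if k ∉ P then 1 else 0) + if k.rev ∈ V then 1 else 0 := by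
  by_cases k ∈ P <;> by_cases k.rev ∈ V <;> simp [*]

theorem card_filter_lt_rev_mem (V : Finset (Fin n)) (q : Fin n) :
    #{j : Fin n | j < q ∧ j.rev ∈ V} = #(Ioi q.rev ∩ V) := by
  rw [← card_map Fin.revPerm.toEmbedding, ← Fin.map_revPerm_Iio, ← filter_mem_eq_inter,
    filter_map]
  congr 1
  ext j
  simp

theorem card_Iic_sdiff (P : Finset (Fin n)) (q : Fin n) :
    #(Iic q \ P) = #{j | j < q ∧ j ∉ P} + if q ∉ P then 1 else 0 := by
  rw [← Iio_insert]
  by_cases hq : q ∈ P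
  · rw [insert_sdiff_of_mem _ hq, if_neg (not_not.2 hq), add_zero]
    congr 1
    ext
    simp
  · rw [insert_sdiff_of_notMem _ hq, card_insert_of_notMem (by simp), if_pos hq]
    congr 2
    ext
    simp

theorem count_D_take_pairWord (P V : Finset (Fin n)) (q : Fin n) :
    ((pairWord P V).take (2 * q + 1)).count D = #(Iic q \ P) + #(Ioi q.rev ∩ V) := by
  rw [pairWord, List.take_two_mul_add_one_flatMap_pair _ _ _ (by simp), List.count_append,
    List.count_flatMap_take_finRange, card_Iic_sdiff, ← card_filter_lt_rev_mem]
  simp only [count_D_pairLetters, sum_add_distrib, ← card_filter, filter_filter,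
    List.getElem_finRange, Fin.val_fin_lt, Fin.cast_mk, Fin.eta]
  by_cases hq : q ∈ P
  · simp [hq]
  · simp [hq]
    omega

theorem count_D_pairWord (P V : Finset (Fin n)) : (pairWord P V).count D = #Pᶜ + #V := by
  rw [pairWord, ← List.take_of_length_le (le_of_eq (List.length_finRange (n := n))),
    List.count_flatMap_take_finRange]
  have hV : #({j | j.rev ∈ V} : Finset (Fin n)) = #V := by
    rw [← card_map Fin.revPerm.toEmbedding]
    congr 1
    ext
    simp [mem_map_equiv]
  simp [count_D_pairLetters, sum_add_distrib, hV, sum_ite, filter_not, ← compl_eq_univ_sdiff]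

theorem isDyckPair_iff_pairWord {P V : Finset (Fin n)} :
    IsDyckPair P V ↔ (pairWord P V).count U = (pairWord P V).count D ∧
      ∀ i, ((pairWord P V).take i).count D ≤ ((pairWord P V).take i).count U := by
  have hsum := count_D_add_count_U (pairWord P V)
  have hD := count_D_pairWord P V
  rw [length_pairWord] at hsum
  rw [card_compl, Fintype.card_fin] at hD
  have hP : #P ≤ n := card_le_univ P |>.trans_eq (Fintype.card_fin n)
  have hprefix (q : Fin n) :
      ((pairWord P V).take (2 * q + 1)).count D ≤ ((pairWord P V).take (2 * q + 1)).count U ↔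
        #(Iic q \ P) + #(Ioi q.rev ∩ V) ≤ q := by
    have hq := count_D_add_count_U ((pairWord P V).take (2 * q + 1))
    rw [List.length_take_of_le (by rw [length_pairWord]; omega), count_D_take_pairWord] at hq
    rw [count_D_take_pairWord]
    omega
  rw [IsDyckPair]
  constructor
  · rintro ⟨hcard, hdom⟩
    refine ⟨by omega, count_D_le_count_U_take_of_odd fun j => ?_⟩
    by_cases hj : j < n
    · exact (hprefix ⟨j, hj⟩).2 (hdom _)
    · rw [List.take_of_length_le (by rw [length_pairWord]; omega)]
      omega
  · rintro ⟨hbal, hpre⟩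
    exact ⟨by omega, fun q => (hprefix q).1 (hpre _)⟩

theorem pairOfWord_pairWord (P V : Finset (Fin n)) : pairOfWord n (pairWord P V) = (P, V) := by
  ext k <;>
    simp only [pairOfWord, pairWord, List.getElem?_two_mul_flatMap_pair,
      List.getElem?_two_mul_add_one_flatMap_pair, List.getElem?_finRange_val] <;>
    by_cases k ∈ P <;> simp [*]

theorem pairWord_pairOfWord {l : List DyckStep} (hl : l.length = 2 * n) :
    pairWord (pairOfWord n l).1 (pairOfWord n l).2 = l := by
  apply List.ext_getElem?
  intro i
  obtain ⟨j, rfl | rfl⟩ := Nat.even_or_odd' i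
  all_goals
    by_cases hj : j < n
    swap
    · rw [List.getElem?_eq_none (by rw [length_pairWord]; omega), List.getElem?_eq_none (by omega)]
    obtain ⟨k, rfl⟩ : ∃ k : Fin n, (k : ℕ) = j := ⟨⟨j, hj⟩, rfl⟩
  · have hi : 2 * (k : ℕ) < l.length := by omega
    simp only [pairWord, pairOfWord, List.getElem?_two_mul_flatMap_pair,
      List.getElem?_finRange_val, mem_filter, mem_univ, true_and]
    rcases l[2 * (k : ℕ)].dichotomy with h | h <;> simp [List.getElem?_eq_getElem hi, h]
  · have hi : 2 * (k : ℕ) + 1 < l.length := by omega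
    simp only [pairWord, pairOfWord, List.getElem?_two_mul_add_one_flatMap_pair,
      List.getElem?_finRange_val, mem_filter, mem_univ, true_and, Fin.rev_rev]
    rcases l[2 * (k : ℕ) + 1].dichotomy with h | h <;> simp [List.getElem?_eq_getElem hi, h]

end DyckPair

def dyckPairEquiv (n : ℕ) :
    {x : Finset (Fin n) × Finset (Fin n) // IsDyckPair x.1 x.2} ≃
      {p : DyckWord // p.semilength = n} where
  toFun x :=
    ⟨⟨pairWord x.1.1 x.1.2, (isDyckPair_iff_pairWord.1 x.2).1,
        (isDyckPair_iff_pairWord.1 x.2).2⟩, by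
      have hsum := count_D_add_count_U (pairWord x.1.1 x.1.2)
      rw [length_pairWord, ← (isDyckPair_iff_pairWord.1 x.2).1] at hsum
      exact show (pairWord x.1.1 x.1.2).count U = n by omega⟩
  invFun p := ⟨pairOfWord n p.1.toList, by
    have hl : p.1.toList.length = 2 * n := by rw [← p.1.two_mul_semilength_eq_length, p.2]
    rw [isDyckPair_iff_pairWord, pairWord_pairOfWord hl]
    exact ⟨p.1.count_U_eq_count_D, p.1.count_D_le_count_U⟩⟩
  left_inv x := Subtype.ext (pairOfWord_pairWord x.1.1 x.1.2)
  right_inv p := Subtype.ext <| DyckWord.ext <|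
    pairWord_pairOfWord (by rw [← p.1.two_mul_semilength_eq_length, p.2])

section LeftToRightMin

variable {n : ℕ}

theorem hasAscSeq_three_of_lt {f : Fin n → Fin n} {a b c : Fin n} (hab : a < b) (hbc : b < c)
    (hfab : f a < f b) (hfbc : f b < f c) : HasAscSeq f 3 :=
  ⟨![a, b, c], Fin.strictMono_iff_lt_succ.2 (by simp [Fin.forall_fin_two, hab, hbc]),
    Fin.strictMono_iff_lt_succ.2 (by simp [Fin.forall_fin_two, hfab, hfbc])⟩

theorem not_hasAscSeq_three_of_strictAntiOn {f : Fin n → Fin n} {S : Set (Fin n)}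
    (hS : StrictAntiOn f S) (hSc : StrictAntiOn f Sᶜ) : ¬HasAscSeq f 3 := by
  rintro ⟨s, hs, hfs⟩
  -- the two ends of an ascent lie on different sides of `S`
  have hsplit (a b : Fin 3) (hab : a < b) : s a ∈ S ↔ s b ∉ S := by
    refine ⟨fun ha hb => (hS ha hb (hs hab)).asymm (hfs hab), fun hb => ?_⟩
    by_contra ha
    exact (hSc ha hb (hs hab)).asymm (hfs hab)
  have := hsplit 0 1 (by decide)
  have := hsplit 1 2 (by decide)
  have := hsplit 0 2 (by decide)
  tauto

def IsLeftToRightMin (σ : Equiv.Perm (Fin n)) (i : Fin n) : Prop :=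
  ∀ j < i, σ i < σ j

instance (σ : Equiv.Perm (Fin n)) : DecidablePred (IsLeftToRightMin σ) :=
  fun i => inferInstanceAs (Decidable (∀ j < i, σ i < σ j))

def leftToRightMins (σ : Equiv.Perm (Fin n)) : Finset (Fin n) := {i | IsLeftToRightMin σ i}

variable {σ : Equiv.Perm (Fin n)}

theorem exists_lt_of_not_isLeftToRightMin {i : Fin n} (hi : ¬IsLeftToRightMin σ i) :
    ∃ j < i, σ j < σ i := by
  simp only [IsLeftToRightMin, not_forall, not_lt] at hi
  obtain ⟨j, hji, hle⟩ := hi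
  exact ⟨j, hji, hle.lt_of_ne (σ.injective.ne hji.ne)⟩

theorem lt_of_not_isLeftToRightMin (hσ : ¬HasAscSeq σ 3) {i k : Fin n}
    (hi : ¬IsLeftToRightMin σ i) (hik : i < k) : σ k < σ i := by
  obtain ⟨j, hji, hj⟩ := exists_lt_of_not_isLeftToRightMin hi
  refine lt_of_not_ge fun hle => hσ (hasAscSeq_three_of_lt hji hik hj ?_)
  exact hle.lt_of_ne (σ.injective.ne hik.ne)

theorem IsLeftToRightMin.le_rev {q : Fin n} (hq : IsLeftToRightMin σ q) : σ q ≤ q.rev := by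
  have hsub : (Iic q).map σ.toEmbedding ⊆ Ici (σ q) := by
    intro y hy
    obtain ⟨x, hx, rfl⟩ := mem_map.1 hy
    rcases (mem_Iic.1 hx).lt_or_eq with hlt | rfl
    · exact mem_Ici.2 (hq x hlt).le
    · exact mem_Ici.2 le_rfl
  have := card_le_card hsub
  rw [card_map, Fin.card_Iic, Fin.card_Ici] at this
  rw [Fin.le_def, Fin.val_rev]
  omega

theorem rev_lt_of_not_isLeftToRightMin (hσ : ¬HasAscSeq σ 3) {q : Fin n}
    (hq : ¬IsLeftToRightMin σ q) : q.rev < σ q := by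
  obtain ⟨j, hjq, hj⟩ := exists_lt_of_not_isLeftToRightMin hq
  have hsub : (cons j (Ioi q) (by simp [hjq.le])).map σ.toEmbedding ⊆ Iio (σ q) := by
    intro y hy
    obtain ⟨x, hx, rfl⟩ := mem_map.1 hy
    rcases mem_cons.1 hx with rfl | hx
    · exact mem_Iio.2 hj
    · exact mem_Iio.2 (lt_of_not_isLeftToRightMin hσ hq (mem_Ioi.1 hx))
  have := card_le_card hsub
  rw [card_map, card_cons, Fin.card_Ioi, Fin.card_Iio] at this
  rw [Fin.lt_def, Fin.val_rev]
  omega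

theorem isLeftToRightMin_iff_le_rev (hσ : ¬HasAscSeq σ 3) (q : Fin n) :
    IsLeftToRightMin σ q ↔ σ q ≤ q.rev :=
  ⟨IsLeftToRightMin.le_rev, fun h =>
    by_contra fun hq => (rev_lt_of_not_isLeftToRightMin hσ hq).not_ge h⟩

end LeftToRightMin

section AntitoneSplit

variable {α : Type*} [LinearOrder α] {σ τ : Equiv.Perm α} {P V : Finset α}

structure IsAntitoneSplit (σ : Equiv.Perm α) (P V : Finset α) : Prop where
  mem_iff : ∀ x, σ x ∈ V ↔ x ∈ P
  strictAntiOn : StrictAntiOn σ P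
  strictAntiOn_compl : StrictAntiOn σ (↑P)ᶜ

namespace IsAntitoneSplit

theorem compl [Fintype α] (h : IsAntitoneSplit σ P V) : IsAntitoneSplit σ Pᶜ Vᶜ where
  mem_iff x := by simp [h.mem_iff]
  strictAntiOn := by simpa using h.strictAntiOn_compl
  strictAntiOn_compl := by simpa using h.strictAntiOn

theorem map_eq (h : IsAntitoneSplit σ P V) : P.map σ.toEmbedding = V := by
  ext v
  rw [mem_map_equiv, ← h.mem_iff, σ.apply_symm_apply]

variable [LocallyFiniteOrderTop α] [LocallyFiniteOrderBot α]

theorem card_Ioi_inter (h : IsAntitoneSplit σ P V) {x : α} (hx : x ∈ P) :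
    #(Ioi (σ x) ∩ V) = #(Iio x ∩ P) := by
  rw [← card_map σ.toEmbedding (s := Iio x ∩ P)]
  congr 1
  ext y
  obtain ⟨z, rfl⟩ := σ.surjective y
  simp only [mem_inter, mem_Ioi, mem_Iio, mem_map_equiv, Equiv.symm_apply_apply, h.mem_iff]
  exact ⟨fun ⟨hlt, hz⟩ => ⟨(h.strictAntiOn.lt_iff_gt hx hz).1 hlt, hz⟩,
    fun ⟨hlt, hz⟩ => ⟨(h.strictAntiOn.lt_iff_gt hx hz).2 hlt, hz⟩⟩

theorem apply_eq_of_mem (hσ : IsAntitoneSplit σ P V) (hτ : IsAntitoneSplit τ P V) {x : α}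
    (hx : x ∈ P) : σ x = τ x := by
  have hrank : #(Ioi (σ x) ∩ V) = #(Ioi (τ x) ∩ V) := by
    rw [hσ.card_Ioi_inter hx, hτ.card_Ioi_inter hx]
  have hστ := card_Ioi_inter_lt_card_Ioi_inter_iff (r := τ x) ((hσ.mem_iff x).2 hx)
  have hτσ := card_Ioi_inter_lt_card_Ioi_inter_iff (r := σ x) ((hτ.mem_iff x).2 hx)
  exact le_antisymm (not_lt.1 fun h => (hστ.2 h).ne hrank)
    (not_lt.1 fun h => (hτσ.2 h).ne hrank.symm)

theorem eq [Fintype α] (hσ : IsAntitoneSplit σ P V) (hτ : IsAntitoneSplit τ P V) : σ = τ :=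
  Equiv.ext fun x =>
    if hx : x ∈ P then hσ.apply_eq_of_mem hτ hx
    else hσ.compl.apply_eq_of_mem hτ.compl (mem_compl.2 hx)

end IsAntitoneSplit

theorem isAntitoneSplit_subtypeCongr (e₁ : {x // x ∈ P} ≃o {x // x ∈ V}ᵒᵈ)
    (e₂ : {x // x ∉ P} ≃o {x // x ∉ V}ᵒᵈ) :
    IsAntitoneSplit (Equiv.subtypeCongr (e₁.toEquiv.trans OrderDual.ofDual)
      (e₂.toEquiv.trans OrderDual.ofDual)) P V where
  mem_iff x := by
    by_cases hx : x ∈ P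
    · rw [Equiv.subtypeCongr_apply_of_pos _ _ hx]
      exact iff_of_true (Subtype.prop _) hx
    · rw [Equiv.subtypeCongr_apply_of_neg _ _ hx]
      exact iff_of_false ((e₂.toEquiv.trans OrderDual.ofDual) ⟨x, hx⟩).2 hx
  strictAntiOn x hx y hy hxy := by
    rw [Equiv.subtypeCongr_apply_of_pos _ _ hx, Equiv.subtypeCongr_apply_of_pos _ _ hy]
    exact Subtype.coe_lt_coe.2 (e₁.strictMono (Subtype.mk_lt_mk.2 hxy))
  strictAntiOn_compl x hx y hy hxy := by
    rw [Equiv.subtypeCongr_apply_of_neg _ _ hx, Equiv.subtypeCongr_apply_of_neg _ _ hy]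
    exact Subtype.coe_lt_coe.2 (e₂.strictMono (Subtype.mk_lt_mk.2 hxy))

variable [Fintype α]

def antitoneSplitPerm (P V : Finset α) (h : #P = #V) : Equiv.Perm α :=
  Equiv.subtypeCongr
    ((orderIsoDualOfCardEq {x // x ∈ P} {x // x ∈ V} (by simpa using h)).toEquiv.trans
      OrderDual.ofDual)
    ((orderIsoDualOfCardEq {x // x ∉ P} {x // x ∉ V}
      (by simp [Fintype.card_subtype_compl, h])).toEquiv.trans OrderDual.ofDual)

theorem isAntitoneSplit_antitoneSplitPerm (h : #P = #V) :
    IsAntitoneSplit (antitoneSplitPerm P V h) P V :=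
  isAntitoneSplit_subtypeCongr _ _

end AntitoneSplit

section Avoiders

variable {n : ℕ} {σ : Equiv.Perm (Fin n)} {P V : Finset (Fin n)}

theorem IsAntitoneSplit.not_hasAscSeq (h : IsAntitoneSplit σ P V) : ¬HasAscSeq σ 3 :=
  not_hasAscSeq_three_of_strictAntiOn h.strictAntiOn h.strictAntiOn_compl

theorem isAntitoneSplit_leftToRightMins (hσ : ¬HasAscSeq σ 3) :
    IsAntitoneSplit σ (leftToRightMins σ) ((leftToRightMins σ).map σ.toEmbedding) where
  mem_iff x := by rw [mem_map_equiv, Equiv.symm_apply_apply]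
  strictAntiOn x _ y hy hxy := by
    simp only [leftToRightMins, coe_filter, mem_univ, true_and, Set.mem_ofPred_eq] at hy
    exact hy x hxy
  strictAntiOn_compl x hx _ _ hxy := by
    simp only [leftToRightMins, coe_filter, mem_univ, true_and, Set.mem_compl_iff,
      Set.mem_ofPred_eq] at hx
    exact lt_of_not_isLeftToRightMin hσ hx hxy

theorem IsAntitoneSplit.card_Iic_sdiff_add_card_Ioi_inter_le_iff (h : IsAntitoneSplit σ P V)
    (q : Fin n) : #(Iic q \ P) + #(Ioi q.rev ∩ V) ≤ q ↔ (q ∈ P ↔ σ q ≤ q.rev) := by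
  have hV : #(Ioi q.rev ∩ V) + #(Ioi q.rev \ V) = q := by
    rw [card_inter_add_card_sdiff, Fin.card_Ioi, Fin.val_rev]
    omega
  by_cases hq : q ∈ P
  · have hP : #(Iio q ∩ P) + #(Iio q \ P) = q := by
      rw [card_inter_add_card_sdiff, Fin.card_Iio]
    have hrank := h.card_Ioi_inter hq
    have hlt := card_Ioi_inter_lt_card_Ioi_inter_iff (r := q.rev) ((h.mem_iff q).2 hq)
    rw [← Iio_insert, insert_sdiff_of_mem _ hq]
    simp only [hq, true_iff, ← not_lt, ← hlt]
    omega
  · have hrank := h.compl.card_Ioi_inter (mem_compl.2 hq)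
    have hlt := card_Ioi_inter_lt_card_Ioi_inter_iff (r := q.rev)
      ((h.compl.mem_iff q).2 (mem_compl.2 hq))
    rw [← sdiff_eq_inter_compl, ← sdiff_eq_inter_compl] at hrank hlt
    rw [← Iio_insert, insert_sdiff_of_notMem _ hq, card_insert_of_notMem (by simp)]
    simp only [hq, false_iff, not_le, ← hlt]
    omega

theorem IsAntitoneSplit.isDyckPair_iff (h : IsAntitoneSplit σ P V) :
    IsDyckPair P V ↔ leftToRightMins σ = P := by
  have hcard : #P = #V := by rw [← h.map_eq, card_map]
  simp only [IsDyckPair, hcard, true_and, h.card_Iic_sdiff_add_card_Ioi_inter_le_iff,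
    Finset.ext_iff, leftToRightMins, mem_filter, mem_univ,
    isLeftToRightMin_iff_le_rev h.not_hasAscSeq]
  exact ⟨fun H q => (H q).symm, fun H q => (H q).symm⟩

end Avoiders

def avoidersEquivDyckPairs (n : ℕ) :
    {σ : Equiv.Perm (Fin n) // ¬HasAscSeq σ 3} ≃
      {x : Finset (Fin n) × Finset (Fin n) // IsDyckPair x.1 x.2} where
  toFun σ := ⟨(leftToRightMins σ.1, (leftToRightMins σ.1).map σ.1.toEmbedding),
    (isAntitoneSplit_leftToRightMins σ.2).isDyckPair_iff.2 rfl⟩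
  invFun x := ⟨antitoneSplitPerm x.1.1 x.1.2 x.2.1,
    (isAntitoneSplit_antitoneSplitPerm x.2.1).not_hasAscSeq⟩
  left_inv σ := by
    apply Subtype.ext
    exact (isAntitoneSplit_antitoneSplitPerm (card_map _).symm).eq
      (isAntitoneSplit_leftToRightMins σ.2)
  right_inv x := by
    have h := isAntitoneSplit_antitoneSplitPerm x.2.1
    have hP := h.isDyckPair_iff.1 x.2
    refine Subtype.ext (Prod.ext hP ?_)
    simp only [hP, h.map_eq]

theorem permCount_two_eq_catalan_nat (n : ℕ) : permCount 2 n = catalan n :=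
  (Nat.card_congr ((avoidersEquivDyckPairs n).trans (dyckPairEquiv n))).trans <| by
    rw [Nat.card_eq_fintype_card, DyckWord.card_dyckWord_semilength_eq_catalan]

/-- The number of permutations of `{1,…,n}` with no ascending subsequence of
length `3` is the `n`-th Catalan number `C(2n,n)/(n+1)`. -/
theorem permCount_two_eq_catalan (n : ℕ) :
    (permCount 2 n : ℚ) = (Nat.choose (2 * n) n : ℚ) / ((n : ℚ) + 1) := by
  rw [permCount_two_eq_catalan_nat, eq_div_iff (by positivity),
    ← Nat.centralBinom_eq_two_mul_choose, ← succ_mul_catalan_eq_centralBinom]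
  push_cast
  ring
end
end

section
/- (Functional equation for 123-avoiding permutations with the first-ascent statistic.) For a permutation τ of {1,…,n} with no ascending subsequence of length 3, let a(τ) = n+1 if τ has no ascent, and otherwise a(τ) = min{ i : τ(i−1) < τ(i) }. For n ≥ 0, define F_n(u) = ∑_{τ ∈ S_n^{(2)}} u^{a(τ)−1} ∈ ℤ[u]. Then F_0 = 1, and for every n ≥ 0 the following polynomial identity holds in ℤ[u]: (u − 1)·F_{n+1}(u) = u^2·F_n(u) − u·F_n(1). -/
open scoped Classical

noncomputable section

/-- The (1-based) position of the first ascent of `f`: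
`a(f) = min{ i : f(i−1) < f(i) }`, or `n+1` if there is no ascent. -/
def aFirst {n : ℕ} (f : Fin n → Fin n) : ℕ :=
  sInf ({n + 1} ∪ { i : ℕ | ∃ p : Fin n, 1 ≤ (p : ℕ) ∧
    f ⟨(p : ℕ) - 1, by have := p.isLt; omega⟩ < f p ∧ i = (p : ℕ) + 1 })

/-- `F_n(u) = ∑_{τ∈S_n^{(2)}} u^{a(τ)−1} ∈ ℤ[u]`. -/
def F2poly (n : ℕ) : Polynomial ℤ :=
  ∑ τ ∈ Finset.univ.filter (fun τ : Equiv.Perm (Fin n) => ¬ HasAscSeq (⇑τ) 3),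
    Polynomial.X ^ (aFirst (⇑τ) - 1)

/-!
Deleting the largest entry of a 123-avoiding permutation of `{1, …, n+1}` leaves a 123-avoiding
permutation `σ` of `{1, …, n}`; conversely the largest entry can be inserted into `σ` at
position `p` (with `p` entries in front of it) without creating a 123 exactly when those `p`
entries decrease, i.e. when `p < a(σ)`. Inserting at the front raises the first ascent to
`a(σ) + 1`; inserting at `p ≥ 1` makes `p + 1` the first ascent. Hence
`F_{n+1}(u) = ∑_σ (u^{a(σ)} + u + ⋯ + u^{a(σ)-1})`, and multiplying each summand by `u - 1`
gives `u^{a(σ)+1} - u`.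
-/

open Equiv Polynomial

lemma hasAscSeq_three_iff {m : ℕ} (f : Fin m → Fin m) :
    HasAscSeq f 3 ↔ ∃ i j k : Fin m, i < j ∧ j < k ∧ f i < f j ∧ f j < f k := by
  constructor
  · rintro ⟨s, hs, hfs⟩
    exact ⟨s 0, s 1, s 2, hs (by decide), hs (by decide), hfs (by decide), hfs (by decide)⟩
  · rintro ⟨i, j, k, hij, hjk, hfij, hfjk⟩
    refine ⟨![i, j, k], ?_, ?_⟩ <;> rw [Fin.strictMono_iff_lt_succ] <;>
      simp [Fin.forall_fin_two, *]

section aFirst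

variable {m : ℕ} (f : Fin m → Fin m)

lemma lt_aFirst_iff (L : ℕ) : L < aFirst f ↔ L ≤ m ∧ AntitoneOn f {i | (i : ℕ) < L} := by
  rw [aFirst, Nat.lt_iff_add_one_le, le_csInf_iff'' ⟨m + 1, Or.inl rfl⟩]
  simp only [Set.mem_union, Set.mem_singleton_iff, Set.mem_ofPred_eq]
  constructor
  · intro h
    refine ⟨by simpa using h _ (Or.inl rfl), antitoneOn_of_succ_le ?_ ?_⟩
    · exact ⟨fun a _ b hb c hc => lt_of_le_of_lt (Fin.le_def.mp hc.2) hb⟩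
    · intro a ha _ hs
      have hcov := Fin.covBy_iff.mp (Order.covBy_succ_of_not_isMax ha)
      rw [Nat.covBy_iff_add_one_eq] at hcov
      refine not_lt.mp fun hlt => ?_
      have := h _ (Or.inr ⟨Order.succ a, by omega, ?_, rfl⟩)
      · simp only [Set.mem_ofPred_eq] at hs; omega
      · exact (congrArg f (Fin.ext (by simp; omega))).trans_lt hlt
  · rintro ⟨hL, hanti⟩ b (rfl | ⟨p, hp, hasc, rfl⟩)
    · omega
    · by_contra! hpL
      exact (hanti (by simp; omega) (by simpa using hpL) (Fin.le_def.mpr (by simp))).not_gt hasc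

lemma aFirst_pos : 0 < aFirst f :=
  (lt_aFirst_iff f 0).mpr ⟨m.zero_le, by simp [AntitoneOn]⟩

lemma aFirst_le : aFirst f ≤ m + 1 :=
  not_lt.mp fun h => by have := ((lt_aFirst_iff f _).mp h).1; omega

end aFirst

/-- The permutation with the value `n` at position `p` and the pattern `σ` elsewhere. -/
def insertMax {n : ℕ} (p : Fin (n + 1)) (σ : Perm (Fin n)) : Perm (Fin (n + 1)) :=
  (finSuccEquiv' p).trans (σ.optionCongr.trans finSuccEquivLast.symm)

section insertMax

variable {n : ℕ} (p : Fin (n + 1)) (σ : Perm (Fin n))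

@[simp]
lemma insertMax_apply_self : insertMax p σ p = Fin.last n := by
  simp [insertMax, finSuccEquivLast]

@[simp]
lemma insertMax_apply_succAbove (j : Fin n) :
    insertMax p σ (p.succAbove j) = (σ j).castSucc := by
  simp [insertMax, finSuccEquivLast]

@[simp]
lemma insertMax_zero_apply_succ (j : Fin n) : insertMax 0 σ j.succ = (σ j).castSucc := by
  rw [← Fin.succAbove_zero, insertMax_apply_succAbove]

lemma insertMax_apply_castSucc_of_lt {i : Fin n} (hi : (i : ℕ) < p) :
    insertMax p σ i.castSucc = (σ i).castSucc := by
  rw [← Fin.succAbove_of_castSucc_lt p i (Fin.lt_def.mpr hi), insertMax_apply_succAbove]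

lemma insertMax_injective :
    Function.Injective fun x : Fin (n + 1) × Perm (Fin n) => insertMax x.1 x.2 := by
  rintro ⟨p, σ⟩ ⟨p', σ'⟩ h
  simp only at h
  have hp : p = p' := by
    apply (insertMax p σ).injective
    rw [insertMax_apply_self, h, insertMax_apply_self]
  subst hp
  refine Prod.ext rfl (Equiv.ext fun j => Fin.castSucc_injective n ?_)
  rw [← insertMax_apply_succAbove, h, insertMax_apply_succAbove]

lemma insertMax_bijective :
    Function.Bijective fun x : Fin (n + 1) × Perm (Fin n) => insertMax x.1 x.2 :=
  (Fintype.bijective_iff_injective_and_card _).mpr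
    ⟨insertMax_injective, by simp [Fintype.card_perm, Nat.factorial_succ]⟩

lemma hasAscSeq_three_insertMax_iff :
    HasAscSeq (insertMax p σ) 3 ↔ HasAscSeq σ 3 ∨ aFirst σ ≤ p := by
  simp only [hasAscSeq_three_iff]
  constructor
  · rintro ⟨i, j, k, hij, hjk, hfij, hfjk⟩
    have hne : ∀ x y, insertMax p σ x < insertMax p σ y → x ≠ p := by
      intro x y hxy hx
      rw [hx, insertMax_apply_self] at hxy
      exact (Fin.le_last _).not_gt hxy
    obtain ⟨i, rfl⟩ := Fin.exists_succAbove_eq (hne _ _ hfij)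
    obtain ⟨j, rfl⟩ := Fin.exists_succAbove_eq (hne _ _ hfjk)
    rw [Fin.succAbove_lt_succAbove_iff] at hij
    rw [insertMax_apply_succAbove, insertMax_apply_succAbove,
      Fin.castSucc_lt_castSucc_iff] at hfij
    by_cases hk : k = p
    · subst hk
      right
      by_contra! hp
      rw [Fin.succAbove_lt_iff_castSucc_lt, Fin.lt_def, Fin.val_castSucc] at hjk
      exact hfij.not_ge (((lt_aFirst_iff σ k).mp hp).2 (by simp; omega) hjk hij.le)
    · obtain ⟨k, rfl⟩ := Fin.exists_succAbove_eq hk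
      rw [Fin.succAbove_lt_succAbove_iff] at hjk
      rw [insertMax_apply_succAbove, insertMax_apply_succAbove,
        Fin.castSucc_lt_castSucc_iff] at hfjk
      exact Or.inl ⟨i, j, k, hij, hjk, hfij, hfjk⟩
  · rintro (⟨i, j, k, hij, hjk, hfij, hfjk⟩ | hp)
    · exact ⟨p.succAbove i, p.succAbove j, p.succAbove k,
        by simpa, by simpa, by simpa, by simpa⟩
    · have hanti : ¬ AntitoneOn σ {i | (i : ℕ) < p} := fun h =>
        hp.not_gt ((lt_aFirst_iff σ p).mpr ⟨by omega, h⟩)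
      simp only [AntitoneOn, not_forall, not_le, Set.mem_ofPred_eq] at hanti
      obtain ⟨i, hi, j, hj, hij, hσ⟩ := hanti
      refine ⟨i.castSucc, j.castSucc, p, ?_, Fin.lt_def.mpr hj, ?_, ?_⟩
      · exact Fin.castSucc_lt_castSucc_iff.mpr (hij.lt_of_ne (by rintro rfl; exact hσ.false))
      · rwa [insertMax_apply_castSucc_of_lt p σ hi, insertMax_apply_castSucc_of_lt p σ hj,
          Fin.castSucc_lt_castSucc_iff]
      · rw [insertMax_apply_castSucc_of_lt p σ hj, insertMax_apply_self]
        exact Fin.castSucc_lt_last _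

lemma aFirst_insertMax_zero : aFirst (insertMax 0 σ) = aFirst σ + 1 := by
  refine eq_of_forall_lt_iff fun L => ?_
  cases L with
  | zero => simp [lt_aFirst_iff, AntitoneOn]
  | succ L =>
    rw [Nat.add_lt_add_iff_right, lt_aFirst_iff, lt_aFirst_iff]
    simp [AntitoneOn, Fin.forall_fin_succ, Fin.le_last]

lemma aFirst_insertMax_of_ne_zero (hp0 : p ≠ 0) (hp : (p : ℕ) < aFirst σ) :
    aFirst (insertMax p σ) = p + 1 := by
  refine le_antisymm (not_lt.mp fun h => ?_) ?_
  · obtain ⟨q, rfl⟩ := Fin.exists_succ_eq.mpr hp0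
    have hdesc := ((lt_aFirst_iff _ _).mp h).2 (by simp) (by simp) (Fin.castSucc_le_succ q)
    rw [insertMax_apply_self, insertMax_apply_castSucc_of_lt _ _ (by simp)] at hdesc
    exact hdesc.not_gt (Fin.castSucc_lt_last _)
  · obtain ⟨-, hanti⟩ := (lt_aFirst_iff σ p).mp hp
    refine Nat.add_one_le_iff.mpr
      ((lt_aFirst_iff _ _).mpr ⟨p.is_le.trans n.le_succ, fun a ha b hb hab => ?_⟩)
    simp only [Set.mem_ofPred_eq] at ha hb
    obtain ⟨a, rfl⟩ : ∃ a' : Fin n, a'.castSucc = a := ⟨⟨a, by omega⟩, rfl⟩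
    obtain ⟨b, rfl⟩ : ∃ b' : Fin n, b'.castSucc = b := ⟨⟨b, by omega⟩, rfl⟩
    rw [insertMax_apply_castSucc_of_lt _ _ hb, insertMax_apply_castSucc_of_lt _ _ ha,
      Fin.castSucc_le_castSucc_iff]
    exact hanti ha hb hab

end insertMax

lemma sub_one_mul_sum_range_pow_ite {R : Type*} [CommRing R] (x : R) {a : ℕ} (ha : 0 < a) :
    (x - 1) * ∑ p ∈ Finset.range a, x ^ (if p = 0 then a else p) = x ^ 2 * x ^ (a - 1) - x := by
  obtain ⟨k, rfl⟩ := Nat.exists_eq_add_of_lt ha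
  simp only [Finset.sum_range_succ', if_true, Nat.add_one_ne_zero, if_false, pow_succ,
    ← Finset.sum_mul, zero_add, Nat.add_sub_cancel]
  linear_combination x * geom_sum_mul x k

lemma F2poly_zero : F2poly 0 = 1 := by
  have havoid (τ : Perm (Fin 0)) : ¬ HasAscSeq τ 3 := fun ⟨s, _⟩ => (s 0).elim0
  have haFirst (f : Fin 0 → Fin 0) : aFirst f = 1 := le_antisymm (aFirst_le f) (aFirst_pos f)
  simp [F2poly, havoid, haFirst]

lemma F2poly_succ (n : ℕ) :
    F2poly (n + 1) = ∑ σ ∈ Finset.univ.filter (fun σ : Perm (Fin n) => ¬ HasAscSeq σ 3),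
      ∑ p ∈ Finset.range (aFirst σ), (X : ℤ[X]) ^ (if p = 0 then aFirst σ else p) := by
  rw [F2poly, Finset.sum_filter, Finset.sum_filter,
    ← Fintype.sum_bijective _ insertMax_bijective _ _ fun _ => rfl, Fintype.sum_prod_type_right]
  refine Fintype.sum_congr _ _ fun σ => ?_
  simp only [hasAscSeq_three_insertMax_iff, not_or, not_le]
  split_ifs with hσ
  · simp [hσ]
  have hexp (p : Fin (n + 1)) (hp : (p : ℕ) < aFirst σ) :
      aFirst (insertMax p σ) - 1 = if (p : ℕ) = 0 then aFirst σ else p := by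
    split_ifs with h0
    · obtain rfl : p = 0 := Fin.ext h0
      rw [aFirst_insertMax_zero, Nat.add_sub_cancel]
    · rw [aFirst_insertMax_of_ne_zero p σ (fun h => h0 (by simp [h])) hp, Nat.add_sub_cancel]
  have hrange : (Finset.range (n + 1)).filter (· < aFirst σ) = Finset.range (aFirst σ) := by
    ext; simp only [Finset.mem_filter, Finset.mem_range]; have := aFirst_le σ; omega
  simp only [hσ, not_false_eq_true, true_and]
  rw [Finset.sum_congr rfl fun p _ => ite_congr rfl (fun hp => by rw [hexp p hp]) fun _ => rfl,
    Fin.sum_univ_eq_sum_range (fun i => if i < aFirst σ then X ^ (if i = 0 then aFirst σ else i)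
      else (0 : ℤ[X])), ← Finset.sum_filter, hrange]

lemma F2poly_eval_one (n : ℕ) :
    (F2poly n).eval 1 = (Finset.univ.filter fun σ : Perm (Fin n) => ¬ HasAscSeq σ 3).card := by
  simp [F2poly, eval_finsetSum]

/-- The functional equation for 123-avoiding permutations with the first-ascent
statistic: `F_0 = 1` and `(u−1)·F_{n+1}(u) = u²·F_n(u) − u·F_n(1)` in `ℤ[u]`. -/
theorem functional_equation_123 :
    F2poly 0 = 1 ∧
    ∀ n : ℕ,
      (Polynomial.X - 1) * F2poly (n + 1)
        = Polynomial.X ^ 2 * F2poly n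
          - Polynomial.C ((F2poly n).eval 1) * Polynomial.X := by
  refine ⟨F2poly_zero, fun n => ?_⟩
  rw [F2poly_succ, Finset.mul_sum,
    Finset.sum_congr rfl fun (σ : Perm (Fin n)) _ =>
      sub_one_mul_sum_range_pow_ite X (aFirst_pos σ),
    Finset.sum_sub_distrib, ← Finset.mul_sum, Finset.sum_const, F2poly_eval_one, F2poly]
  simp [nsmul_eq_mul]
end
end
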